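/- arXiv:math/0606610 — 14 statements merged into one kernel-verified Lean document; each statement's English description precedes it below -/
import Mathlib

section
/- Let f be any function from the integers to an additive commutative group. Then ∑_{n ∈ NR} [f(n+a) − f(n)] = ∑_{n ∈ N} f(n) − ∑_{n=1}^{a−1} f(n). -/
/-!
Let `S` be the additive monoid of representable integers and `A ∈ S`. A positive integer lies in
`NR ∪ N` exactly when it is not of the form `s + A` with `s ∈ S`: a gap `n ∉ S` is never of that
form because `S + A ⊆ S`. The positive integers of this kind are `1, …, A - 1` together with the
shifted gaps `n + A`, `n ∈ NR`. Both descriptions are disjoint unions, so summing `f` over them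
gives `∑_{NR} f + ∑_N f = ∑_{NR} f(· + A) + ∑_{n=1}^{A-1} f(n)`.
-/

open Finset

theorem AddSubmonoid.mem_closure_range_iff_exists_sum_mul {ι : Type*} [Fintype ι] (a : ι → ℕ)
    (n : ℕ) : n ∈ closure (Set.range a) ↔ ∃ x : ι → ℕ, n = ∑ i, a i * x i := by
  simp only [mem_closure_range_iff_of_fintype, smul_eq_mul, mul_comm]

theorem Int.exists_natCast_sub_eq_sum_mul_iff {ι : Type*} [Fintype ι] (a : ι → ℕ) (n m : ℕ) :
    (∃ x : ι → ℕ, (n : ℤ) - m = ∑ i, (a i : ℤ) * x i) ↔ ∃ x : ι → ℕ, ∑ i, a i * x i + m = n := by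
  refine exists_congr fun x => ?_
  rw [sub_eq_iff_eq_add, eq_comm]
  norm_cast

namespace AddSubmonoid

variable (S : AddSubmonoid ℕ) {A : ℕ} {NR N : Finset ℕ}

theorem mem_gaps_union_iff (hA : A ∈ S) (hNR : ∀ n, n ∈ NR ↔ 0 < n ∧ n ∉ S)
    (hN : ∀ n, n ∈ N ↔ 0 < n ∧ n ∈ S ∧ ¬ ∃ s ∈ S, s + A = n) (m : ℕ) :
    m ∈ NR ∪ N ↔ 0 < m ∧ ¬ ∃ s ∈ S, s + A = m := by
  have hshift : (∃ s ∈ S, s + A = m) → m ∈ S := fun ⟨s, hs, hsm⟩ => hsm ▸ S.add_mem hs hA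
  rw [mem_union, hNR, hN]
  tauto

theorem mem_shifted_gaps_union_iff (hNR : ∀ n, n ∈ NR ↔ 0 < n ∧ n ∉ S) (m : ℕ) :
    m ∈ NR.image (· + A) ∪ Icc 1 (A - 1) ↔ 0 < m ∧ ¬ ∃ s ∈ S, s + A = m := by
  rcases lt_or_ge m A with hm | hm
  · have hsmall : ∀ n, n + A ≠ m := by omega
    simp only [mem_union, mem_image, mem_Icc, hsmall, and_false, exists_false, false_or,
      not_false_eq_true, and_true]
    omega
  · obtain ⟨d, rfl⟩ := Nat.exists_eq_add_of_le' hm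
    have hbig : ¬ (1 ≤ d + A ∧ d + A ≤ A - 1) := by omega
    simp only [mem_union, mem_image, mem_Icc, hNR, add_left_inj, exists_eq_right, hbig, or_false]
    rcases Nat.eq_zero_or_pos d with rfl | hd
    · simp [S.zero_mem]
    · simp [hd]

theorem sum_gaps_add_sub_eq (hA : A ∈ S) (hNR : ∀ n, n ∈ NR ↔ 0 < n ∧ n ∉ S)
    (hN : ∀ n, n ∈ N ↔ 0 < n ∧ n ∈ S ∧ ¬ ∃ s ∈ S, s + A = n) {G : Type*} [AddCommGroup G]
    (f : ℕ → G) :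
    ∑ n ∈ NR, (f (n + A) - f n) = ∑ n ∈ N, f n - ∑ n ∈ Icc 1 (A - 1), f n := by
  have hunion : NR ∪ N = NR.image (· + A) ∪ Icc 1 (A - 1) := by
    ext m
    rw [S.mem_gaps_union_iff hA hNR hN, S.mem_shifted_gaps_union_iff hNR]
  have hdisj : Disjoint NR N :=
    disjoint_left.2 fun n hn hn' => ((hNR n).1 hn).2 ((hN n).1 hn').2.1
  have hdisj' : Disjoint (NR.image (· + A)) (Icc 1 (A - 1)) := by
    refine disjoint_left.2 fun m hm hm' => ?_
    obtain ⟨n, hn, rfl⟩ := mem_image.1 hm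
    have := ((hNR n).1 hn).1
    rw [mem_Icc] at hm'
    omega
  have hsum := congrArg (∑ m ∈ ·, f m) hunion
  simp only [sum_union hdisj, sum_union hdisj',
    sum_image fun _ _ _ _ h => Nat.add_right_cancel h] at hsum
  rw [sum_sub_distrib, sub_eq_sub_iff_add_eq_add, ← hsum, add_comm]

end AddSubmonoid

theorem frobenius_characterization_general {G : Type*} [AddCommGroup G]
    (k : ℕ) (a : Fin k → ℕ)
    (A : ℕ) (hAmem : ∃ i, a i = A)
    (NR N : Finset ℕ)
    (hNR : ∀ n : ℕ, n ∈ NR ↔ 0 < n ∧ ¬ ∃ x : Fin k → ℕ, n = ∑ i, a i * x i)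
    (hN : ∀ n : ℕ, n ∈ N ↔ 0 < n ∧ (∃ x : Fin k → ℕ, n = ∑ i, a i * x i) ∧
      ¬ ∃ x : Fin k → ℕ, (n : ℤ) - (A : ℤ) = ∑ i, (a i : ℤ) * (x i : ℤ))
    (f : ℤ → G) :
    ∑ n ∈ NR, (f ((n : ℤ) + (A : ℤ)) - f (n : ℤ)) =
      ∑ n ∈ N, f (n : ℤ) - ∑ n ∈ Finset.Icc 1 (A - 1), f (n : ℤ) := by
  set S := AddSubmonoid.closure (Set.range a)
  have hrep : ∀ n, n ∈ S ↔ ∃ x : Fin k → ℕ, n = ∑ i, a i * x i :=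
    AddSubmonoid.mem_closure_range_iff_exists_sum_mul a
  have hA : A ∈ S := hAmem.elim fun i hi => hi ▸ AddSubmonoid.subset_closure (Set.mem_range_self i)
  have hNR' : ∀ n, n ∈ NR ↔ 0 < n ∧ n ∉ S := fun n => by rw [hNR, hrep]
  have hN' : ∀ n, n ∈ N ↔ 0 < n ∧ n ∈ S ∧ ¬ ∃ s ∈ S, s + A = n := fun n => by
    rw [hN, hrep, Int.exists_natCast_sub_eq_sum_mul_iff]
    simp [hrep]
  simpa using S.sum_gaps_add_sub_eq hA hNR' hN' (fun n => f n)

/-- Theorem 1 of the paper: for any function `f` into an additive commutative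
group, `∑_{n ∈ NR} [f(n+a) − f(n)] = ∑_{n ∈ N} f(n) − ∑_{n=1}^{a−1} f(n)`. -/
theorem frobenius_characterization {G : Type*} [AddCommGroup G]
    (k : ℕ) (a : Fin k → ℕ) (ha : ∀ i, 0 < a i)
    (hgcd : Finset.univ.gcd a = 1)
    (A : ℕ) (hA : 2 ≤ A) (hAmem : ∃ i, a i = A)
    (NR N : Finset ℕ)
    (hNR : ∀ n : ℕ, n ∈ NR ↔ 0 < n ∧ ¬ ∃ x : Fin k → ℕ, n = ∑ i, a i * x i)
    (hN : ∀ n : ℕ, n ∈ N ↔ 0 < n ∧ (∃ x : Fin k → ℕ, n = ∑ i, a i * x i) ∧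
      ¬ ∃ x : Fin k → ℕ, (n : ℤ) - (A : ℤ) = ∑ i, (a i : ℤ) * (x i : ℤ))
    (f : ℤ → G) :
    ∑ n ∈ NR, (f ((n : ℤ) + (A : ℤ)) - f (n : ℤ)) =
      ∑ n ∈ N, f (n : ℤ) - ∑ n ∈ Finset.Icc 1 (A - 1), f (n : ℤ) :=
  frobenius_characterization_general k a A hAmem NR N hNR hN f
end

section
/- The set N is a complete positive residue system modulo a with the residue 0 excluded; in particular, |N| = a − 1, and no two distinct elements of N are congruent modulo a. -/
lemma bezout_finset {ι : Type*} [DecidableEq ι] (s : Finset ι) (f : ι → ℕ) :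
    ∃ y : ι → ℤ, ((s.gcd f : ℕ) : ℤ) = ∑ i ∈ s, (f i : ℤ) * y i := by
  induction s using Finset.induction_on with
  | empty => exact ⟨0, by simp⟩
  | @insert i s hi ih =>
    obtain ⟨y, hy⟩ := ih
    refine ⟨fun j => if j = i then Nat.gcdA (f i) (s.gcd f)
      else Nat.gcdB (f i) (s.gcd f) * y j, ?_⟩
    rw [Finset.sum_insert hi]
    have h1 : (((insert i s).gcd f : ℕ) : ℤ) = (Nat.gcd (f i) (s.gcd f) : ℤ) := by
      rw [Finset.gcd_insert]; rfl
    rw [h1, Nat.gcd_eq_gcd_ab]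
    simp only [eq_self_iff_true, if_true]
    have h3 : ∑ j ∈ s, (f j : ℤ) * (if j = i then Nat.gcdA (f i) (s.gcd f)
        else Nat.gcdB (f i) (s.gcd f) * y j)
        = Nat.gcdB (f i) (s.gcd f) * ∑ j ∈ s, (f j : ℤ) * y j := by
      rw [Finset.mul_sum]
      refine Finset.sum_congr rfl fun j hj => ?_
      rw [if_neg (by rintro rfl; exact hi hj)]; ring
    rw [h3, ← hy]; ring

/-- The set `N` is a complete positive residue system modulo `a` with residue `0`
excluded: `|N| = a − 1`, no two distinct elements of `N` are congruent mod `a`,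
no element is divisible by `a`, and every nonzero residue mod `a` is attained. -/
theorem N_complete_positive_residue_system
    (k : ℕ) (a : Fin k → ℕ) (ha : ∀ i, 0 < a i)
    (hgcd : Finset.univ.gcd a = 1)
    (A : ℕ) (hA : 2 ≤ A) (hAmem : ∃ i, a i = A)
    (NR N : Finset ℕ)
    (hNR : ∀ n : ℕ, n ∈ NR ↔ 0 < n ∧ ¬ ∃ x : Fin k → ℕ, n = ∑ i, a i * x i)
    (hN : ∀ n : ℕ, n ∈ N ↔ 0 < n ∧ (∃ x : Fin k → ℕ, n = ∑ i, a i * x i) ∧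
      ¬ ∃ x : Fin k → ℕ, (n : ℤ) - (A : ℤ) = ∑ i, (a i : ℤ) * (x i : ℤ)) :
    N.card = A - 1 ∧
    (∀ m ∈ N, ∀ n ∈ N, m % A = n % A → m = n) ∧
    (∀ n ∈ N, n % A ≠ 0) ∧
    (∀ r : ℕ, 0 < r → r < A → ∃ n ∈ N, n % A = r) := by
  classical
  obtain ⟨i0, hi0⟩ := hAmem
  have hApos : 0 < A := by omega
  set S : ℕ → Prop := fun n => ∃ x : Fin k → ℕ, n = ∑ i, a i * x i with hSdef
  -- S closed under addition
  have hSadd : ∀ m n, S m → S n → S (m + n) := by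
    rintro m n ⟨x, hx⟩ ⟨y, hy⟩
    exact ⟨x + y, by simp [hx, hy, mul_add, Finset.sum_add_distrib]⟩
  -- multiples of A are in S
  have hSAmul : ∀ t : ℕ, S (A * t) := by
    intro t
    refine ⟨fun j => if j = i0 then t else 0, ?_⟩
    rw [Finset.sum_eq_single i0]
    · simp [hi0]
    · intro b _ hb; simp [hb]
    · simp
  -- rewrite membership in N
  have hN' : ∀ n : ℕ, n ∈ N ↔ 0 < n ∧ S n ∧ ¬ (A ≤ n ∧ S (n - A)) := by
    intro n
    rw [hN n]
    refine and_congr_right fun _ => and_congr_right fun _ => not_congr ?_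
    constructor
    · rintro ⟨x, hx⟩
      have hnonneg : (0 : ℤ) ≤ ∑ i, (a i : ℤ) * (x i : ℤ) :=
        Finset.sum_nonneg fun i _ => by positivity
      have hAn : A ≤ n := by omega
      refine ⟨hAn, x, ?_⟩
      have : ((n - A : ℕ) : ℤ) = ∑ i, (a i : ℤ) * (x i : ℤ) := by
        rw [Nat.cast_sub hAn]; exact hx
      exact_mod_cast this
    · rintro ⟨hAn, x, hx⟩
      refine ⟨x, ?_⟩
      rw [← Nat.cast_sub hAn]
      exact_mod_cast congrArg (fun m : ℕ => (m : ℤ)) hx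
  -- existence of a representable number in each residue class
  have hrep : ∀ r : ℕ, r < A → ∃ n : ℕ, S n ∧ n % A = r := by
    intro r hr
    obtain ⟨y, hy⟩ := bezout_finset Finset.univ a
    rw [hgcd] at hy
    set B : ℕ := Finset.univ.sup (fun i => (r * y i).natAbs) with hB
    have hxpos : ∀ i, (0 : ℤ) ≤ r * y i + A * B := by
      intro i
      have h1 : (r * y i).natAbs ≤ B :=
        Finset.le_sup (f := fun i => (r * y i).natAbs) (Finset.mem_univ i)
      have h2 : B ≤ A * B := Nat.le_mul_of_pos_left B hApos
      have h4 : ((r * y i).natAbs : ℤ) ≤ ((A * B : ℕ) : ℤ) := by exact_mod_cast h1.trans h2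
      push_cast at h4
      have h3 : -|(r : ℤ) * y i| ≤ (r : ℤ) * y i := neg_abs_le _
      linarith
    set x : Fin k → ℕ := fun i => (r * y i + A * B).toNat with hxdef
    have hxcast : ∀ i, ((x i : ℕ) : ℤ) = r * y i + A * B := fun i =>
      Int.toNat_of_nonneg (hxpos i)
    set n : ℕ := ∑ i, a i * x i with hn
    have hncast : (n : ℤ) = r + A * (B * ∑ i, (a i : ℤ)) := by
      push_cast [hn]
      calc ∑ i, (a i : ℤ) * (x i : ℤ)
          = ∑ i, ((a i : ℤ) * (r * y i) + (a i : ℤ) * (A * B)) := by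
            refine Finset.sum_congr rfl fun i _ => ?_
            rw [hxcast i]; ring
        _ = r * ∑ i, (a i : ℤ) * y i + A * (B * ∑ i, (a i : ℤ)) := by
            rw [Finset.sum_add_distrib, Finset.mul_sum, Finset.mul_sum, Finset.mul_sum]
            congr 1
            · refine Finset.sum_congr rfl fun i _ => by ring
            · refine Finset.sum_congr rfl fun i _ => by ring
        _ = r + A * (B * ∑ i, (a i : ℤ)) := by rw [← hy]; ring
    have hBsum : (0:ℤ) ≤ B * ∑ i, (a i : ℤ) := by positivity
    obtain ⟨m, hm⟩ : ∃ m : ℕ, (m : ℤ) = B * ∑ i, (a i : ℤ) :=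
      ⟨(B * ∑ i, (a i : ℤ)).toNat, Int.toNat_of_nonneg hBsum⟩
    have hneq : n = r + A * m := by
      have : (n : ℤ) = ((r + A * m : ℕ) : ℤ) := by push_cast [hm]; linarith [hncast]
      exact_mod_cast this
    exact ⟨n, ⟨x, rfl⟩, by rw [hneq]; simp [Nat.add_mul_mod_self_left, Nat.mod_eq_of_lt hr]⟩
  -- minimality: every element of N is the least representable in its class
  have keymin : ∀ n ∈ N, ∀ m, S m → m % A = n % A → n ≤ m := by
    intro n hnN m hSm hmn
    by_contra hlt
    push_neg at hlt
    have hd : A ∣ n - m := (Nat.modEq_iff_dvd' hlt.le).mp hmn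
    obtain ⟨t, ht⟩ := hd
    have htpos : 0 < t := by
      rcases Nat.eq_zero_or_pos t with rfl | h
      · simp at ht; omega
      · exact h
    have hAt : A * t = A * (t - 1) + A := by
      have h1 : t - 1 + 1 = t := Nat.succ_pred_eq_of_pos htpos
      calc A * t = A * (t - 1 + 1) := by rw [h1]
        _ = A * (t - 1) + A := by ring
    have hSnA : S (n - A) := by
      have : n - A = m + A * (t - 1) := by omega
      rw [this]
      exact hSadd _ _ hSm (hSAmul _)
    have hAn : A ≤ n := by omega
    rw [hN'] at hnN
    exact hnN.2.2 ⟨hAn, hSnA⟩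
  -- elements of N are not divisible by A
  have keyndvd : ∀ n ∈ N, n % A ≠ 0 := by
    intro n hnN h0
    rw [hN'] at hnN
    obtain ⟨hnpos, hSn, hnot⟩ := hnN
    obtain ⟨t, ht⟩ := Nat.dvd_of_mod_eq_zero h0
    have htpos : 0 < t := by
      rcases Nat.eq_zero_or_pos t with rfl | h
      · simp at ht; omega
      · exact h
    have hAt : A * t = A * (t - 1) + A := by
      have h1 : t - 1 + 1 = t := Nat.succ_pred_eq_of_pos htpos
      calc A * t = A * (t - 1 + 1) := by rw [h1]
        _ = A * (t - 1) + A := by ring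
    refine hnot ⟨by omega, ?_⟩
    have : n - A = A * (t - 1) := by omega
    rw [this]; exact hSAmul _
  -- every nonzero residue is attained
  have keysurj : ∀ r : ℕ, 0 < r → r < A → ∃ n ∈ N, n % A = r := by
    intro r hr0 hrA
    have hex : ∃ n : ℕ, S n ∧ n % A = r := hrep r hrA
    have hdec : DecidablePred fun n => S n ∧ n % A = r := Classical.decPred _
    obtain ⟨hSn, hnr⟩ := Nat.find_spec hex
    have hnpos : 0 < Nat.find hex := by
      rcases Nat.eq_zero_or_pos (Nat.find hex) with h | h
      · exfalso; rw [h] at hnr; simp at hnr; omega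
      · exact h
    refine ⟨Nat.find hex, ?_, hnr⟩
    rw [hN']
    refine ⟨hnpos, hSn, ?_⟩
    rintro ⟨hAn, hSnA⟩
    have hmod : (Nat.find hex - A) % A = r := by
      conv at hnr => rw [show Nat.find hex = (Nat.find hex - A) + A by omega]
      rw [Nat.add_mod_right] at hnr; exact hnr
    have : Nat.find hex ≤ Nat.find hex - A := Nat.find_min' hex ⟨hSnA, hmod⟩
    omega
  -- injectivity mod A
  have keyinj : ∀ m ∈ N, ∀ n ∈ N, m % A = n % A → m = n := by
    intro m hm n hn hmn
    have hSm : S m := ((hN' m).mp hm).2.1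
    have hSn : S n := ((hN' n).mp hn).2.1
    exact le_antisymm (keymin m hm n hSn hmn.symm) (keymin n hn m hSm hmn)
  refine ⟨?_, keyinj, keyndvd, keysurj⟩
  -- cardinality
  have himg : N.image (· % A) = Finset.Ioo 0 A := by
    ext r
    simp only [Finset.mem_image, Finset.mem_Ioo]
    constructor
    · rintro ⟨n, hn, rfl⟩
      exact ⟨Nat.pos_of_ne_zero (keyndvd n hn), Nat.mod_lt n hApos⟩
    · rintro ⟨hr0, hrA⟩
      obtain ⟨n, hn, hnr⟩ := keysurj r hr0 hrA
      exact ⟨n, hn, hnr⟩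
  have hcard : N.card = (Finset.Ioo 0 A).card := by
    rw [← himg, Finset.card_image_of_injOn]
    intro m hm n hn hmn
    exact keyinj m hm n hn hmn
  rw [hcard, Nat.card_Ioo]
  omega
end

section
/- The number of non-representable positive integers satisfies S₀ = (1/a)·∑_{n ∈ N} n − (a−1)/2 = ∑_{n ∈ N} ⌊n/a⌋, where ⌊·⌋ is the floor function. -/
/-!
For each residue `r` modulo `A`, let `w r` be the least representable number congruent to `r`
(it exists since `gcd = 1`). Because `A` is representable, the representable numbers in the class
of `r` are exactly `w r, w r + A, w r + 2A, …`, so that class contains `⌊w r / A⌋` gaps, and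
`N = {w r | 1 ≤ r < A}`. Summing `w r = A ⌊w r / A⌋ + r` over `1 ≤ r < A` gives both formulas.
-/

open Finset

lemma Finset.exists_sum_mul_eq_one_of_gcd_eq_one {ι : Type*} (s : Finset ι) (a : ι → ℕ)
    (h : s.gcd a = 1) : ∃ g : ι → ℤ, ∑ i ∈ s, (a i : ℤ) * g i = 1 := by
  obtain ⟨g, hg⟩ := s.gcd_eq_sum_mul fun i ↦ (a i : ℤ)
  refine ⟨g, hg ▸ ?_⟩
  have hdvd : (s.gcd fun i ↦ (a i : ℤ)).natAbs ∣ 1 :=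
    h ▸ Finset.dvd_gcd fun i hi ↦ Int.natAbs_dvd_natAbs.mpr (Finset.gcd_dvd hi)
  have := Int.finsetGcd_nonneg (s := s) (f := fun i ↦ (a i : ℤ))
  have := Nat.dvd_one.mp hdvd
  omega

lemma exists_mem_closure_range_mod_eq {ι : Type*} [Fintype ι] (a : ι → ℕ)
    (h : univ.gcd a = 1) (m : ℕ) [NeZero m] (r : ℕ) :
    ∃ n ∈ AddSubmonoid.closure (Set.range a), n % m = r % m := by
  obtain ⟨g, hg⟩ := univ.exists_sum_mul_eq_one_of_gcd_eq_one a h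
  let x : ι → ℕ := fun i ↦ ((g i * r : ℤ) : ZMod m).val
  refine ⟨∑ i, x i * a i, AddSubmonoid.mem_closure_range_iff_of_fintype.mpr ⟨x, rfl⟩, ?_⟩
  rw [← ZMod.natCast_eq_natCast_iff']
  have hg' : ∑ i, (a i : ZMod m) * (g i : ZMod m) = 1 := by
    exact_mod_cast congrArg (Int.cast (R := ZMod m)) hg
  push_cast [x, ZMod.natCast_zmod_val]
  calc ∑ i, ((g i : ZMod m) * r) * a i = (∑ i, (a i : ZMod m) * g i) * r := by
        rw [Finset.sum_mul]; exact Finset.sum_congr rfl fun i _ ↦ by ring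
    _ = r := by rw [hg', one_mul]

namespace AddSubmonoid

variable (S : AddSubmonoid ℕ) (m : ℕ)

/-- The least element of `S` congruent to `r` modulo `m` (junk value `0` if there is none);
`{S.apery m r | r < m}` is the Apéry set of `S` with respect to `m`. -/
noncomputable def apery (r : ℕ) : ℕ := sInf {n | n ∈ S ∧ n % m = r % m}

variable {S m}

lemma apery_le {n : ℕ} (hn : n ∈ S) : S.apery m (n % m) ≤ n :=
  Nat.sInf_le ⟨hn, (Nat.mod_mod n m).symm⟩

@[simp]
lemma apery_zero : S.apery m 0 = 0 :=
  Nat.le_zero.mp (by simpa using apery_le (m := m) S.zero_mem)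

lemma apery_mem (hS : ∀ r, ∃ n ∈ S, n % m = r % m) (r : ℕ) : S.apery m r ∈ S :=
  (Nat.sInf_mem (hS r)).1

lemma apery_mod (hS : ∀ r, ∃ n ∈ S, n % m = r % m) (r : ℕ) : S.apery m r % m = r % m :=
  (Nat.sInf_mem (hS r)).2

lemma mem_iff_apery_le (hS : ∀ r, ∃ n ∈ S, n % m = r % m) (hm : m ∈ S) {n : ℕ} :
    n ∈ S ↔ S.apery m (n % m) ≤ n := by
  refine ⟨apery_le, fun hle ↦ ?_⟩
  obtain ⟨j, hj⟩ := (Nat.modEq_iff_dvd' hle).mp ((apery_mod hS _).trans (Nat.mod_mod n m))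
  rw [← Nat.add_sub_cancel' hle, hj]
  exact S.add_mem (apery_mem hS _) (by simpa [mul_comm] using S.nsmul_mem hm j)

lemma apery_injOn (hS : ∀ r, ∃ n ∈ S, n % m = r % m) :
    Set.InjOn (S.apery m) (Set.Iio m) := by
  intro r hr s hs h
  rw [Set.mem_Iio] at hr hs
  rw [← Nat.mod_eq_of_lt hr, ← Nat.mod_eq_of_lt hs, ← apery_mod hS, h, apery_mod hS]

lemma apery_div_add (hS : ∀ r, ∃ n ∈ S, n % m = r % m) {r : ℕ} (hr : r < m) :
    m * (S.apery m r / m) + r = S.apery m r := by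
  conv_rhs => rw [← Nat.div_add_mod (S.apery m r) m, apery_mod hS, Nat.mod_eq_of_lt hr]

lemma eq_apery_iff (hS : ∀ r, ∃ n ∈ S, n % m = r % m) (hm : m ∈ S) (hm0 : 0 < m) {n : ℕ} :
    n = S.apery m (n % m) ↔ n ∈ S ∧ ¬ (m ≤ n ∧ n - m ∈ S) := by
  have hsub_mod : m ≤ n → (n - m) % m = n % m := fun h ↦ by
    rw [← Nat.add_mod_right, Nat.sub_add_cancel h]
  rw [mem_iff_apery_le hS hm, mem_iff_apery_le hS hm]
  constructor
  · intro h
    refine ⟨h.ge, fun ⟨hmn, hle⟩ ↦ ?_⟩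
    rw [hsub_mod hmn] at hle
    omega
  · rintro ⟨hle, hnot⟩
    by_contra hne
    have hmn : S.apery m (n % m) + m ≤ n := Nat.ModEq.add_le_of_lt
      ((apery_mod hS _).trans (Nat.mod_mod n m)) (lt_of_le_of_ne hle (Ne.symm hne))
    exact hnot ⟨by omega, by rw [hsub_mod (by omega)]; omega⟩

lemma card_filter_mod_eq_apery (hS : ∀ r, ∃ n ∈ S, n % m = r % m) (hm : m ∈ S) (G : Finset ℕ)
    (hG : ∀ n, n ∈ G ↔ n ∉ S) {r : ℕ} (hr : r < m) :
    #{n ∈ G | n % m = r} = S.apery m r / m := by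
  have hfiber : {n ∈ G | n % m = r} = {n ∈ range (S.apery m r) | n ≡ r [MOD m]} := by
    ext n
    simp only [mem_filter, mem_range, hG, mem_iff_apery_le hS hm, not_le, Nat.ModEq,
      Nat.mod_eq_of_lt hr]
    exact and_congr_left fun h ↦ h ▸ Iff.rfl
  rw [hfiber, ← Nat.count_eq_card_filter_range, Nat.count_modEq_card _ (by omega), apery_mod hS,
    if_neg (lt_irrefl _), add_zero]

lemma card_eq_sum_apery_div (hS : ∀ r, ∃ n ∈ S, n % m = r % m) (hm : m ∈ S) (hm0 : 0 < m)
    (G : Finset ℕ) (hG : ∀ n, n ∈ G ↔ n ∉ S) : #G = ∑ r ∈ Ico 1 m, S.apery m r / m := by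
  rw [card_eq_sum_card_fiberwise fun n _ ↦ mem_range.mpr (Nat.mod_lt n hm0),
    sum_congr rfl fun r hr ↦ card_filter_mod_eq_apery hS hm G hG (mem_range.mp hr),
    sum_range_eq_add_Ico _ hm0, apery_zero, Nat.zero_div, zero_add]

lemma mem_image_apery_iff (hS : ∀ r, ∃ n ∈ S, n % m = r % m) (hm : m ∈ S) (hm0 : 0 < m)
    {n : ℕ} : n ∈ (Ico 1 m).image (S.apery m) ↔ 0 < n ∧ n ∈ S ∧ ¬ (m ≤ n ∧ n - m ∈ S) := by
  rw [← eq_apery_iff hS hm hm0, mem_image]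
  constructor
  · rintro ⟨r, hr, rfl⟩
    rw [mem_Ico] at hr
    have hmod : S.apery m r % m = r := (apery_mod hS r).trans (Nat.mod_eq_of_lt hr.2)
    refine ⟨Nat.pos_of_ne_zero fun h ↦ ?_, by rw [hmod]⟩
    rw [h, Nat.zero_mod] at hmod
    omega
  · rintro ⟨hn, hn_eq⟩
    refine ⟨n % m, mem_Ico.mpr ⟨Nat.pos_of_ne_zero fun h ↦ ?_, Nat.mod_lt n hm0⟩, hn_eq.symm⟩
    rw [h, apery_zero] at hn_eq
    omega

lemma sum_apery (hS : ∀ r, ∃ n ∈ S, n % m = r % m) :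
    ∑ r ∈ Ico 1 m, S.apery m r = m * ∑ r ∈ Ico 1 m, S.apery m r / m + ∑ r ∈ Ico 1 m, r := by
  rw [mul_sum, ← sum_add_distrib]
  exact sum_congr rfl fun r hr ↦ (apery_div_add hS (mem_Ico.mp hr).2).symm

end AddSubmonoid

lemma exists_intCast_sub_eq_sum_iff {ι : Type*} [Fintype ι] (a : ι → ℕ) (n m : ℕ) :
    (∃ x : ι → ℕ, (n : ℤ) - m = ∑ i, (a i : ℤ) * x i) ↔
      m ≤ n ∧ ∃ x : ι → ℕ, n - m = ∑ i, a i * x i := by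
  have hcast : ∀ x : ι → ℕ, ((∑ i, a i * x i : ℕ) : ℤ) = ∑ i, (a i : ℤ) * x i := fun x ↦ by simp
  constructor
  · rintro ⟨x, hx⟩
    have := hcast x
    exact ⟨by omega, x, by omega⟩
  · rintro ⟨hmn, x, hx⟩
    exact ⟨x, by rw [← hcast, ← hx]; omega⟩

theorem card_NR_eq_general
    (k : ℕ) (a : Fin k → ℕ)
    (hgcd : Finset.univ.gcd a = 1)
    (A : ℕ) (hA : 2 ≤ A) (hAmem : ∃ i, a i = A)
    (NR N : Finset ℕ)
    (hNR : ∀ n : ℕ, n ∈ NR ↔ 0 < n ∧ ¬ ∃ x : Fin k → ℕ, n = ∑ i, a i * x i)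
    (hN : ∀ n : ℕ, n ∈ N ↔ 0 < n ∧ (∃ x : Fin k → ℕ, n = ∑ i, a i * x i) ∧
      ¬ ∃ x : Fin k → ℕ, (n : ℤ) - (A : ℤ) = ∑ i, (a i : ℤ) * (x i : ℤ)) :
    (NR.card : ℚ) = (1 / (A : ℚ)) * ∑ n ∈ N, (n : ℚ) - ((A : ℚ) - 1) / 2 ∧
    (NR.card : ℚ) = ∑ n ∈ N, (⌊(n : ℚ) / (A : ℚ)⌋ : ℚ) := by
  set S := AddSubmonoid.closure (Set.range a)
  have hA0 : 0 < A := by omega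
  have : NeZero A := ⟨hA0.ne'⟩
  have hrep (n : ℕ) : (∃ x : Fin k → ℕ, n = ∑ i, a i * x i) ↔ n ∈ S := by
    simp_rw [S, AddSubmonoid.mem_closure_range_iff_of_fintype, smul_eq_mul, mul_comm]
  have hS := exists_mem_closure_range_mod_eq a hgcd A
  have hAS : A ∈ S := hAmem.elim fun i hi ↦ AddSubmonoid.subset_closure ⟨i, hi⟩
  have hcard : NR.card = ∑ r ∈ Ico 1 A, S.apery A r / A :=
    AddSubmonoid.card_eq_sum_apery_div hS hAS hA0 NR fun n ↦ by
      rw [hNR, hrep, and_iff_right_iff_imp]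
      exact fun h ↦ Nat.pos_of_ne_zero fun h0 ↦ h (h0 ▸ S.zero_mem)
  have hsum (f : ℕ → ℚ) : ∑ n ∈ N, f n = ∑ r ∈ Ico 1 A, f (S.apery A r) := by
    have hN_eq : N = (Ico 1 A).image (S.apery A) := by
      ext n
      rw [AddSubmonoid.mem_image_apery_iff hS hAS hA0, hN, exists_intCast_sub_eq_sum_iff, hrep,
        hrep]
    rw [hN_eq, sum_image ((AddSubmonoid.apery_injOn hS).mono fun r hr ↦ (mem_Ico.mp hr).2)]
  have hgauss : (∑ r ∈ Ico 1 A, r) * 2 = A * (A - 1) := by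
    rw [← sum_range_id_mul_two, sum_range_eq_add_Ico _ hA0, zero_add]
  constructor
  · have h := congrArg (Nat.cast (R := ℚ)) (AddSubmonoid.sum_apery (S := S) hS)
    have hg := congrArg (Nat.cast (R := ℚ)) hgauss
    push_cast [Nat.cast_sub hA0] at h hg
    rw [hsum, h, hcard]
    push_cast
    field_simp
    linarith
  · rw [hsum, hcard, Nat.cast_sum]
    exact sum_congr rfl fun r _ ↦ by rw [Rat.floor_natCast_div_natCast]; norm_cast

/-- Equation (3.2): the number of non-representable positive integers satisfies
`S₀ = (1/a)·∑_{n ∈ N} n − (a−1)/2 = ∑_{n ∈ N} ⌊n/a⌋`. -/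
theorem card_NR_eq
    (k : ℕ) (a : Fin k → ℕ) (ha : ∀ i, 0 < a i)
    (hgcd : Finset.univ.gcd a = 1)
    (A : ℕ) (hA : 2 ≤ A) (hAmem : ∃ i, a i = A)
    (NR N : Finset ℕ)
    (hNR : ∀ n : ℕ, n ∈ NR ↔ 0 < n ∧ ¬ ∃ x : Fin k → ℕ, n = ∑ i, a i * x i)
    (hN : ∀ n : ℕ, n ∈ N ↔ 0 < n ∧ (∃ x : Fin k → ℕ, n = ∑ i, a i * x i) ∧
      ¬ ∃ x : Fin k → ℕ, (n : ℤ) - (A : ℤ) = ∑ i, (a i : ℤ) * (x i : ℤ)) :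
    (NR.card : ℚ) = (1 / (A : ℚ)) * ∑ n ∈ N, (n : ℚ) - ((A : ℚ) - 1) / 2 ∧
    (NR.card : ℚ) = ∑ n ∈ N, (⌊(n : ℚ) / (A : ℚ)⌋ : ℚ) :=
  card_NR_eq_general k a hgcd A hA hAmem NR N hNR hN
end

section
/- For every integer m ≥ 1, the Sylvester sum satisfies m·S_{m−1} = a^{m−1}·∑_{n ∈ N₀} B_m(n/a) − B_m, where B_m(x) is the m-th Bernoulli polynomial and B_m = B_m(0). -/
/-!
Split ℕ into residue classes modulo `A`. Since `A` is a generator, the gaps of the semigroup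
in the class of `r < A` are `r, r + A, …, r + A (f_r - 1)`, and `r + A f_r` is the element of
`N₀` in that class. By `B_m(x + 1) - B_m(x) = m x^{m-1}`, the `(m-1)`-st powers of these gaps
sum to `A^{m-1} (B_m((r + A f_r)/A) - B_m(r/A)) / m`, and Raabe's multiplication formula
`A^{m-1} ∑_{r<A} B_m(r/A) = B_m` removes the second terms.

Raabe's formula itself: the defect `A^m ∑_{r<A} B_m((x + r)/A) - A B_m(x)` is a 1-periodic
polynomial, hence constant, and its derivative is `m` times the defect for `m - 1`.
-/

open Finset

namespace Polynomial

theorem eq_C_eval_zero_of_eval_add_one {R : Type*} [CommRing R] [IsDomain R] [CharZero R]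
    {P : R[X]} (h : ∀ x, P.eval (x + 1) = P.eval x) : P = C (P.eval 0) := by
  have hnat : ∀ n : ℕ, P.eval (n : R) = P.eval 0 := by
    intro n
    induction n with
    | zero => simp
    | succ n ih => rw [Nat.cast_succ, h, ih]
  apply eq_of_infinite_eval_eq
  refine Set.infinite_of_injective_forall_mem Nat.cast_injective fun n => ?_
  simp [hnat]

noncomputable def raabeDefect (A m : ℕ) : ℚ[X] :=
  (A : ℚ) ^ m • ∑ r ∈ range A, (bernoulli m).comp (C (A : ℚ)⁻¹ * (X + C (r : ℚ)))
    - (A : ℚ) • bernoulli m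

theorem raabeDefect_eval (A m : ℕ) (x : ℚ) :
    (raabeDefect A m).eval x =
      (A : ℚ) ^ m * ∑ r ∈ range A, (bernoulli m).eval ((x + r) / A)
        - A * (bernoulli m).eval x := by
  simp [raabeDefect, eval_finsetSum, div_eq_inv_mul]

theorem raabeDefect_eval_add_one {A : ℕ} (hA : A ≠ 0) (m : ℕ) (x : ℚ) :
    (raabeDefect A m).eval (x + 1) = (raabeDefect A m).eval x := by
  set g : ℕ → ℚ := fun r => (bernoulli m).eval ((x + r) / A)
  have hshift : ∑ r ∈ range A, (bernoulli m).eval ((x + 1 + r) / A) = ∑ r ∈ range A, g (r + 1) :=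
    sum_congr rfl fun r _ => by simp only [g]; push_cast; ring_nf
  have htelescope : ∑ r ∈ range A, (g (r + 1) - g r) = m * (x / A) ^ (m - 1) := by
    rw [sum_range_sub]
    simp only [g, Nat.cast_zero, add_zero]
    rw [show (x + A) / A = 1 + x / A by field_simp; ring, bernoulli_eval_one_add]
    ring
  have hscale : (A : ℚ) ^ m * (m * (x / A) ^ (m - 1)) = A * (m * x ^ (m - 1)) := by
    rcases m with _ | m
    · simp
    · rw [Nat.add_sub_cancel, div_pow, pow_succ]
      field_simp
  rw [raabeDefect_eval, raabeDefect_eval, hshift, add_comm x 1, bernoulli_eval_one_add]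
  rw [sum_sub_distrib] at htelescope
  linear_combination (A : ℚ) ^ m * htelescope + hscale

theorem derivative_raabeDefect {A : ℕ} (hA : A ≠ 0) (m : ℕ) :
    derivative (raabeDefect A (m + 1)) = ((m : ℚ) + 1) • raabeDefect A m := by
  simp only [raabeDefect, derivative_sub, derivative_sum, derivative_comp,
    derivative_bernoulli_add_one, derivative_mul, derivative_C, derivative_X, derivative_add,
    zero_mul, mul_one, add_zero, zero_add, mul_comp, natCast_comp, add_comp, one_comp, smul_sub,
    smul_eq_C_mul, mul_sum]
  simp only [← C_eq_natCast, ← C_1, ← C_add, ← mul_assoc, ← C_mul]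
  congr 1
  · refine sum_congr rfl fun r _ => ?_
    congr 2
    field_simp
    ring
  · rw [mul_comm (A : ℚ)]

theorem raabeDefect_eq_zero {A : ℕ} (hA : A ≠ 0) (m : ℕ) : raabeDefect A m = 0 := by
  have hconst := eq_C_eval_zero_of_eval_add_one (raabeDefect_eval_add_one hA (m + 1))
  have h := derivative_raabeDefect hA m
  rw [hconst, derivative_C] at h
  exact (smul_eq_zero.mp h.symm).resolve_left (by positivity)

theorem pow_mul_sum_range_bernoulli_eval_add_div {A : ℕ} (hA : A ≠ 0) (m : ℕ) (x : ℚ) :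
    (A : ℚ) ^ m * ∑ r ∈ range A, (bernoulli m).eval ((x + r) / A) = A * (bernoulli m).eval x := by
  have h := raabeDefect_eval A m x
  rw [raabeDefect_eq_zero hA, eval_zero] at h
  linear_combination -h

theorem sum_range_add_mul_pow_eq_bernoulli_sub {a : ℚ} (ha : a ≠ 0) (p n : ℕ) (x : ℚ) :
    ((p : ℚ) + 1) * ∑ j ∈ range n, (x + a * j) ^ p =
      a ^ p * ((bernoulli (p + 1)).eval ((x + a * n) / a) - (bernoulli (p + 1)).eval (x / a)) := by
  set g : ℕ → ℚ := fun j => (bernoulli (p + 1)).eval ((x + a * j) / a)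
  have hstep : ∀ j : ℕ, g (j + 1) - g j = (p + 1) * ((x + a * j) / a) ^ p := by
    intro j
    simp only [g]
    rw [show (x + a * ↑(j + 1)) / a = 1 + (x + a * j) / a by push_cast; field_simp; ring,
      bernoulli_eval_one_add]
    push_cast; ring
  have h := sum_range_sub g n
  simp only [hstep, g, Nat.cast_zero, mul_zero, add_zero] at h
  rw [← h, mul_sum, mul_sum]
  refine sum_congr rfl fun j _ => ?_
  rw [div_pow]; field_simp

end Polynomial

namespace AddSubmonoid

theorem mem_closure_range_iff_exists_sum {ι : Type*} [Fintype ι] {a : ι → ℕ} {n : ℕ} :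
    n ∈ closure (Set.range a) ↔ ∃ x : ι → ℕ, n = ∑ i, a i * x i := by
  simp [mem_closure_range_iff_of_fintype, mul_comm]

/-- For `r < A`, `r + A * aperyIndex S A r` is the least element of `S` congruent to `r`
modulo `A`, i.e. the element of the Apéry set of `S` with respect to `A` in the class of `r`. -/
noncomputable def aperyIndex (S : AddSubmonoid ℕ) (A r : ℕ) : ℕ :=
  sInf {j | r + A * j ∈ S}

variable {S : AddSubmonoid ℕ} {A : ℕ}

theorem exists_add_mul_mem (hA : 0 < A) (hS : (S : Set ℕ)ᶜ.Finite) (r : ℕ) :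
    ∃ j, r + A * j ∈ S := by
  obtain ⟨B, hB⟩ := hS.bddAbove
  refine ⟨B + 1, by_contra fun h => ?_⟩
  have : r + A * (B + 1) ≤ B := hB h
  nlinarith

section

variable (hAS : A ∈ S) (hA : 0 < A) (hS : (S : Set ℕ)ᶜ.Finite)
include hAS hA hS

theorem add_mul_mem_iff_aperyIndex_le (r j : ℕ) : r + A * j ∈ S ↔ aperyIndex S A r ≤ j := by
  refine ⟨fun h => Nat.sInf_le h, fun h => ?_⟩
  have hmin : r + A * aperyIndex S A r ∈ S := Nat.sInf_mem (exists_add_mul_mem hA hS r)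
  obtain ⟨d, rfl⟩ := Nat.exists_eq_add_of_le h
  rw [mul_add, ← add_assoc, mul_comm A d]
  exact add_mem hmin (nsmul_mem hAS d)

theorem mem_iff_aperyIndex_le (n : ℕ) : n ∈ S ↔ aperyIndex S A (n % A) ≤ n / A := by
  conv_lhs => rw [← Nat.mod_add_div n A]
  exact add_mul_mem_iff_aperyIndex_le hAS hA hS _ _

theorem mem_and_sub_notMem_iff (n : ℕ) :
    n ∈ S ∧ (A ≤ n → n - A ∉ S) ↔ aperyIndex S A (n % A) = n / A := by
  obtain ⟨q, j, hq, rfl⟩ : ∃ q j, q < A ∧ n = q + A * j :=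
    ⟨n % A, n / A, Nat.mod_lt n hA, (Nat.mod_add_div n A).symm⟩
  rw [Nat.add_mul_mod_self_left, Nat.mod_eq_of_lt hq, Nat.add_mul_div_left _ _ hA,
    Nat.div_eq_of_lt hq, zero_add, add_mul_mem_iff_aperyIndex_le hAS hA hS]
  rcases j with _ | j
  · simp only [mul_zero, add_zero]
    exact ⟨fun h => Nat.le_zero.mp h.1, fun h => ⟨h.le, fun hle => absurd hle (by omega)⟩⟩
  · have hsub : q + A * (j + 1) - A = q + A * j := by rw [mul_add_one]; omega
    have hle : A ≤ q + A * (j + 1) := by rw [mul_add_one]; omega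
    rw [hsub, add_mul_mem_iff_aperyIndex_le hAS hA hS]
    simp only [hle, true_implies]
    omega

theorem sum_gaps_eq_sum_range_sum {M : Type*} [AddCommMonoid M] {G : Finset ℕ}
    (hG : ∀ n, n ∈ G ↔ n ∉ S) (g : ℕ → M) :
    ∑ n ∈ G, g n = ∑ r ∈ range A, ∑ j ∈ range (aperyIndex S A r), g (r + A * j) := by
  rw [sum_sigma']
  refine sum_nbij' (fun n => ⟨n % A, n / A⟩) (fun x => x.1 + A * x.2) ?_ ?_ ?_ ?_ ?_
  · intro n hn
    rw [hG, mem_iff_aperyIndex_le hAS hA hS, not_le] at hn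
    simpa [Nat.mod_lt n hA] using hn
  · rintro ⟨r, j⟩ hx
    simp only [mem_sigma, mem_range] at hx
    rw [hG, add_mul_mem_iff_aperyIndex_le hAS hA hS, not_le]
    exact hx.2
  · intro n _
    exact Nat.mod_add_div n A
  · rintro ⟨r, j⟩ hx
    simp only [mem_sigma, mem_range] at hx
    simp [Nat.add_mul_mod_self_left, Nat.mod_eq_of_lt hx.1, Nat.add_mul_div_left _ _ hA,
      Nat.div_eq_of_lt hx.1]
  · intro n _
    rw [Nat.mod_add_div n A]

theorem sum_apery_eq_sum_range {M : Type*} [AddCommMonoid M] {G : Finset ℕ}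
    (hG : ∀ n, n ∈ G ↔ n ∈ S ∧ (A ≤ n → n - A ∉ S)) (g : ℕ → M) :
    ∑ n ∈ G, g n = ∑ r ∈ range A, g (r + A * aperyIndex S A r) := by
  have hinj : Set.InjOn (fun r => r + A * aperyIndex S A r) (range A) := by
    intro r hr s hs h
    simp only [coe_range, Set.mem_Iio] at hr hs
    have := congrArg (· % A) h
    simpa [Nat.add_mul_mod_self_left, Nat.mod_eq_of_lt hr, Nat.mod_eq_of_lt hs] using this
  have himage : G = (range A).image fun r => r + A * aperyIndex S A r := by
    ext n
    rw [hG, mem_and_sub_notMem_iff hAS hA hS, mem_image]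
    constructor
    · intro h
      exact ⟨n % A, mem_range.mpr (Nat.mod_lt n hA), by rw [h, Nat.mod_add_div]⟩
    · rintro ⟨r, hr, rfl⟩
      rw [mem_range] at hr
      simp [Nat.add_mul_mod_self_left, Nat.mod_eq_of_lt hr, Nat.add_mul_div_left _ _ hA,
        Nat.div_eq_of_lt hr]
  rw [himage, sum_image hinj]

end

end AddSubmonoid

theorem exists_natCast_sub_eq_sum_iff {ι : Type*} [Fintype ι] (a : ι → ℕ) (n A : ℕ) :
    (∃ x : ι → ℕ, (n : ℤ) - A = ∑ i, (a i : ℤ) * x i) ↔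
      A ≤ n ∧ ∃ x : ι → ℕ, n - A = ∑ i, a i * x i := by
  rw [← exists_and_left]
  refine exists_congr fun x => ?_
  have hcast : ∑ i, (a i : ℤ) * x i = ((∑ i, a i * x i : ℕ) : ℤ) := by push_cast; rfl
  rw [hcast]
  omega

theorem sylvester_sum_bernoulli_general
    (k : ℕ) (a : Fin k → ℕ)
    (A : ℕ) (hA : 2 ≤ A) (hAmem : ∃ i, a i = A)
    (NR N : Finset ℕ)
    (hNR : ∀ n : ℕ, n ∈ NR ↔ 0 < n ∧ ¬ ∃ x : Fin k → ℕ, n = ∑ i, a i * x i)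
    (hN : ∀ n : ℕ, n ∈ N ↔ 0 < n ∧ (∃ x : Fin k → ℕ, n = ∑ i, a i * x i) ∧
      ¬ ∃ x : Fin k → ℕ, (n : ℤ) - (A : ℤ) = ∑ i, (a i : ℤ) * (x i : ℤ))
    (m : ℕ) (hm : 1 ≤ m) :
    (m : ℚ) * ∑ n ∈ NR, (n : ℚ) ^ (m - 1) =
      (A : ℚ) ^ (m - 1) *
        ∑ n ∈ insert 0 N, (Polynomial.bernoulli m).eval ((n : ℚ) / (A : ℚ))
      - bernoulli m := by
  obtain ⟨p, rfl⟩ : ∃ p, m = p + 1 := ⟨m - 1, by omega⟩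
  simp only [← AddSubmonoid.mem_closure_range_iff_exists_sum, exists_natCast_sub_eq_sum_iff]
    at hNR hN
  set S := AddSubmonoid.closure (Set.range a)
  have hA0 : 0 < A := by omega
  have hAS : A ∈ S := AddSubmonoid.subset_closure (Set.mem_range.mpr hAmem)
  have hgaps : ∀ n, n ∈ NR ↔ n ∉ S := fun n => by
    rw [hNR]
    exact ⟨And.right, fun h => ⟨Nat.pos_of_ne_zero (by rintro rfl; exact h S.zero_mem), h⟩⟩
  have hapery : ∀ n, n ∈ insert 0 N ↔ n ∈ S ∧ (A ≤ n → n - A ∉ S) := fun n => by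
    rcases Nat.eq_zero_or_pos n with rfl | hn
    · simp [S.zero_mem, hA0.ne']
    · simp [hN, hn.ne', hn]
  have hS : (S : Set ℕ)ᶜ.Finite := NR.finite_toSet.subset fun n hn => (hgaps n).mpr hn
  have hA0' : (A : ℚ) ≠ 0 := Nat.cast_ne_zero.mpr hA0.ne'
  have hraabe : (A : ℚ) ^ p * ∑ r ∈ range A, (Polynomial.bernoulli (p + 1)).eval ((r : ℚ) / A) =
      bernoulli (p + 1) := by
    refine mul_left_cancel₀ hA0' ?_
    simpa [pow_succ', mul_assoc] using
      Polynomial.pow_mul_sum_range_bernoulli_eval_add_div hA0.ne' (p + 1) 0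
  rw [AddSubmonoid.sum_gaps_eq_sum_range_sum hAS hA0 hS hgaps,
    AddSubmonoid.sum_apery_eq_sum_range hAS hA0 hS hapery, Nat.add_sub_cancel, ← hraabe,
    mul_sum, mul_sum, mul_sum, ← sum_sub_distrib]
  refine sum_congr rfl fun r _ => ?_
  push_cast
  rw [Polynomial.sum_range_add_mul_pow_eq_bernoulli_sub hA0', mul_sub]

/-- Equation (3.1.3): for `m ≥ 1`,
`m·S_{m−1} = a^{m−1}·∑_{n ∈ N₀} B_m(n/a) − B_m`,
where `B_m` is the `m`-th Bernoulli polynomial (with `B₁ = −1/2`),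
`N₀ = N ∪ {0}`, and `S_{m-1} = ∑_{n ∈ NR} n^{m-1}`. -/
theorem sylvester_sum_bernoulli
    (k : ℕ) (a : Fin k → ℕ) (ha : ∀ i, 0 < a i)
    (hgcd : Finset.univ.gcd a = 1)
    (A : ℕ) (hA : 2 ≤ A) (hAmem : ∃ i, a i = A)
    (NR N : Finset ℕ)
    (hNR : ∀ n : ℕ, n ∈ NR ↔ 0 < n ∧ ¬ ∃ x : Fin k → ℕ, n = ∑ i, a i * x i)
    (hN : ∀ n : ℕ, n ∈ N ↔ 0 < n ∧ (∃ x : Fin k → ℕ, n = ∑ i, a i * x i) ∧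
      ¬ ∃ x : Fin k → ℕ, (n : ℤ) - (A : ℤ) = ∑ i, (a i : ℤ) * (x i : ℤ))
    (m : ℕ) (hm : 1 ≤ m) :
    (m : ℚ) * ∑ n ∈ NR, (n : ℚ) ^ (m - 1) =
      (A : ℚ) ^ (m - 1) *
        ∑ n ∈ insert 0 N, (Polynomial.bernoulli m).eval ((n : ℚ) / (A : ℚ))
      - bernoulli m :=
  sylvester_sum_bernoulli_general k a A hA hAmem NR N hNR hN m hm
end

section
/- For two coprime integers a, b ≥ 2, the set N (taken with respect to the element a) equals { b·n : n = 1, …, a−1 }. -/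
/-- Equation (5.1.0) (Selmer): in the two-variable case with coprime `a, b ≥ 2`,
the set `N` (taken with respect to `a`) is `{ b·n : n = 1, …, a−1 }`. -/
theorem N_eq_multiples_of_b
    (a b : ℕ) (ha : 2 ≤ a) (hb : 2 ≤ b) (hab : Nat.Coprime a b)
    (NR N : Finset ℕ)
    (hNR : ∀ n : ℕ, n ∈ NR ↔ 0 < n ∧ ¬ ∃ x y : ℕ, n = a * x + b * y)
    (hN : ∀ n : ℕ, n ∈ N ↔ 0 < n ∧ (∃ x y : ℕ, n = a * x + b * y) ∧
      ¬ ∃ x y : ℕ, (n : ℤ) - (a : ℤ) = (a : ℤ) * x + (b : ℤ) * y) :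
    N = (Finset.Icc 1 (a - 1)).image (fun n => b * n) := by
  ext n
  simp only [Finset.mem_image, Finset.mem_Icc, hN]
  constructor
  · rintro ⟨hpos, ⟨x, y, hxy⟩, hnot⟩
    have hx0 : x = 0 := by
      by_contra hx
      have h1x : 1 ≤ x := Nat.one_le_iff_ne_zero.mpr hx
      refine hnot ⟨x - 1, y, ?_⟩
      subst hxy
      rw [Nat.cast_add, Nat.cast_mul, Nat.cast_mul, Nat.cast_sub h1x]
      push_cast
      ring
    subst hx0
    simp only [Nat.mul_zero, Nat.zero_add] at hxy
    have hy1 : 1 ≤ y := by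
      rcases Nat.eq_zero_or_pos y with h | h
      · subst h; simp at hxy; omega
      · exact h
    refine ⟨y, ⟨hy1, ?_⟩, hxy.symm⟩
    by_contra h
    have hya : a ≤ y := by omega
    refine hnot ⟨b - 1, y - a, ?_⟩
    subst hxy
    rw [Nat.cast_mul, Nat.cast_sub (by omega : 1 ≤ b), Nat.cast_sub hya]
    push_cast
    ring
  · rintro ⟨k, ⟨hk1, hk2⟩, rfl⟩
    refine ⟨Nat.mul_pos (by omega) (by omega), ⟨0, k, by ring⟩, ?_⟩
    rintro ⟨x, y, hxy⟩
    have heq : (b : ℤ) * ((k : ℤ) - y) = a * (x + 1) := by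
      push_cast at hxy ⊢
      linarith
    have hcop : IsCoprime (a : ℤ) (b : ℤ) :=
      Int.isCoprime_iff_gcd_eq_one.mpr (by simpa using hab)
    have hdvd : (a : ℤ) ∣ ((k : ℤ) - y) := by
      refine hcop.dvd_of_dvd_mul_left ⟨(x : ℤ) + 1, ?_⟩
      linarith [heq]
    obtain ⟨t, ht⟩ := hdvd
    have hbt : (b : ℤ) * t = x + 1 := by
      have : (a : ℤ) * ((b : ℤ) * t) = a * (x + 1) := by rw [← heq, ht]; ring
      have ha0 : (a : ℤ) ≠ 0 := by positivity
      exact mul_left_cancel₀ ha0 this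
    have ht1 : 1 ≤ t := by nlinarith [Int.natCast_nonneg x, Int.natCast_nonneg b]
    have : (k : ℤ) - y ≥ a := by
      rw [ht]; nlinarith [Int.natCast_nonneg a]
    have hk : (k : ℤ) ≤ (a : ℤ) - 1 := by
      have : (k : ℕ) ≤ a - 1 := hk2
      omega
    have hy0 : (0 : ℤ) ≤ y := Int.natCast_nonneg y
    linarith
end

section
/- For two coprime integers a, b ≥ 2 and every nonzero real number z, ∑_{n ∈ NR} e^{nz} = (e^{abz} − 1)/((e^{az} − 1)(e^{bz} − 1)) − 1/(e^{z} − 1). -/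
open Polynomial in
/-- Equation (5.x.1): for coprime `a, b ≥ 2` and nonzero real `z`,
`∑_{n ∈ NR} e^{nz} = (e^{abz} − 1)/((e^{az} − 1)(e^{bz} − 1)) − 1/(e^z − 1)`. -/
theorem egf_NR_two_variable
    (a b : ℕ) (ha : 2 ≤ a) (hb : 2 ≤ b) (hab : Nat.Coprime a b)
    (NR : Finset ℕ)
    (hNR : ∀ n : ℕ, n ∈ NR ↔ 0 < n ∧ ¬ ∃ x y : ℕ, n = a * x + b * y)
    (z : ℝ) (hz : z ≠ 0) :
    ∑ n ∈ NR, Real.exp (n * z) =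
      (Real.exp (a * b * z) - 1) /
        ((Real.exp (a * z) - 1) * (Real.exp (b * z) - 1))
      - 1 / (Real.exp z - 1) := by
  have ha0 : (a : ℝ) ≠ 0 := by positivity
  have hb0 : (b : ℝ) ≠ 0 := by positivity
  have hbpos : 0 < b := by omega
  -- the injective parametrization of representable numbers
  set g : Fin b × ℕ → ℕ := fun p => a * p.1 + b * p.2 with hg_def
  have hginj : Function.Injective g := by
    rintro ⟨x1, y1⟩ ⟨x2, y2⟩ h
    simp only [hg_def] at h
    have hco : IsCoprime (b : ℤ) (a : ℤ) :=
      (Nat.isCoprime_iff_coprime.mpr hab).symm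
    have hdvd : (b : ℤ) ∣ (a : ℤ) * ((x1 : ℤ) - (x2 : ℤ)) := by
      refine ⟨(y2 : ℤ) - (y1 : ℤ), ?_⟩
      have := congrArg (fun n : ℕ => (n : ℤ)) h
      push_cast at this ⊢
      linarith
    have hdvd2 : (b : ℤ) ∣ ((x1 : ℤ) - (x2 : ℤ)) := hco.dvd_of_dvd_mul_left hdvd
    obtain ⟨c, hc⟩ := hdvd2
    have hx1 : (x1 : ℤ) < b := by exact_mod_cast x1.isLt
    have hx2 : (x2 : ℤ) < b := by exact_mod_cast x2.isLt
    have hbZ : (0 : ℤ) < b := by exact_mod_cast hbpos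
    have hx1nn : (0:ℤ) ≤ (x1 : ℤ) := by positivity
    have hx2nn : (0:ℤ) ≤ (x2 : ℤ) := by positivity
    have hlow : -(b:ℤ) < (b:ℤ) * c := by nlinarith
    have hhigh : (b:ℤ) * c < (b:ℤ) := by nlinarith
    have hcl : (-1:ℤ) < c := by nlinarith
    have hch : c < 1 := by nlinarith
    have hc0 : c = 0 := by omega
    have hx : (x1 : ℕ) = (x2 : ℕ) := by
      have hxz : (x1 : ℤ) = (x2 : ℤ) := by rw [hc0, mul_zero] at hc; linarith
      exact_mod_cast hxz
    have hxf : x1 = x2 := Fin.ext hx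
    subst hxf
    have : y1 = y2 := Nat.eq_of_mul_eq_mul_left hbpos (Nat.add_left_cancel h)
    simp [this]
  -- the range of g is exactly the set of representable numbers
  have hrange : Set.range g = {n : ℕ | ∃ x y : ℕ, n = a * x + b * y} := by
    ext n
    constructor
    · rintro ⟨⟨x, y⟩, rfl⟩
      exact ⟨x, y, rfl⟩
    · rintro ⟨x, y, rfl⟩
      refine ⟨⟨⟨x % b, Nat.mod_lt _ hbpos⟩, y + a * (x / b)⟩, ?_⟩
      simp only [hg_def]
      have := Nat.div_add_mod x b
      ring_nf
      nlinarith [Nat.div_add_mod x b]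
  -- NR is the complement of the representable numbers
  have hcompl : (↑NR : Set ℕ)ᶜ = Set.range g := by
    rw [hrange]
    ext n
    simp only [Set.mem_compl_iff, Finset.coe_sort_coe, Set.mem_setOf_eq,
      Finset.mem_coe, hNR n]
    constructor
    · intro h
      by_contra hrep
      rcases Nat.eq_zero_or_pos n with h0 | h0
      · exact hrep ⟨0, 0, by omega⟩
      · exact h ⟨h0, hrep⟩
    · rintro ⟨x, y, rfl⟩ ⟨_, hne⟩
      exact hne ⟨x, y, rfl⟩
  -- Key identity for t ∈ (0,1)
  have key : ∀ t : ℝ, t ∈ Set.Ioo (0:ℝ) 1 →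
      (∑ n ∈ NR, t ^ n) * ((t ^ a - 1) * (t ^ b - 1) * (t - 1)) =
        (t ^ (a * b) - 1) * (t - 1) - (t ^ a - 1) * (t ^ b - 1) := by
    rintro t ⟨ht0, ht1⟩
    have ht0' : (0:ℝ) ≤ t := le_of_lt ht0
    have hsum : Summable (fun n : ℕ => t ^ n) :=
      summable_geometric_of_lt_one ht0' ht1
    have htb1 : t ^ b < 1 := pow_lt_one₀ ht0' ht1 (by omega)
    have htb0 : (0:ℝ) ≤ t ^ b := by positivity
    -- split the full geometric series
    have hsplit : (∑ n ∈ NR, t ^ n) + ∑' n : ↑((↑NR : Set ℕ)ᶜ), t ^ (n : ℕ)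
        = ∑' n : ℕ, t ^ n := Summable.sum_add_tsum_compl hsum
    -- compute the sum over the complement (= representable numbers)
    have hsumg : Summable (fun p : Fin b × ℕ => t ^ g p) :=
      hsum.comp_injective hginj
    have hrepval : ∑' n : ↑((↑NR : Set ℕ)ᶜ), t ^ (n : ℕ)
        = (∑ x ∈ Finset.range b, t ^ (a * x)) * (1 - t ^ b)⁻¹ := by
      rw [hcompl, ← (Equiv.ofInjective g hginj).tsum_eq (fun n : Set.range g => t ^ (n : ℕ))]
      have hfib : ∀ x : Fin b, Summable fun y : ℕ => t ^ g (x, y) := by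
        intro x
        have heq : (fun y : ℕ => t ^ g (x, y))
            = fun y => t ^ (a * (x:ℕ)) * (t ^ b) ^ y := by
          funext y; simp only [hg_def, pow_add, pow_mul]
        rw [heq]
        exact (summable_geometric_of_lt_one htb0 htb1).mul_left _
      have step1 : ∑' p : Fin b × ℕ, t ^ g p
          = ∑' (x : Fin b), ∑' (y : ℕ), t ^ g (x, y) :=
        Summable.tsum_prod' hsumg hfib
      calc ∑' (p : Fin b × ℕ), t ^ ((Equiv.ofInjective g hginj p : ℕ))
          = ∑' p : Fin b × ℕ, t ^ g p := by
            refine tsum_congr fun p => ?_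
            simp [Equiv.ofInjective_apply]
        _ = ∑' (x : Fin b), ∑' (y : ℕ), t ^ g (x, y) := step1
        _ = ∑ x : Fin b, ∑' (y : ℕ), t ^ g (x, y) := tsum_fintype _
        _ = ∑ x : Fin b, t ^ (a * (x:ℕ)) * (1 - t ^ b)⁻¹ := by
            refine Finset.sum_congr rfl fun x _ => ?_
            have : ∀ y : ℕ, t ^ g (x, y) = t ^ (a * (x:ℕ)) * (t ^ b) ^ y := by
              intro y; simp only [hg_def, pow_add, pow_mul]
            simp_rw [this]
            rw [tsum_mul_left, tsum_geometric_of_lt_one htb0 htb1]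
        _ = (∑ x ∈ Finset.range b, t ^ (a * x)) * (1 - t ^ b)⁻¹ := by
            rw [← Finset.sum_mul, Fin.sum_univ_eq_sum_range (fun x => t ^ (a * x))]
    have hgeomfull : ∑' n : ℕ, t ^ n = (1 - t)⁻¹ :=
      tsum_geometric_of_lt_one ht0' ht1
    rw [hrepval, hgeomfull] at hsplit
    -- geometric sum identity
    have hgeom : (∑ x ∈ Finset.range b, t ^ (a * x)) * (t ^ a - 1)
        = t ^ (a * b) - 1 := by
      simp_rw [pow_mul]
      exact geom_sum_mul (t ^ a) b
    have ht1ne : t - 1 ≠ 0 := by nlinarith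
    have htbne : t ^ b - 1 ≠ 0 := by nlinarith
    have hNReq : ∑ n ∈ NR, t ^ n
        = (1 - t)⁻¹ - (∑ x ∈ Finset.range b, t ^ (a * x)) * (1 - t ^ b)⁻¹ := by
      linarith
    rw [hNReq]
    have h1 : (1 - t)⁻¹ * (t - 1) = -1 := by
      rw [inv_mul_eq_div, div_eq_iff (by linarith : (1:ℝ) - t ≠ 0)]; ring
    have h2 : (1 - t ^ b)⁻¹ * (t ^ b - 1) = -1 := by
      rw [inv_mul_eq_div, div_eq_iff (by linarith : (1:ℝ) - t ^ b ≠ 0)]; ring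
    set S := ∑ x ∈ Finset.range b, t ^ (a * x) with hS
    have expand : ((1 - t)⁻¹ - S * (1 - t ^ b)⁻¹) * ((t ^ a - 1) * (t ^ b - 1) * (t - 1))
        = ((1 - t)⁻¹ * (t - 1)) * ((t ^ a - 1) * (t ^ b - 1))
          - ((1 - t ^ b)⁻¹ * (t ^ b - 1)) * (S * (t ^ a - 1) * (t - 1)) := by
      ring
    rw [expand, h1, h2]
    have hS' : S * (t ^ a - 1) = t ^ (a * b) - 1 := hgeom
    linear_combination (t - 1) * hS'
  -- promote to a polynomial identity
  set P : ℝ[X] := (∑ n ∈ NR, X ^ n) * ((X ^ a - 1) * (X ^ b - 1) * (X - 1)) with hP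
  set Q : ℝ[X] := (X ^ (a * b) - 1) * (X - 1) - (X ^ a - 1) * (X ^ b - 1) with hQ
  have hPQ : P = Q := by
    apply Polynomial.eq_of_infinite_eval_eq
    have hsub : Set.Ioo (0:ℝ) 1 ⊆ {x | Polynomial.eval x P = Polynomial.eval x Q} := by
      intro t ht
      have hk := key t ht
      simp only [Set.mem_setOf_eq, hP, hQ, Polynomial.eval_mul, Polynomial.eval_sub,
        Polynomial.eval_pow, Polynomial.eval_one, Polynomial.eval_X,
        Polynomial.eval_finset_sum]
      exact hk
    exact (Set.Ioo_infinite (by norm_num : (0:ℝ) < 1)).mono hsub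
  -- evaluate at t₀ = exp z
  set t₀ : ℝ := Real.exp z with ht₀
  have hexp : ∀ n : ℕ, Real.exp (n * z) = t₀ ^ n := by
    intro n; rw [ht₀, ← Real.exp_nat_mul]
  have hEa : Real.exp ((a:ℝ) * z) = t₀ ^ a := hexp a
  have hEb : Real.exp ((b:ℝ) * z) = t₀ ^ b := hexp b
  have hEab : Real.exp ((a:ℝ) * (b:ℝ) * z) = t₀ ^ (a * b) := by
    have := hexp (a * b)
    push_cast at this
    exact this
  have hne : ∀ m : ℕ, m ≠ 0 → t₀ ^ m - 1 ≠ 0 := by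
    intro m hm
    have : t₀ ^ m = Real.exp ((m : ℝ) * z) := (hexp m).symm
    rw [this]
    intro hcon
    have : Real.exp ((m:ℝ) * z) = 1 := by linarith
    rw [Real.exp_eq_one_iff] at this
    have hmne : (m : ℝ) ≠ 0 := by exact_mod_cast hm
    exact hz ((mul_eq_zero.mp this).resolve_left hmne)
  have hane : t₀ ^ a - 1 ≠ 0 := hne a (by omega)
  have hbne : t₀ ^ b - 1 ≠ 0 := hne b (by omega)
  have h1ne : t₀ - 1 ≠ 0 := by
    have := hne 1 one_ne_zero
    simpa using this
  have hEval := congrArg (Polynomial.eval t₀) hPQ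
  simp only [hP, hQ, Polynomial.eval_mul, Polynomial.eval_sub, Polynomial.eval_pow,
    Polynomial.eval_one, Polynomial.eval_X, Polynomial.eval_finset_sum] at hEval
  simp_rw [hexp]
  rw [hEab]
  field_simp
  linear_combination hEval
end

section
/- For two coprime integers a, b ≥ 2 and every integer m ≥ 2, m(m−1)·S_{m−2} = ∑_{j=0}^{m} C(m,j)·a^{m−1−j}·B_{m−j}·b^{j−1}·φ_j(a) − m·B_{m−1}, where φ_j(x) = B_j(x) − B_j (here the terms with j = 0 vanish since φ₀ ≡ 0, and the factors a^{m−1−j}, b^{j−1} may be interpreted in the rationals). -/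
/-!
Sort the non-representable numbers by residue: with `t ≡ n b⁻¹ (mod a)`, `0 ≤ t < a`, the number
`n` is non-representable iff `n < b t`, i.e. iff `n = (b t mod a) + u a` with `u < ⌊b t / a⌋`.
The `(m-2)`-th powers along each such progression telescope into
`a^(m-2) (B_{m-1}(b t / a) - B_{m-1}({b t / a})) / (m - 1)`. As `t` runs over `0, …, a-1`, the
fractional parts `{b t / a}` run over all `c / a`, so Raabe's multiplication formula turns the
second sum into `B_{m-1}`; expanding `B_{m-1}(b t / a)` in powers of `t` and summing them with
Faulhaber's formula gives the convolution.
-/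

open Finset

theorem bernoulliFun_ratCast (k : ℕ) (x : ℚ) :
    bernoulliFun k x = ((Polynomial.bernoulli k).eval x : ℚ) := by
  rw [bernoulliFun, Polynomial.eval_map_algebraMap, ← eq_ratCast (algebraMap ℚ ℝ),
    Polynomial.aeval_algebraMap_apply, Polynomial.aeval_def, Algebra.algebraMap_self,
    ← Polynomial.eval, eq_ratCast]

namespace Polynomial

theorem sum_range_add_pow_eq_bernoulli_sub (p N : ℕ) (x : ℚ) :
    ((p : ℚ) + 1) * ∑ u ∈ range N, (x + u) ^ p =
      (bernoulli (p + 1)).eval (x + N) - (bernoulli (p + 1)).eval x := by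
  induction N with
  | zero => simp
  | succ N ih =>
    have hstep := bernoulli_eval_one_add (p + 1) (x + N)
    rw [Nat.add_sub_cancel] at hstep
    rw [sum_range_succ, mul_add, ih, Nat.cast_succ, ← add_assoc, add_comm (x + N) 1, hstep]
    push_cast
    ring

theorem sum_range_natCast_add_mul_pow (p r N a : ℕ) (ha : a ≠ 0) :
    ((p : ℚ) + 1) * ∑ u ∈ range N, ((r + u * a : ℕ) : ℚ) ^ p =
      a ^ p * ((bernoulli (p + 1)).eval (((r + N * a : ℕ) : ℚ) / a) -
        (bernoulli (p + 1)).eval ((r : ℚ) / a)) := by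
  have ha' : (a : ℚ) ≠ 0 := Nat.cast_ne_zero.mpr ha
  have hscale (u : ℕ) : ((r + u * a : ℕ) : ℚ) = a * (r / a + u) := by
    push_cast; field_simp
  simp only [hscale, mul_pow, ← mul_sum]
  rw [mul_left_comm, sum_range_add_pow_eq_bernoulli_sub, mul_div_cancel_left₀ _ ha']

theorem sum_range_bernoulli_eval_mul (n a : ℕ) (w : ℚ) :
    ((n : ℚ) + 1) * ∑ t ∈ range a, (bernoulli n).eval (w * t) =
      ∑ j ∈ range (n + 2), ((n + 1).choose j : ℚ) * _root_.bernoulli (n + 1 - j) *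
        w ^ ((j : ℤ) - 1) * ((bernoulli j).eval (a : ℚ) - _root_.bernoulli j) := by
  have hfaulhaber (i : ℕ) : ∑ t ∈ range a, (t : ℚ) ^ i =
      ((bernoulli (i + 1)).eval (a : ℚ) - _root_.bernoulli (i + 1)) / (i + 1) := by
    rw [← sum_range_pow_eq_bernoulli_sub, mul_div_cancel_left₀ _ (by positivity)]
  have hchoose (i : ℕ) : ((n : ℚ) + 1) * n.choose i = (n + 1).choose (i + 1) * (i + 1) := by
    exact_mod_cast Nat.add_one_mul_choose_eq n i
  have hexpand : ∑ t ∈ range a, (bernoulli n).eval (w * t) =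
      ∑ i ∈ range (n + 1), _root_.bernoulli (n - i) * n.choose i * w ^ i *
        ∑ t ∈ range a, (t : ℚ) ^ i := by
    simp only [bernoulli_def, eval_finsetSum, eval_monomial, mul_pow, mul_sum]
    rw [sum_comm]
    exact sum_congr rfl fun i _ => sum_congr rfl fun t _ => by ring
  rw [hexpand, sum_range_succ' _ (n + 1), mul_sum]
  simp only [Nat.cast_zero, bernoulli_zero, eval_one, _root_.bernoulli_zero, sub_self, mul_zero,
    add_zero]
  refine sum_congr rfl fun i _ => ?_
  rw [hfaulhaber, Nat.add_sub_add_right]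
  push_cast
  rw [add_sub_cancel_right, zpow_natCast]
  field_simp
  linear_combination (_root_.bernoulli (n - i) * w ^ i *
    ((bernoulli (i + 1)).eval (a : ℚ) - _root_.bernoulli (i + 1))) * hchoose i

theorem bernoulli_eval_mul (k : ℕ) {m : ℕ} (hm : m ≠ 0) (x : ℚ) :
    (bernoulli k).eval (m * x) = m ^ k / m * ∑ i ∈ range m, (bernoulli k).eval (x + i / m) := by
  have h := bernoulliFun_mul k hm x
  simp only [← Rat.cast_natCast (α := ℝ), ← Rat.cast_mul, ← Rat.cast_div, ← Rat.cast_add,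
    bernoulliFun_ratCast] at h
  exact_mod_cast h

theorem bernoulli_eq_pow_div_mul_sum_eval_div (k : ℕ) {a : ℕ} (ha : a ≠ 0) :
    _root_.bernoulli k = a ^ k / a * ∑ i ∈ range a, (bernoulli k).eval ((i : ℚ) / a) := by
  simpa using bernoulli_eval_mul k ha 0

end Polynomial

namespace Nat.Coprime

variable {a b : ℕ}

theorem injOn_mul_mod (hab : a.Coprime b) : Set.InjOn (fun t => b * t % a) (range a) := by
  intro t ht s hs hts
  simp only [coe_range, Set.mem_Iio] at ht hs
  exact (Nat.ModEq.cancel_left_of_coprime hab hts).eq_of_lt_of_lt ht hs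

theorem image_mul_mod_range (hab : a.Coprime b) :
    (range a).image (fun t => b * t % a) = range a := by
  refine eq_of_subset_of_card_le (fun c hc => ?_)
    (Finset.card_image_of_injOn hab.injOn_mul_mod).ge
  obtain ⟨t, ht, rfl⟩ := mem_image.mp hc
  exact mem_range.mpr (Nat.mod_lt _ (by simp at ht; omega))

theorem not_exists_eq_mul_add_mul_iff (hab : a.Coprime b) (ha : 0 < a) (n : ℕ) :
    (¬ ∃ x y, n = a * x + b * y) ↔ ∃ t < a, ∃ u < b * t / a, b * t % a + u * a = n := by
  have hn := Nat.mod_add_div' n a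
  constructor
  · intro hnot
    obtain ⟨t, ht, hmod⟩ : ∃ t < a, b * t % a = n % a := by
      simpa using hab.image_mul_mod_range.ge (mem_range.mpr (Nat.mod_lt n ha))
    have ht' := Nat.mod_add_div' (b * t) a
    refine ⟨t, ht, n / a, ?_, by omega⟩
    by_contra! hle
    have := Nat.mul_le_mul_right a hle
    exact hnot ⟨n / a - b * t / a, t, by rw [Nat.mul_sub, mul_comm a, mul_comm a]; omega⟩
  · rintro ⟨t, ht, u, hu, rfl⟩ ⟨x, y, hxy⟩
    have hmod : b * y ≡ b * t [MOD a] := by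
      have := congrArg (· % a) hxy
      simp only [Nat.add_mul_mod_self_right, Nat.mod_mod, Nat.mul_add_mod] at this
      exact this.symm
    have hty : t ≤ y := by
      have := (Nat.ModEq.cancel_left_of_coprime hab hmod)
      rw [Nat.ModEq, Nat.mod_eq_of_lt ht] at this
      exact this ▸ Nat.mod_le y a
    have := Nat.mul_le_mul_right a hu
    have := Nat.mul_le_mul_left b hty
    have := Nat.mod_add_div' (b * t) a
    nlinarith

end Nat.Coprime

theorem sum_eq_sum_range_sum_range_of_mem_iff {M : Type*} [AddCommMonoid M] {a b : ℕ}
    (hab : a.Coprime b) (ha : 0 < a) {NR : Finset ℕ}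
    (hNR : ∀ n, n ∈ NR ↔ 0 < n ∧ ¬ ∃ x y, n = a * x + b * y) (f : ℕ → M) :
    ∑ n ∈ NR, f n = ∑ t ∈ range a, ∑ u ∈ range (b * t / a), f (b * t % a + u * a) := by
  have hNR' : NR = ((range a).sigma fun t => range (b * t / a)).image
      fun x => b * x.1 % a + x.2 * a := by
    ext n
    have hpos (h : ¬ ∃ x y, n = a * x + b * y) : 0 < n :=
      Nat.pos_of_ne_zero fun h0 => h ⟨0, 0, by simp [h0]⟩
    rw [hNR, and_iff_right_of_imp hpos, hab.not_exists_eq_mul_add_mul_iff ha]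
    simp [and_assoc]
  rw [hNR', sum_image, sum_sigma]
  rintro ⟨t, u⟩ htu ⟨s, v⟩ hsv heq
  simp only [coe_sigma, Set.mem_sigma_iff, coe_range, Set.mem_Iio] at htu hsv heq
  obtain rfl : t = s := hab.injOn_mul_mod (by simpa using htu.1) (by simpa using hsv.1)
    (by simpa [Nat.add_mul_mod_self_right] using congrArg (· % a) heq)
  obtain rfl : u = v := Nat.eq_of_mul_eq_mul_right ha (by omega)
  rfl

theorem add_one_mul_sum_pow_eq_sum_bernoulli_eval_sub {a b : ℕ} (hab : a.Coprime b) (ha : 0 < a)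
    {NR : Finset ℕ} (hNR : ∀ n, n ∈ NR ↔ 0 < n ∧ ¬ ∃ x y, n = a * x + b * y) (p : ℕ) :
    ((p : ℚ) + 1) * ∑ n ∈ NR, (n : ℚ) ^ p =
      a ^ p * ∑ t ∈ range a, (Polynomial.bernoulli (p + 1)).eval ((b : ℚ) / a * t) -
        bernoulli (p + 1) := by
  have hresidues :
      ∑ t ∈ range a, (Polynomial.bernoulli (p + 1)).eval (((b * t % a : ℕ) : ℚ) / a) =
      ∑ c ∈ range a, (Polynomial.bernoulli (p + 1)).eval ((c : ℚ) / a) := by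
    conv_rhs => rw [← hab.image_mul_mod_range]
    rw [sum_image hab.injOn_mul_mod]
  rw [sum_eq_sum_range_sum_range_of_mem_iff hab ha hNR, mul_sum]
  calc ∑ t ∈ range a, ((p : ℚ) + 1) *
        ∑ u ∈ range (b * t / a), ((b * t % a + u * a : ℕ) : ℚ) ^ p
      = ∑ t ∈ range a, (a : ℚ) ^ p *
          ((Polynomial.bernoulli (p + 1)).eval ((b : ℚ) / a * t) -
            (Polynomial.bernoulli (p + 1)).eval (((b * t % a : ℕ) : ℚ) / a)) := by
        refine sum_congr rfl fun t _ => ?_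
        rw [Polynomial.sum_range_natCast_add_mul_pow _ _ _ _ ha.ne', Nat.mod_add_div',
          Nat.cast_mul, mul_div_right_comm]
    _ = _ := by
        rw [← mul_sum, sum_sub_distrib, hresidues, mul_sub,
          Polynomial.bernoulli_eq_pow_div_mul_sum_eval_div (p + 1) ha.ne', pow_succ,
          mul_div_cancel_right₀ _ (by positivity)]

theorem sylvester_sum_two_variable_convolution_general
    (a b : ℕ) (ha : 2 ≤ a) (hab : Nat.Coprime a b)
    (NR : Finset ℕ)
    (hNR : ∀ n : ℕ, n ∈ NR ↔ 0 < n ∧ ¬ ∃ x y : ℕ, n = a * x + b * y)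
    (m : ℕ) (hm : 2 ≤ m) :
    (m : ℚ) * ((m : ℚ) - 1) * ∑ n ∈ NR, (n : ℚ) ^ (m - 2) =
      ∑ j ∈ Finset.range (m + 1),
        (m.choose j : ℚ) * (a : ℚ) ^ ((m : ℤ) - 1 - (j : ℤ)) * bernoulli (m - j) *
          (b : ℚ) ^ ((j : ℤ) - 1) *
          ((Polynomial.bernoulli j).eval (a : ℚ) - bernoulli j)
      - (m : ℚ) * bernoulli (m - 1) := by
  obtain ⟨p, rfl⟩ : ∃ p, m = p + 2 := ⟨m - 2, by omega⟩
  have ha0 : (a : ℚ) ≠ 0 := by positivity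
  have hpow (j : ℕ) : (a : ℚ) ^ p * ((b : ℚ) / a) ^ ((j : ℤ) - 1) =
      (a : ℚ) ^ (((p + 2 : ℕ) : ℤ) - 1 - j) * (b : ℚ) ^ ((j : ℤ) - 1) := by
    rw [show (((p + 2 : ℕ) : ℤ) - 1 - j) = p - ((j : ℤ) - 1) by push_cast; ring,
      zpow_sub₀ ha0, zpow_natCast, div_zpow]
    ring
  have hsylvester := add_one_mul_sum_pow_eq_sum_bernoulli_eval_sub hab (by omega) hNR p
  have hexpand := Polynomial.sum_range_bernoulli_eval_mul (p + 1) a ((b : ℚ) / a)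
  have hrhs : ∑ j ∈ range (p + 2 + 1),
      ((p + 2).choose j : ℚ) * (a : ℚ) ^ (((p + 2 : ℕ) : ℤ) - 1 - j) * bernoulli (p + 2 - j) *
        (b : ℚ) ^ ((j : ℤ) - 1) * ((Polynomial.bernoulli j).eval (a : ℚ) - bernoulli j) =
      (a : ℚ) ^ p * (((p + 1 : ℕ) : ℚ) + 1) *
        ∑ t ∈ range a, (Polynomial.bernoulli (p + 1)).eval ((b : ℚ) / a * t) := by
    rw [mul_assoc, hexpand, mul_sum]
    refine sum_congr rfl fun j _ => ?_
    rw [show p + 1 + 1 = p + 2 from rfl]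
    linear_combination (-((p + 2).choose j : ℚ) * bernoulli (p + 2 - j) *
      ((Polynomial.bernoulli j).eval (a : ℚ) - bernoulli j)) * hpow j
  rw [hrhs, Nat.add_sub_cancel, show p + 2 - 1 = p + 1 by omega]
  push_cast
  linear_combination ((p : ℚ) + 2) * hsylvester

/-- Equation (5.x.1b): for coprime `a, b ≥ 2` and `m ≥ 2`,
`m(m−1)·S_{m−2} = ∑_{j=0}^{m} C(m,j)·a^{m−1−j}·B_{m−j}·b^{j−1}·φ_j(a) − m·B_{m−1}`,
where `φ_j(x) = B_j(x) − B_j` is the Bernoullian polynomial, and the powers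
`a^{m−1−j}`, `b^{j−1}` are interpreted in `ℚ` (integer exponents). -/
theorem sylvester_sum_two_variable_convolution
    (a b : ℕ) (ha : 2 ≤ a) (hb : 2 ≤ b) (hab : Nat.Coprime a b)
    (NR : Finset ℕ)
    (hNR : ∀ n : ℕ, n ∈ NR ↔ 0 < n ∧ ¬ ∃ x y : ℕ, n = a * x + b * y)
    (m : ℕ) (hm : 2 ≤ m) :
    (m : ℚ) * ((m : ℚ) - 1) * ∑ n ∈ NR, (n : ℚ) ^ (m - 2) =
      ∑ j ∈ Finset.range (m + 1),
        (m.choose j : ℚ) * (a : ℚ) ^ ((m : ℤ) - 1 - (j : ℤ)) * bernoulli (m - j) *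
          (b : ℚ) ^ ((j : ℤ) - 1) *
          ((Polynomial.bernoulli j).eval (a : ℚ) - bernoulli j)
      - (m : ℚ) * bernoulli (m - 1) :=
  sylvester_sum_two_variable_convolution_general a b ha hab NR hNR m hm
end

section
/- For two coprime integers a, b ≥ 2 and every integer m ≥ 1, S_{m−1} = (1/(m(m+1)))·∑_{i=0}^{m} ∑_{j=0}^{m−i} C(m+1,i)·C(m+1−i,j)·B_i·B_j·a^{m−j}·b^{m−i} − B_m/m (Rödseth's formula), where B_i denotes the i-th Bernoulli number. -/
/-!
The least representable number congruent to `n` modulo `b` is `a * x`, where `x < b` solves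
`a * x ≡ n [MOD b]`; so the non-representable numbers of that residue class are
`a * x % b + b * k` for `k < a * x / b`. Along such a progression, `B_m (t + 1) - B_m t = m t^(m-1)`
telescopes the power sum into `b^(m-1) (B_m (a x / b) - B_m ((a x % b) / b))`. As `x` runs over
`range b`, so does `a * x % b`, and `b^(m-1) ∑_{x < b} B_m (c x / b)` is evaluated by expanding `B_m`
and applying Faulhaber's formula to each `∑_{x < b} x^k`; for `c = 1` the result collapses to `B_m`.
-/

open Finset

namespace Nat

variable {a b : ℕ}

theorem eq_of_mul_mod_eq_mul_mod (hab : a.Coprime b) {x y : ℕ} (hx : x < b) (hy : y < b)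
    (h : a * x % b = a * y % b) : x = y := by
  have hxy : x ≡ y [MOD b] := ModEq.cancel_left_of_coprime (coprime_comm.mp hab) h
  rwa [ModEq, mod_eq_of_lt hx, mod_eq_of_lt hy] at hxy

theorem exists_eq_mul_add_mul_iff_mul_le (hab : a.Coprime b) {x n : ℕ} (hx : x < b)
    (hxn : a * x % b = n % b) : (∃ u v, n = a * u + b * v) ↔ a * x ≤ n := by
  constructor
  · rintro ⟨u, v, rfl⟩
    have hux : u % b = x := by
      refine eq_of_mul_mod_eq_mul_mod hab (mod_lt _ (by omega)) hx ?_
      rw [hxn, add_mul_mod_self_left, mul_mod_mod]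
    have : x ≤ u := hux ▸ mod_le u b
    nlinarith
  · intro h
    obtain ⟨k, hk⟩ : b ∣ n - a * x := (modEq_iff_dvd' h).mp hxn
    exact ⟨x, k, by omega⟩

theorem sum_range_mul_mod {M : Type*} [AddCommMonoid M] (hab : a.Coprime b) (f : ℕ → M) :
    ∑ x ∈ range b, f (a * x % b) = ∑ x ∈ range b, f x := by
  refine sum_nbij (a * · % b) (fun x hx => mem_range.2 (mod_lt _ (by simp at hx; omega)))
    (fun x hx y hy h => eq_of_mul_mod_eq_mul_mod hab (mem_range.1 hx) (mem_range.1 hy) h)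
    (fun r hr => ?_) (fun _ _ => rfl)
  have hr : r < b := mem_range.1 hr
  obtain ⟨x, hx, hxr⟩ := exists_mul_mod_eq_of_coprime r hab (by omega)
  exact ⟨x, mem_range.2 hx, by simp [hxr, mod_eq_of_lt hr]⟩

theorem sum_nonrepresentable_eq_sum_mod_add_mul {M : Type*} [AddCommMonoid M]
    (hab : a.Coprime b) (hb : b ≠ 0)
    {NR : Finset ℕ} (hNR : ∀ n, n ∈ NR ↔ ¬ ∃ u v, n = a * u + b * v) (f : ℕ → M) :
    ∑ n ∈ NR, f n = ∑ x ∈ range b, ∑ k ∈ range (a * x / b), f (a * x % b + b * k) := by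
  rw [sum_sigma']
  symm
  refine sum_bij (fun p _ => a * p.1 % b + b * p.2) ?_ ?_ ?_ (fun _ _ => rfl)
  · rintro ⟨x, k⟩ hp
    simp only [mem_sigma, mem_range] at hp
    rw [hNR, exists_eq_mul_add_mul_iff_mul_le hab hp.1 (by rw [add_mul_mod_self_left, mod_mod])]
    have := mod_add_div (a * x) b
    have : b * (k + 1) ≤ b * (a * x / b) := Nat.mul_le_mul_left b hp.2
    nlinarith
  · rintro ⟨x, k⟩ hp ⟨y, l⟩ hq h
    simp only [mem_sigma, mem_range] at hp hq h
    obtain rfl : x = y := eq_of_mul_mod_eq_mul_mod hab hp.1 hq.1 (by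
      simpa [add_mul_mod_self_left] using congrArg (· % b) h)
    rw [Nat.eq_of_mul_eq_mul_left (by omega) (Nat.add_left_cancel h)]
  · intro n hn
    obtain ⟨x, hx, hxn⟩ := exists_mul_mod_eq_of_coprime n hab hb
    have hlt : n < a * x :=
      not_le.1 ((exists_eq_mul_add_mul_iff_mul_le hab hx hxn).not.1 ((hNR n).1 hn))
    refine ⟨⟨x, n / b⟩, ?_, by simp only [hxn, mod_add_div]⟩
    simp only [mem_sigma, mem_range]
    refine ⟨hx, Nat.lt_of_mul_lt_mul_left (a := b) ?_⟩
    have := mod_add_div (a * x) b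
    have := mod_add_div n b
    omega

theorem choose_mul_choose_sub_comm (n i j : ℕ) :
    n.choose i * (n - i).choose j = n.choose j * (n - j).choose i := by
  have hi := choose_mul (n := n) (le_add_right i j)
  have hj := choose_mul (n := n) (le_add_left j i)
  rw [Nat.add_sub_cancel_left] at hi
  rw [Nat.add_sub_cancel] at hj
  rw [← hi, ← hj, choose_symm_add]

theorem cast_choose_div_sub_add_one {m i : ℕ} (hi : i ≤ m) :
    (m.choose i : ℚ) / ((m - i : ℕ) + 1) = (m + 1).choose i / (m + 1) := by
  rw [div_eq_div_iff (by positivity) (by positivity)]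
  exact_mod_cast (by rw [choose_mul_succ_eq]; congr 1; omega :
    m.choose i * (m + 1) = (m + 1).choose i * (m - i + 1))

end Nat

theorem Finset.sum_range_sum_range_sub_comm {M : Type*} [AddCommMonoid M] (m : ℕ)
    (f : ℕ → ℕ → M) :
    ∑ i ∈ range (m + 1), ∑ j ∈ range (m - i + 1), f i j =
      ∑ i ∈ range (m + 1), ∑ j ∈ range (m - i + 1), f j i := by
  rw [sum_sigma', sum_sigma']
  refine sum_bij' (fun p _ => ⟨p.2, p.1⟩) (fun p _ => ⟨p.2, p.1⟩) ?_ ?_ ?_ ?_ ?_ <;>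
    simp only [mem_sigma, mem_range, implies_true] <;> omega

namespace Polynomial

theorem bernoulli_eval_eq_sum (m : ℕ) (t : ℚ) :
    (bernoulli m).eval t = ∑ i ∈ range (m + 1), _root_.bernoulli i * m.choose i * t ^ (m - i) := by
  simp [bernoulli, eval_finsetSum]

theorem mul_sum_range_add_pow_eq_bernoulli_sub (m K : ℕ) (z : ℚ) :
    m * ∑ k ∈ range K, (z + k) ^ (m - 1) = (bernoulli m).eval (z + K) - (bernoulli m).eval z := by
  induction K with
  | zero => simp
  | succ K ih =>
    rw [sum_range_succ, mul_add, ih, Nat.cast_succ, ← add_assoc, add_comm _ (1 : ℚ),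
      bernoulli_eval_one_add]
    ring

theorem mul_sum_range_mod_add_mul_pow_eq_bernoulli_sub (m : ℕ) {b : ℕ} (hb : b ≠ 0) (n : ℕ) :
    m * ∑ k ∈ range (n / b), ((n % b + b * k : ℕ) : ℚ) ^ (m - 1) =
      (b : ℚ) ^ (m - 1) * ((bernoulli m).eval (n / b : ℚ) - (bernoulli m).eval ((n % b : ℕ) / b : ℚ)) := by
  have hbQ : (b : ℚ) ≠ 0 := Nat.cast_ne_zero.2 hb
  have hterm (k : ℕ) : ((n % b + b * k : ℕ) : ℚ) ^ (m - 1) =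
      (b : ℚ) ^ (m - 1) * (((n % b : ℕ) : ℚ) / b + k) ^ (m - 1) := by
    rw [← mul_pow]; push_cast; field_simp
  have hn : ((n % b : ℕ) : ℚ) / b + ((n / b : ℕ) : ℚ) = (n / b : ℚ) := by
    rw [div_add' _ _ _ hbQ]
    exact_mod_cast congrArg (fun t : ℕ => (t : ℚ) / b) (Nat.mod_add_div' n b)
  simp_rw [hterm, ← mul_sum, mul_left_comm (m : ℚ), mul_sum_range_add_pow_eq_bernoulli_sub, hn]

end Polynomial

noncomputable def rodsethSum (m : ℕ) (a b : ℚ) : ℚ :=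
  ∑ i ∈ range (m + 1), ∑ j ∈ range (m - i + 1),
    ((m + 1).choose i : ℚ) * ((m + 1 - i).choose j : ℚ) *
      bernoulli i * bernoulli j * a ^ (m - j) * b ^ (m - i)

theorem rodsethSum_comm (m : ℕ) (a b : ℚ) : rodsethSum m a b = rodsethSum m b a := by
  rw [rodsethSum, sum_range_sum_range_sub_comm]
  refine sum_congr rfl fun i _ => sum_congr rfl fun j _ => ?_
  rw [show ((m + 1).choose j : ℚ) * ((m + 1 - j).choose i : ℚ) =
    ((m + 1).choose i : ℚ) * ((m + 1 - i).choose j : ℚ) by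
      exact_mod_cast (Nat.choose_mul_choose_sub_comm (m + 1) i j).symm]
  ring

theorem rodsethSum_one_left (m : ℕ) (b : ℚ) : rodsethSum m 1 b = (m + 1) * bernoulli m := by
  have hinner (i : ℕ) (hi : i ∈ range (m + 1)) :
      ∑ j ∈ range (m - i + 1), ((m + 1).choose i : ℚ) * ((m + 1 - i).choose j : ℚ) *
        bernoulli i * bernoulli j * 1 ^ (m - j) * b ^ (m - i) =
      if i = m then (m + 1) * bernoulli m else 0 := by
    rw [mem_range] at hi
    rw [show m - i + 1 = m + 1 - i by omega]
    calc _ = ((m + 1).choose i : ℚ) * bernoulli i * b ^ (m - i) *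
          ∑ j ∈ range (m + 1 - i), ((m + 1 - i).choose j : ℚ) * bernoulli j := by
          rw [mul_sum]; exact sum_congr rfl fun _ _ => by ring
      _ = _ := by
          rw [sum_bernoulli]
          split_ifs with h1 h2 h2 <;> first | omega | simp [h2]
  rw [rodsethSum, sum_congr rfl hinner, sum_ite_eq' _ _ _, if_pos (self_mem_range_succ m)]

theorem Polynomial.pow_pred_mul_sum_range_bernoulli_eval_mul_div {m : ℕ} (hm : 1 ≤ m) {b : ℕ}
    (hb : b ≠ 0) (c : ℚ) :
    (b : ℚ) ^ (m - 1) * ∑ x ∈ range b, (bernoulli m).eval (c * x / b) =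
      rodsethSum m b c / (m + 1) := by
  have hpow {i j : ℕ} (hi : i ≤ m) (hj : j ≤ m - i) :
      (b : ℚ) ^ (m - 1) * (c / b) ^ (m - i) * (b : ℚ) ^ (m - i + 1 - j) =
        (b : ℚ) ^ (m - j) * c ^ (m - i) := by
    rw [div_pow, mul_comm ((b : ℚ) ^ (m - 1)), mul_assoc, ← pow_add,
      show m - 1 + (m - i + 1 - j) = m - j + (m - i) by omega, pow_add]
    field_simp
  simp_rw [bernoulli_eval_eq_sum, mul_div_right_comm c, mul_pow]
  rw [sum_comm, mul_sum, rodsethSum, sum_div]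
  refine sum_congr rfl fun i hi => ?_
  rw [mem_range] at hi
  rw [← mul_sum, ← mul_sum, sum_range_pow, mul_sum, mul_sum, mul_sum, sum_div,
    show m + 1 - i = m - i + 1 by omega]
  refine sum_congr rfl fun j hj => ?_
  rw [mem_range] at hj
  calc _ = _root_.bernoulli i * _root_.bernoulli j * ((m - i + 1).choose j : ℚ) *
        ((b : ℚ) ^ (m - 1) * (c / b) ^ (m - i) * (b : ℚ) ^ (m - i + 1 - j)) *
        ((m.choose i : ℚ) / ((m - i : ℕ) + 1)) := by ring
    _ = _ := by rw [hpow (by omega) (by omega), Nat.cast_choose_div_sub_add_one (by omega)]; ring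

theorem rodseth_formula_general
    (a b : ℕ) (hb : 2 ≤ b) (hab : Nat.Coprime a b)
    (NR : Finset ℕ)
    (hNR : ∀ n : ℕ, n ∈ NR ↔ 0 < n ∧ ¬ ∃ x y : ℕ, n = a * x + b * y)
    (m : ℕ) (hm : 1 ≤ m) :
    ∑ n ∈ NR, (n : ℚ) ^ (m - 1) =
      (1 / ((m : ℚ) * ((m : ℚ) + 1))) *
        ∑ i ∈ Finset.range (m + 1), ∑ j ∈ Finset.range (m - i + 1),
          ((m + 1).choose i : ℚ) * ((m + 1 - i).choose j : ℚ) *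
            bernoulli i * bernoulli j * (a : ℚ) ^ (m - j) * (b : ℚ) ^ (m - i)
      - bernoulli m / (m : ℚ) := by
  have hb0 : b ≠ 0 := by omega
  have hNR' (n : ℕ) : n ∈ NR ↔ ¬ ∃ x y : ℕ, n = a * x + b * y := by
    refine (hNR n).trans (and_iff_right_of_imp fun h => Nat.pos_of_ne_zero ?_)
    rintro rfl
    exact h ⟨0, 0, rfl⟩
  have key : (m : ℚ) * ∑ n ∈ NR, (n : ℚ) ^ (m - 1) = rodsethSum m a b / (m + 1) - bernoulli m := by
    have hres := Nat.sum_range_mul_mod hab fun r => (Polynomial.bernoulli m).eval ((r : ℚ) / b)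
    have hexp_a := Polynomial.pow_pred_mul_sum_range_bernoulli_eval_mul_div hm hb0 (a : ℚ)
    have hexp_one := Polynomial.pow_pred_mul_sum_range_bernoulli_eval_mul_div hm hb0 1
    simp only [one_mul] at hexp_one
    rw [Nat.sum_nonrepresentable_eq_sum_mod_add_mul hab hb0 hNR', mul_sum]
    simp_rw [Polynomial.mul_sum_range_mod_add_mul_pow_eq_bernoulli_sub m hb0]
    rw [← mul_sum, sum_sub_distrib, hres, mul_sub]
    push_cast
    rw [hexp_a, hexp_one, rodsethSum_comm m b a, rodsethSum_comm m b 1, rodsethSum_one_left]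
    field_simp
  have hm0 : (m : ℚ) ≠ 0 := by positivity
  rw [eq_div_of_mul_eq hm0 ((mul_comm _ _).trans key)]
  change _ = 1 / ((m : ℚ) * (m + 1)) * rodsethSum m a b - _
  rw [one_div, mul_inv]
  ring

/-- Rödseth's formula: for coprime `a, b ≥ 2` and `m ≥ 1`,
`S_{m−1} = (1/(m(m+1)))·∑_{i=0}^{m} ∑_{j=0}^{m−i} C(m+1,i)·C(m+1−i,j)·B_i·B_j·a^{m−j}·b^{m−i} − B_m/m`,
where `B_i` is the `i`-th Bernoulli number (with `B₁ = −1/2`). -/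
theorem rodseth_formula
    (a b : ℕ) (ha : 2 ≤ a) (hb : 2 ≤ b) (hab : Nat.Coprime a b)
    (NR : Finset ℕ)
    (hNR : ∀ n : ℕ, n ∈ NR ↔ 0 < n ∧ ¬ ∃ x y : ℕ, n = a * x + b * y)
    (m : ℕ) (hm : 1 ≤ m) :
    ∑ n ∈ NR, (n : ℚ) ^ (m - 1) =
      (1 / ((m : ℚ) * ((m : ℚ) + 1))) *
        ∑ i ∈ Finset.range (m + 1), ∑ j ∈ Finset.range (m - i + 1),
          ((m + 1).choose i : ℚ) * ((m + 1 - i).choose j : ℚ) *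
            bernoulli i * bernoulli j * (a : ℚ) ^ (m - j) * (b : ℚ) ^ (m - i)
      - bernoulli m / (m : ℚ) :=
  rodseth_formula_general a b hb hab NR hNR m hm
end

section
/- For two coprime integers a, b ≥ 2, the first Sylvester sum is S₁ = (1/12)·(a−1)(b−1)(2ab − a − b − 1). -/
open Finset

private lemma sylv_gauss1 (b : ℕ) : ∑ x ∈ range b, (x : ℚ) = b * (b - 1) / 2 := by
  induction b with
  | zero => simp
  | succ n ih => rw [Finset.sum_range_succ, ih]; push_cast; ring

private lemma sylv_gauss2 (b : ℕ) :
    ∑ x ∈ range b, (x : ℚ) ^ 2 = b * (b - 1) * (2 * b - 1) / 6 := by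
  induction b with
  | zero => simp
  | succ n ih => rw [Finset.sum_range_succ, ih]; push_cast; ring

private lemma sylv_icc_sum (k : ℕ) : ∑ z ∈ Finset.Icc 1 k, (z : ℚ) = k * (k + 1) / 2 := by
  have h : ∑ z ∈ Finset.Icc 1 k, (z : ℚ) = ∑ z ∈ range (k + 1), (z : ℚ) := by
    apply Finset.sum_subset
    · intro z hz; simp only [Finset.mem_Icc] at hz; simp only [Finset.mem_range]; omega
    · intro z hz hz'
      simp only [Finset.mem_range] at hz
      simp only [Finset.mem_Icc] at hz'
      have : z = 0 := by omega
      simp [this]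
  rw [h, sylv_gauss1]; push_cast; ring

/-- Summing `f ∘ (x ↦ a*x % b)` over `range b` is the same as summing `f`,
since multiplication by `a` permutes residues mod `b`. -/
private lemma sylv_perm_sum (a b : ℕ) (hb : 0 < b) (hab : Nat.Coprime a b) (f : ℕ → ℚ) :
    ∑ x ∈ range b, f (a * x % b) = ∑ x ∈ range b, f x := by
  have hinj : ∀ x ∈ range b, ∀ y ∈ range b, a * x % b = a * y % b → x = y := by
    intro x hx y hy h
    simp only [Finset.mem_range] at hx hy
    have h' : x ≡ y [MOD b] := Nat.ModEq.cancel_left_of_coprime hab.symm h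
    have : x % b = y % b := h'
    rwa [Nat.mod_eq_of_lt hx, Nat.mod_eq_of_lt hy] at this
  have himg : (range b).image (fun x => a * x % b) = range b := by
    apply Finset.eq_of_subset_of_card_le
    · intro y hy
      simp only [Finset.mem_image] at hy
      obtain ⟨x, _, rfl⟩ := hy
      exact Finset.mem_range.2 (Nat.mod_lt _ hb)
    · rw [Finset.card_image_of_injOn fun x hx y hy h => hinj x hx y hy h]
  calc ∑ x ∈ range b, f (a * x % b)
      = ∑ y ∈ (range b).image (fun x => a * x % b), f y := (Finset.sum_image hinj).symm
    _ = ∑ x ∈ range b, f x := by rw [himg]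

/-- For coprime `a, b ≥ 2`, the first Sylvester sum is
`S₁ = (1/12)·(a−1)(b−1)(2ab − a − b − 1)`. -/
theorem sylvester_sum_one_two_variable
    (a b : ℕ) (ha : 2 ≤ a) (hb : 2 ≤ b) (hab : Nat.Coprime a b)
    (NR : Finset ℕ)
    (hNR : ∀ n : ℕ, n ∈ NR ↔ 0 < n ∧ ¬ ∃ x y : ℕ, n = a * x + b * y) :
    ∑ n ∈ NR, (n : ℚ) =
      (1 / 12) * ((a : ℚ) - 1) * ((b : ℚ) - 1) *
        (2 * (a : ℚ) * (b : ℚ) - (a : ℚ) - (b : ℚ) - 1) := by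
  have hb0 : 0 < b := by omega
  have ha0 : 0 < a := by omega
  haveI : NeZero b := ⟨by omega⟩
  have hcop : IsCoprime (b : ℤ) (a : ℤ) := Nat.isCoprime_iff_coprime.mpr hab.symm
  set T : Finset (ℕ × ℕ) :=
    ((range b) ×ˢ (range a)).filter (fun p => 0 < p.2 ∧ b * p.2 < a * p.1) with hT
  -- Characterization: NR is the image of T under (x, z) ↦ a*x − b*z
  have hNReq : NR = T.image (fun p => a * p.1 - b * p.2) := by
    ext n
    rw [hNR, Finset.mem_image]
    constructor
    · rintro ⟨hn, hrep⟩
      -- choose x < b with a*x ≡ n [MOD b]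
      set u : ZMod b := (n : ZMod b) * (a : ZMod b)⁻¹ with hu
      set x : ℕ := u.val with hxdef
      have hx : x < b := ZMod.val_lt u
      have haunit : IsUnit ((a : ℕ) : ZMod b) := by
        have := (ZMod.unitOfCoprime a hab).isUnit
        rwa [ZMod.coe_unitOfCoprime] at this
      have hax : ((a * x : ℕ) : ZMod b) = (n : ZMod b) := by
        push_cast
        rw [hxdef, ZMod.natCast_val, ZMod.cast_id, hu]
        rw [mul_comm ((n : ZMod b)) _, ← mul_assoc, ZMod.mul_inv_of_unit _ haunit, one_mul]
      have hmod : a * x ≡ n [MOD b] := (ZMod.natCast_eq_natCast_iff _ _ _).mp hax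
      have hlt : n < a * x := by
        by_contra h
        push_neg at h
        obtain ⟨y, hy⟩ := (Nat.modEq_iff_dvd' h).mp hmod
        exact hrep ⟨x, y, by omega⟩
      obtain ⟨z, hz⟩ := (Nat.modEq_iff_dvd' hlt.le).mp hmod.symm
      have hbz : b * z < a * x := by rw [← hz]; omega
      have hzpos : 0 < z := by
        rcases Nat.eq_zero_or_pos z with h0 | h0
        · rw [h0, Nat.mul_zero] at hz; omega
        · exact h0
      have hax_lt : a * x < a * b := mul_lt_mul_of_pos_left hx ha0
      have hza : z < a := by
        have h1 : b * z < b * a := by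
          calc b * z < a * x := hbz
            _ < a * b := hax_lt
            _ = b * a := Nat.mul_comm a b
        exact Nat.lt_of_mul_lt_mul_left h1
      refine ⟨(x, z), ?_, ?_⟩
      · rw [hT]
        simp only [Finset.mem_filter, Finset.mem_product, Finset.mem_range]
        exact ⟨⟨hx, hza⟩, hzpos, hbz⟩
      · show a * x - b * z = n
        rw [← hz]; omega
    · rintro ⟨⟨x, z⟩, hp, rfl⟩
      rw [hT] at hp
      simp only [Finset.mem_filter, Finset.mem_product, Finset.mem_range] at hp
      obtain ⟨⟨hx, hz⟩, hzpos, hbz⟩ := hp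
      dsimp only
      have hbzpos : 0 < b * z := Nat.mul_pos hb0 hzpos
      refine ⟨by omega, ?_⟩
      rintro ⟨u, v, huv⟩
      have hle : b * z ≤ a * x := hbz.le
      have hux : u < x := by
        by_contra h
        push_neg at h
        have h1 : a * x ≤ a * u := Nat.mul_le_mul_left a h
        omega
      zify [hle] at huv
      have key : (a : ℤ) * ((x : ℤ) - (u : ℤ)) = (b : ℤ) * ((v : ℤ) + (z : ℤ)) := by
        linear_combination huv
      have hdvd : (b : ℤ) ∣ ((x : ℤ) - (u : ℤ)) :=
        hcop.dvd_of_dvd_mul_left ⟨_, key⟩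
      have habs : |(x : ℤ) - (u : ℤ)| < (b : ℤ) := by
        rw [abs_of_nonneg (by omega : (0 : ℤ) ≤ (x : ℤ) - (u : ℤ))]
        omega
      have := Int.eq_zero_of_abs_lt_dvd hdvd habs
      omega
  -- Injectivity of the parametrization
  have hginj : ∀ p ∈ T, ∀ q ∈ T, a * p.1 - b * p.2 = a * q.1 - b * q.2 → p = q := by
    rintro ⟨x₁, z₁⟩ hp ⟨x₂, z₂⟩ hq h
    rw [hT] at hp hq
    simp only [Finset.mem_filter, Finset.mem_product, Finset.mem_range] at hp hq
    obtain ⟨⟨hx₁, _⟩, _, hbz₁⟩ := hp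
    obtain ⟨⟨hx₂, _⟩, _, hbz₂⟩ := hq
    simp only at h
    zify [hbz₁.le, hbz₂.le] at h
    have key : (a : ℤ) * ((x₁ : ℤ) - (x₂ : ℤ)) = (b : ℤ) * ((z₁ : ℤ) - (z₂ : ℤ)) := by
      linear_combination h
    have hdvd : (b : ℤ) ∣ ((x₁ : ℤ) - (x₂ : ℤ)) :=
      hcop.dvd_of_dvd_mul_left ⟨_, key⟩
    have habs : |(x₁ : ℤ) - (x₂ : ℤ)| < (b : ℤ) := by
      rcases abs_cases ((x₁ : ℤ) - (x₂ : ℤ)) with ⟨he, _⟩ | ⟨he, _⟩ <;> rw [he] <;> omega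
    have hx12 : (x₁ : ℤ) - (x₂ : ℤ) = 0 := Int.eq_zero_of_abs_lt_dvd hdvd habs
    have hxeq : x₁ = x₂ := by omega
    have hb0' : (b : ℤ) ≠ 0 := by exact_mod_cast hb0.ne'
    have hzeq : z₁ = z₂ := by
      have : (b : ℤ) * ((z₁ : ℤ) - (z₂ : ℤ)) = 0 := by rw [← key, hx12, mul_zero]
      rcases mul_eq_zero.mp this with h' | h'
      · exact absurd h' hb0'
      · omega
    rw [hxeq, hzeq]
  -- Rewrite the sum as a double sum
  rw [hNReq, Finset.sum_image hginj, hT, Finset.sum_filter, Finset.sum_product]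
  -- Per-x evaluation of the inner sum
  have hsum_x : ∀ x ∈ range b,
      (∑ z ∈ range a, if 0 < z ∧ b * z < a * x then ((a * x - b * z : ℕ) : ℚ) else 0)
        = (((a : ℚ) * x) ^ 2 - ((a * x % b : ℕ) : ℚ) ^ 2) / (2 * b)
            - ((a : ℚ) * x - ((a * x % b : ℕ) : ℚ)) / 2 := by
    intro x hx
    rw [Finset.mem_range] at hx
    set k : ℕ := a * x / b with hk
    set r : ℕ := a * x % b with hr
    have haxkr : b * k + r = a * x := Nat.div_add_mod (a * x) b
    have hset : (range a).filter (fun z => 0 < z ∧ b * z < a * x) = Finset.Icc 1 k := by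
      ext z
      simp only [Finset.mem_filter, Finset.mem_range, Finset.mem_Icc]
      constructor
      · rintro ⟨hza, hzpos, hbz⟩
        exact ⟨hzpos, (Nat.le_div_iff_mul_le hb0).mpr (by rw [Nat.mul_comm z b]; omega)⟩
      · rintro ⟨h1, h2⟩
        have hmul : z * b ≤ a * x := (Nat.le_div_iff_mul_le hb0).mp h2
        have hne : b * z ≠ a * x := by
          intro he
          have : b ∣ a * x := ⟨z, he.symm⟩
          have hbx : b ∣ x := (Nat.Coprime.dvd_of_dvd_mul_left hab.symm) this
          have hx0 : x = 0 := Nat.eq_zero_of_dvd_of_lt hbx hx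
          subst hx0
          simp at he
          omega
        rw [Nat.mul_comm z b] at hmul
        have hbz : b * z < a * x := by omega
        have hax_lt : a * x < a * b := mul_lt_mul_of_pos_left hx ha0
        have hza : z < a := by
          have h1' : b * z < b * a := by
            calc b * z < a * x := hbz
              _ < a * b := hax_lt
              _ = b * a := Nat.mul_comm a b
          exact Nat.lt_of_mul_lt_mul_left h1'
        exact ⟨hza, h1, hbz⟩
    rw [← Finset.sum_filter, hset]
    have hcast : ∀ z ∈ Finset.Icc 1 k, ((a * x - b * z : ℕ) : ℚ) = (a : ℚ) * x - b * z := by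
      intro z hz
      rw [Finset.mem_Icc] at hz
      have hle : b * z ≤ a * x := by
        calc b * z ≤ b * k := Nat.mul_le_mul_left b hz.2
          _ ≤ b * k + r := Nat.le_add_right _ _
          _ = a * x := haxkr
      rw [Nat.cast_sub hle]
      push_cast
      ring
    rw [Finset.sum_congr rfl hcast, Finset.sum_sub_distrib, Finset.sum_const,
      Nat.card_Icc, ← Finset.mul_sum, sylv_icc_sum]
    have haxq : (a : ℚ) * x = b * k + r := by exact_mod_cast haxkr.symm
    have hbq : (b : ℚ) ≠ 0 := by positivity
    rw [haxq]
    simp only [nsmul_eq_mul]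
    push_cast
    field_simp
    ring
  rw [Finset.sum_congr rfl hsum_x]
  -- Pull the sums apart and use the permutation of residues
  rw [Finset.sum_sub_distrib, ← Finset.sum_div, ← Finset.sum_div,
    Finset.sum_sub_distrib, Finset.sum_sub_distrib]
  have e1 : ∑ x ∈ range b, ((a * x % b : ℕ) : ℚ) ^ 2 = ∑ x ∈ range b, (x : ℚ) ^ 2 :=
    sylv_perm_sum a b hb0 hab (fun t => (t : ℚ) ^ 2)
  have e2 : ∑ x ∈ range b, ((a * x % b : ℕ) : ℚ) = ∑ x ∈ range b, (x : ℚ) :=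
    sylv_perm_sum a b hb0 hab (fun t => (t : ℚ))
  have e3 : ∑ x ∈ range b, ((a : ℚ) * x) ^ 2 = (a : ℚ) ^ 2 * ∑ x ∈ range b, (x : ℚ) ^ 2 := by
    rw [Finset.mul_sum]
    exact Finset.sum_congr rfl fun x _ => by ring
  have e4 : ∑ x ∈ range b, (a : ℚ) * x = (a : ℚ) * ∑ x ∈ range b, (x : ℚ) :=
    (Finset.mul_sum _ _ _).symm
  rw [e1, e2, e3, e4, sylv_gauss1, sylv_gauss2]
  have hbq : (b : ℚ) ≠ 0 := by positivity
  field_simp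
  ring
end

section
/- For two coprime integers a, b ≥ 2, the second Sylvester sum is S₂ = (1/12)·a·b·(a−1)(b−1)(ab − a − b). -/
/-- Sum of a quadratic polynomial over `Ico 1 n`. -/
lemma sylvester_aux_quadIco (c d e : ℚ) :
    ∀ n : ℕ, 1 ≤ n →
      ∑ k ∈ Finset.Ico 1 n, (c + d * (k : ℚ) + e * (k : ℚ) ^ 2) =
        c * ((n : ℚ) - 1) + d * (((n : ℚ) - 1) * n / 2) +
          e * (((n : ℚ) - 1) * n * (2 * n - 1) / 6) := by
  refine Nat.le_induction ?_ ?_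
  · simp
  · intro n hn ih
    rw [Finset.sum_Ico_succ_top (by omega), ih]
    push_cast
    ring

/-- For coprime `a, b ≥ 2`, the second Sylvester sum is
`S₂ = (1/12)·a·b·(a−1)(b−1)(ab − a − b)`. -/
theorem sylvester_sum_two_two_variable
    (a b : ℕ) (ha : 2 ≤ a) (hb : 2 ≤ b) (hab : Nat.Coprime a b)
    (NR : Finset ℕ)
    (hNR : ∀ n : ℕ, n ∈ NR ↔ 0 < n ∧ ¬ ∃ x y : ℕ, n = a * x + b * y) :
    ∑ n ∈ NR, (n : ℚ) ^ 2 =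
      (1 / 12) * (a : ℚ) * (b : ℚ) * ((a : ℚ) - 1) * ((b : ℚ) - 1) *
        ((a : ℚ) * (b : ℚ) - (a : ℚ) - (b : ℚ)) := by
  have ha0 : 0 < a := by omega
  have hb0 : 0 < b := by omega
  haveI : NeZero a := ⟨by omega⟩
  set f : ℕ × ℕ → ℚ := fun p => ((b : ℚ) * p.1 - (a : ℚ) * p.2) ^ 2 with hf
  set G : Finset (ℕ × ℕ) := Finset.Ico 1 a ×ˢ Finset.Ico 1 b with hG
  set S : Finset (ℕ × ℕ) := G.filter (fun p => a * p.2 < b * p.1) with hS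
  -- no equality on the grid
  have hne : ∀ p ∈ G, a * p.2 ≠ b * p.1 := by
    rintro ⟨x, k⟩ hp h
    simp only [hG, Finset.mem_product, Finset.mem_Ico] at hp
    have hdvd : a ∣ x := by
      exact Nat.Coprime.dvd_of_dvd_mul_left hab ⟨k, h.symm⟩
    have := Nat.le_of_dvd (by omega) hdvd
    omega
  -- Step 1: sum over NR equals sum over S
  have h1 : ∑ n ∈ NR, (n : ℚ) ^ 2 = ∑ p ∈ S, f p := by
    refine (Finset.sum_bij (fun p _ => b * p.1 - a * p.2) ?_ ?_ ?_ ?_).symm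
    · -- maps into NR
      rintro ⟨x, k⟩ hp
      simp only [hS, hG, Finset.mem_filter, Finset.mem_product, Finset.mem_Ico] at hp
      obtain ⟨⟨⟨hx1, hx2⟩, hk1, hk2⟩, hlt⟩ := hp
      show b * x - a * k ∈ NR
      rw [hNR]
      constructor
      · omega
      · rintro ⟨u, v, huv⟩
        -- b*x - a*k = a*u + b*v, so b*x = a*(u+k) + b*v
        have heq : b * x = a * (u + k) + b * v := by
          have h2 : a * u + b * v + a * k = b * x := by omega
          rw [Nat.mul_add]; omega
        have hvx : v < x := by
          rcases Nat.lt_or_ge v x with h' | h'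
          · exact h'
          · exfalso
            have : b * x ≤ b * v := Nat.mul_le_mul_left b h'
            have : 1 ≤ u + k := by omega
            nlinarith
        obtain ⟨w, rfl⟩ : ∃ w, x = v + w := ⟨x - v, by omega⟩
        have hw : b * w = a * (u + k) := by
          have : b * (v + w) = b * v + b * w := by ring
          omega
        have hdvd : a ∣ w := by
          exact Nat.Coprime.dvd_of_dvd_mul_left hab ⟨u + k, hw⟩
        have hw0 : 0 < w := by omega
        have := Nat.le_of_dvd hw0 hdvd
        omega
    · -- injective
      rintro ⟨x, k⟩ hp ⟨x', k'⟩ hp' hval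
      simp only [hS, hG, Finset.mem_filter, Finset.mem_product, Finset.mem_Ico] at hp hp'
      have hval' : b * x - a * k = b * x' - a * k' := hval
      have hz : (b : ℤ) * x - a * k = b * x' - a * k' := by
        zify [Nat.le_of_lt hp.2, Nat.le_of_lt hp'.2] at hval'
        push_cast at hval' ⊢
        linarith
      have hdvd : (a : ℤ) ∣ (x : ℤ) - x' := by
        have hco : IsCoprime (a : ℤ) (b : ℤ) := Int.isCoprime_iff_gcd_eq_one.mpr hab
        refine hco.dvd_of_dvd_mul_left ⟨k - k', ?_⟩
        ring_nf
        linarith [hz]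
      have hxx : (x : ℤ) - x' = 0 := by
        refine Int.eq_zero_of_abs_lt_dvd hdvd ?_
        rw [abs_lt]
        constructor <;> [skip; skip] <;>
          · have := hp.1.1.1; have := hp.1.1.2; have := hp'.1.1.1; have := hp'.1.1.2
            push_cast; omega
      have hx : x = x' := by omega
      subst hx
      have hk : k = k' := by
        have ha0' : ((a:ℤ)) ≠ 0 := by positivity
        have : (a:ℤ) * k = a * k' := by linarith
        exact_mod_cast mul_left_cancel₀ ha0' this
      simp [Prod.ext_iff, hk]
    · -- surjective
      intro n hn
      rw [hNR] at hn
      obtain ⟨hn0, hnrep⟩ := hn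
      set u : (ZMod a)ˣ := ZMod.unitOfCoprime b hab.symm with hu
      have hucoe : ((u : ZMod a)) = (b : ZMod a) := rfl
      set x : ℕ := (((u⁻¹ : (ZMod a)ˣ) : ZMod a) * (n : ZMod a)).val with hx
      have hxa : x < a := ZMod.val_lt _
      have hmod : ((b * x : ℕ) : ZMod a) = (n : ZMod a) := by
        push_cast
        rw [hx, ZMod.natCast_val, ZMod.cast_id]
        rw [← mul_assoc, ← hucoe, ← Units.val_mul, mul_inv_cancel, Units.val_one, one_mul]
      have hmodeq : b * x ≡ n [MOD a] := (ZMod.natCast_eq_natCast_iff _ _ _).mp hmod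
      have hdvd : (a : ℤ) ∣ (n : ℤ) - (b * x : ℕ) := hmodeq.dvd
      obtain ⟨t, ht⟩ := hdvd
      -- n = b*x + a*t
      have htneg : t < 0 := by
        by_contra h
        push_neg at h
        apply hnrep
        refine ⟨t.toNat, x, ?_⟩
        have : (n : ℤ) = a * t + b * x := by push_cast at ht ⊢; linarith
        have ht' : (t.toNat : ℤ) = t := Int.toNat_of_nonneg h
        have : (n : ℤ) = (a * t.toNat + b * x : ℕ) := by push_cast; rw [ht']; linarith
        exact_mod_cast this
      set k : ℕ := (-t).toNat with hk
      have hkt : (k : ℤ) = -t := Int.toNat_of_nonneg (by omega)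
      have hbx : b * x = n + a * k := by
        have : ((b * x : ℕ) : ℤ) = (n : ℤ) + a * k := by push_cast [hkt] at ht ⊢; linarith
        exact_mod_cast this
      have hk1 : 1 ≤ k := by
        by_contra h
        have : k = 0 := by omega
        rw [this] at hbx
        apply hnrep
        exact ⟨0, x, by omega⟩
      have hakbx : a * k < b * x := by omega
      have hx1 : 1 ≤ x := by
        by_contra h
        have : x = 0 := by omega
        rw [this] at hbx
        simp at hbx
        omega
      have hkb : k < b := by
        have h1 : b * x ≤ b * (a - 1) := Nat.mul_le_mul_left b (by omega)
        have h2 : a * k < a * b := by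
          calc a * k < b * x := hakbx
          _ ≤ b * (a - 1) := h1
          _ ≤ b * a := Nat.mul_le_mul_left b (by omega)
          _ = a * b := Nat.mul_comm b a
        exact Nat.lt_of_mul_lt_mul_left h2
      refine ⟨(x, k), ?_, ?_⟩
      · simp only [hS, hG, Finset.mem_filter, Finset.mem_product, Finset.mem_Ico]
        exact ⟨⟨⟨hx1, hxa⟩, hk1, hkb⟩, hakbx⟩
      · show b * x - a * k = n
        omega
    · -- values agree
      rintro ⟨x, k⟩ hp
      simp only [hS, hG, Finset.mem_filter, Finset.mem_product, Finset.mem_Ico] at hp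
      have : (((b * x - a * k : ℕ)) : ℚ) = (b : ℚ) * x - a * k := by
        have := hp.2
        push_cast [Nat.cast_sub (le_of_lt hp.2)]
        ring
      rw [hf]
      simp only []
      rw [this]
  -- Step 2: the reflection gives the complementary filter the same sum
  have h2 : ∑ p ∈ G.filter (fun p => ¬ a * p.2 < b * p.1), f p = ∑ p ∈ S, f p := by
    refine Finset.sum_nbij' (fun p => (a - p.1, b - p.2)) (fun p => (a - p.1, b - p.2))
      ?_ ?_ ?_ ?_ ?_
    · rintro ⟨x, k⟩ hp
      simp only [hS, hG, Finset.mem_filter, Finset.mem_product, Finset.mem_Ico] at hp ⊢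
      obtain ⟨⟨⟨hx1, hx2⟩, hk1, hk2⟩, hlt⟩ := hp
      have hne' : a * k ≠ b * x := hne (x, k) (by simp [hG, Finset.mem_product, Finset.mem_Ico]; omega)
      refine ⟨⟨⟨by omega, by omega⟩, by omega, by omega⟩, ?_⟩
      -- a*(b-k) < b*(a-x)  ⇔  b*x < a*k; here we have b*x ≤ a*k from ¬<, plus ≠
      have h' : b * x < a * k := by omega
      have e1 : a * (b - k) + a * k = a * b := by
        rw [← Nat.mul_add]; congr 1; omega
      have e2 : b * (a - x) + b * x = b * a := by
        rw [← Nat.mul_add]; congr 1; omega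
      have hcomm : a * b = b * a := Nat.mul_comm a b
      omega
    · rintro ⟨x, k⟩ hp
      simp only [hS, hG, Finset.mem_filter, Finset.mem_product, Finset.mem_Ico] at hp ⊢
      obtain ⟨⟨⟨hx1, hx2⟩, hk1, hk2⟩, hlt⟩ := hp
      refine ⟨⟨⟨by omega, by omega⟩, by omega, by omega⟩, ?_⟩
      have e1 : a * (b - k) + a * k = a * b := by
        rw [← Nat.mul_add]; congr 1; omega
      have e2 : b * (a - x) + b * x = b * a := by
        rw [← Nat.mul_add]; congr 1; omega
      have hcomm : a * b = b * a := Nat.mul_comm a b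
      omega
    · rintro ⟨x, k⟩ hp
      simp only [hS, hG, Finset.mem_filter, Finset.mem_product, Finset.mem_Ico] at hp
      simp only [Prod.ext_iff]
      constructor <;> omega
    · rintro ⟨x, k⟩ hp
      simp only [hS, hG, Finset.mem_filter, Finset.mem_product, Finset.mem_Ico] at hp
      simp only [Prod.ext_iff]
      constructor <;> omega
    · rintro ⟨x, k⟩ hp
      simp only [hS, hG, Finset.mem_filter, Finset.mem_product, Finset.mem_Ico] at hp
      obtain ⟨⟨⟨hx1, hx2⟩, hk1, hk2⟩, hlt⟩ := hp
      rw [hf]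
      simp only []
      rw [Nat.cast_sub (by omega), Nat.cast_sub (by omega)]
      ring
  -- Step 3: sum over grid = 2 * sum over S
  have h3 : ∑ p ∈ G, f p = 2 * ∑ p ∈ S, f p := by
    rw [← Finset.sum_filter_add_sum_filter_not G (fun p => a * p.2 < b * p.1) f]
    rw [h2]
    rw [hS]
    ring
  -- Step 4: compute the grid sum
  have hQ : ∑ p ∈ G, f p =
      (a : ℚ) * b * ((a : ℚ) - 1) * ((b : ℚ) - 1) *
        ((a : ℚ) * b - a - b) / 6 := by
    rw [hG, hf, Finset.sum_product]
    have hinner : ∀ x : ℕ,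
        ∑ k ∈ Finset.Ico 1 b, ((b : ℚ) * x - (a : ℚ) * k) ^ 2 =
          ((a:ℚ)^2 * (((b:ℚ)-1)*b*(2*b-1)/6))
            + (-2*(a:ℚ)*b*(((b:ℚ)-1)*b/2)) * (x:ℚ)
            + ((b:ℚ)^2*((b:ℚ)-1)) * (x:ℚ)^2 := by
      intro x
      calc ∑ k ∈ Finset.Ico 1 b, ((b : ℚ) * x - (a : ℚ) * k) ^ 2
          = ∑ k ∈ Finset.Ico 1 b,
              ((b:ℚ)^2*(x:ℚ)^2 + (-2*(a:ℚ)*(b:ℚ)*(x:ℚ)) * (k:ℚ) + (a:ℚ)^2 * (k:ℚ)^2) :=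
            Finset.sum_congr rfl (fun k _ => by ring)
        _ = _ := sylvester_aux_quadIco _ _ _ b (by omega)
        _ = _ := by ring
    simp_rw [hinner]
    rw [sylvester_aux_quadIco ((a:ℚ)^2 * (((b:ℚ)-1)*b*(2*b-1)/6))
      (-2*(a:ℚ)*b*(((b:ℚ)-1)*b/2)) ((b:ℚ)^2*((b:ℚ)-1)) a (by omega)]
    ring
  rw [h1]
  have : ∑ p ∈ S, f p =
      (a : ℚ) * b * ((a : ℚ) - 1) * ((b : ℚ) - 1) * ((a : ℚ) * b - a - b) / 12 := by
    rw [hQ] at h3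
    linarith
  rw [this]
  ring
end

section
/- For the arithmetic progression a, a+d, …, a+sd with gcd(a,d) = 1, a ≥ 2, d ≥ 1 and 1 ≤ s < a, the set N (taken with respect to the element a) equals { a·⌈n/s⌉ + d·n : n = 1, …, a−1 }, where ⌈·⌉ is the ceiling function. -/
private lemma sum_cast_eq (a d s : ℕ) (x : Fin (s+1) → ℕ) :
    ∑ i : Fin (s+1), ((a : ℤ) + ((i:ℕ):ℤ) * (d:ℤ)) * (x i : ℤ)
      = ((∑ i : Fin (s+1), (a + (i:ℕ) * d) * x i : ℕ) : ℤ) := by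
  push_cast
  rfl

private lemma rep_back (a d s : ℕ) (hs : 1 ≤ s) :
    ∀ m j : ℕ, j ≤ s * m →
      ∃ x : Fin (s+1) → ℕ, a * m + d * j = ∑ i : Fin (s+1), (a + (i:ℕ) * d) * x i := by
  intro m
  induction m with
  | zero =>
    intro j hj
    refine ⟨0, ?_⟩
    have hj0 : j = 0 := by omega
    simp [hj0]
  | succ m ih =>
    intro j hj
    have hj' : j ≤ s * m + s := by rw [Nat.mul_succ] at hj; exact hj
    set t := min j s with ht
    have htlt : t < s + 1 := by omega
    have h1 : j - t ≤ s * m := by omega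
    obtain ⟨x, hx⟩ := ih (j - t) h1
    refine ⟨fun i => x i + if i = ⟨t, htlt⟩ then 1 else 0, ?_⟩
    have hsum : ∑ i : Fin (s+1), (a + (i:ℕ) * d) * (x i + if i = ⟨t, htlt⟩ then 1 else 0)
        = (∑ i : Fin (s+1), (a + (i:ℕ) * d) * x i) + (a + t * d) := by
      have hterm : ∀ i : Fin (s+1), (a + (i:ℕ)*d) * (x i + if i = ⟨t, htlt⟩ then 1 else 0)
          = (a + (i:ℕ)*d) * x i + (if i = ⟨t, htlt⟩ then (a + (i:ℕ)*d) else 0) := by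
        intro i; rcases eq_or_ne i ⟨t, htlt⟩ with h | h <;> simp [h, mul_add]
      rw [Finset.sum_congr rfl (fun i _ => hterm i), Finset.sum_add_distrib,
        Finset.sum_ite_eq']
      simp
    rw [hsum, ← hx]
    have h2 : d * (j - t) + d * t = d * j := by
      rw [← Nat.mul_add]; congr 1; omega
    have h3 : a * (m+1) = a * m + a := by ring
    have h4 : t * d = d * t := mul_comm t d
    linarith

private lemma rep_iff (a d s n : ℕ) (hs : 1 ≤ s) :
    (∃ x : Fin (s+1) → ℕ, n = ∑ i : Fin (s+1), (a + (i:ℕ) * d) * x i)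
      ↔ ∃ m j : ℕ, j ≤ s * m ∧ n = a * m + d * j := by
  constructor
  · rintro ⟨x, hx⟩
    refine ⟨∑ i, x i, ∑ i : Fin (s+1), (i:ℕ) * x i, ?_, ?_⟩
    · rw [Finset.mul_sum]
      refine Finset.sum_le_sum fun i _ => ?_
      exact Nat.mul_le_mul_right _ (Nat.lt_succ_iff.mp i.isLt)
    · rw [hx, Finset.mul_sum, Finset.mul_sum, ← Finset.sum_add_distrib]
      refine Finset.sum_congr rfl fun i _ => ?_
      ring
  · rintro ⟨m, j, hj, hn⟩
    obtain ⟨x, hx⟩ := rep_back a d s hs m j hj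
    exact ⟨x, by rw [hn, hx]⟩

private lemma ceil_bounds (s j : ℕ) (hs : 1 ≤ s) :
    j ≤ s * ((j + s - 1) / s) ∧ s * ((j + s - 1) / s) < j + s := by
  have hr : (j + s - 1) % s < s := Nat.mod_lt _ (by omega)
  have key : s * ((j + s - 1) / s) + (j + s - 1) % s = j + s - 1 :=
    Nat.div_add_mod _ _
  generalize (j + s - 1) % s = r at hr key
  generalize (j + s - 1) / s = M at key ⊢
  generalize hP : s * M = P at key ⊢
  omega

private lemma ceil_eq (s j : ℕ) (hs : 1 ≤ s) :
    ⌈(j : ℚ) / (s : ℚ)⌉ = (((j + s - 1) / s : ℕ) : ℤ) := by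
  obtain ⟨h1, h2⟩ := ceil_bounds s j hs
  have hs' : (0:ℚ) < (s:ℚ) := by exact_mod_cast Nat.lt_of_lt_of_le Nat.zero_lt_one hs
  rw [Int.ceil_eq_iff]
  have c1 : ((j:ℚ)) ≤ (s:ℚ) * (((j+s-1)/s : ℕ) : ℚ) := by exact_mod_cast h1
  have c2 : (s:ℚ) * (((j+s-1)/s : ℕ):ℚ) < (j:ℚ) + s := by exact_mod_cast h2
  simp only [Int.cast_natCast]
  constructor
  · rw [lt_div_iff₀ hs']
    linarith
  · rw [div_le_iff₀ hs']
    linarith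

private lemma not_rep_sub (a d s : ℕ) (ha : 2 ≤ a) (had : Nat.Coprime a d)
    (j M : ℕ) (hj1 : 1 ≤ j) (hj2 : j < a) (hM1 : j ≤ s * M) (hM2 : s * M < j + s)
    (m j' : ℕ) (hj' : j' ≤ s * m)
    (heq : (a:ℤ) * M + d * j - a = a * m + d * j') : False := by
  have hdvd : (a:ℤ) ∣ (d:ℤ) * ((j':ℤ) - j) := ⟨(M:ℤ) - 1 - m, by linear_combination -heq⟩
  have hco : IsCoprime (a:ℤ) (d:ℤ) := Nat.isCoprime_iff_coprime.mpr had
  have hdvd2 : (a:ℤ) ∣ ((j':ℤ) - j) := hco.dvd_of_dvd_mul_left hdvd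
  obtain ⟨k, hk⟩ := hdvd2
  have hja : (j:ℤ) ≤ (a:ℤ) - 1 := by
    have h : (j:ℤ) < (a:ℤ) := by exact_mod_cast hj2
    omega
  have hk0 : 0 ≤ k := by
    by_contra hneg
    push_neg at hneg
    have h1 : (a:ℤ) * k ≤ (a:ℤ) * (-1) := by
      apply mul_le_mul_of_nonneg_left (by omega) (by positivity)
    have h2 : (0:ℤ) ≤ (j':ℤ) := by positivity
    linarith
  have ha0 : (a:ℤ) ≠ 0 := by positivity
  have hm : (M:ℤ) - 1 - m = d * k := by
    have h2 : (a:ℤ) * ((M:ℤ) - 1 - m) = a * (d * k) := by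
      linear_combination heq + (d:ℤ) * hk
    exact mul_left_cancel₀ ha0 h2
  have hj'z : (j':ℤ) ≤ (s:ℤ) * m := by exact_mod_cast hj'
  have c2 : (s:ℤ) * M < (j:ℤ) + s := by exact_mod_cast hM2
  have hkd : 0 ≤ (s:ℤ) * ((d:ℤ) * k) := by positivity
  have hak : 0 ≤ (a:ℤ) * k := by positivity
  have hsm : (s:ℤ) * m = (s:ℤ) * M - s * (d*k) - s := by linear_combination (-(s:ℤ)) * hm
  linarith

/-- For the arithmetic progression `a, a+d, …, a+sd` with `gcd(a,d) = 1`,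
`a ≥ 2`, `d ≥ 1`, `1 ≤ s < a`, the set `N` (with respect to `a`) equals
`{ a·⌈n/s⌉ + d·n : n = 1, …, a−1 }`. -/
theorem N_arithmetic_progression
    (a d s : ℕ) (ha : 2 ≤ a) (hd : 1 ≤ d) (hs : 1 ≤ s) (hsa : s < a)
    (had : Nat.Coprime a d)
    (NR N : Finset ℕ)
    (hNR : ∀ n : ℕ, n ∈ NR ↔ 0 < n ∧
      ¬ ∃ x : Fin (s + 1) → ℕ, n = ∑ i : Fin (s + 1), (a + (i : ℕ) * d) * x i)
    (hN : ∀ n : ℕ, n ∈ N ↔ 0 < n ∧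
      (∃ x : Fin (s + 1) → ℕ, n = ∑ i : Fin (s + 1), (a + (i : ℕ) * d) * x i) ∧
      ¬ ∃ x : Fin (s + 1) → ℕ,
        (n : ℤ) - (a : ℤ) = ∑ i : Fin (s + 1), ((a : ℤ) + ((i : ℕ) : ℤ) * (d : ℤ)) * (x i : ℤ)) :
    ∀ n : ℕ, n ∈ N ↔ ∃ j : ℕ, 1 ≤ j ∧ j ≤ a - 1 ∧
      (n : ℤ) = (a : ℤ) * ⌈(j : ℚ) / (s : ℚ)⌉ + (d : ℤ) * (j : ℤ) := by
  intro n
  have hZrep : (∃ x : Fin (s+1) → ℕ,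
        (n : ℤ) - (a : ℤ) = ∑ i : Fin (s + 1), ((a : ℤ) + ((i : ℕ) : ℤ) * (d : ℤ)) * (x i : ℤ))
      ↔ ∃ m j' : ℕ, j' ≤ s * m ∧ (n:ℤ) - a = a * m + d * j' := by
    constructor
    · rintro ⟨x, hx⟩
      rw [sum_cast_eq] at hx
      obtain ⟨m, j', hj', hS⟩ := (rep_iff a d s _ hs).mp ⟨x, rfl⟩
      refine ⟨m, j', hj', ?_⟩
      rw [hx]
      exact_mod_cast hS
    · rintro ⟨m, j', hj', hx⟩
      obtain ⟨x, hX⟩ := rep_back a d s hs m j' hj'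
      refine ⟨x, ?_⟩
      rw [sum_cast_eq, ← hX, hx]
      push_cast
      ring
  rw [hN n]
  constructor
  · rintro ⟨hpos, hrep, hnot⟩
    obtain ⟨m, j0, hj0, hn0⟩ := (rep_iff a d s n hs).mp hrep
    set j := j0 % a with hjdef
    set m' := m + d * (j0 / a) with hm'def
    have hdm : a * (j0 / a) + j0 % a = j0 := Nat.div_add_mod j0 a
    have hrepr : n = a * m' + d * j := by
      rw [hn0, hjdef, hm'def]
      have : d * j0 = d * (a * (j0/a)) + d * (j0 % a) := by rw [← Nat.mul_add, hdm]
      rw [this]; ring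
    have hjlt : j < a := Nat.mod_lt _ (by omega)
    have hmm' : m ≤ m' := Nat.le_add_right m _
    have hjle : j ≤ s * m' :=
      le_trans (le_trans (Nat.mod_le j0 a) hj0) (Nat.mul_le_mul (le_refl s) hmm')
    have hj1 : 1 ≤ j := by
      by_contra h
      have hj0' : j = 0 := by omega
      have hnn : n = a * m' := by simpa [hj0'] using hrepr
      have hm'1 : 1 ≤ m' := by
        rcases Nat.eq_zero_or_pos m' with h0 | h0
        · rw [h0, Nat.mul_zero] at hnn; omega
        · exact h0
      apply hnot
      apply hZrep.mpr
      refine ⟨m' - 1, 0, by simp, ?_⟩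
      have hc : (n:ℤ) = a * m' := by exact_mod_cast hnn
      have h1 : ((m' - 1 : ℕ) : ℤ) = (m':ℤ) - 1 := by
        rw [Nat.cast_sub hm'1]; simp
      rw [h1]
      push_cast
      linear_combination hc
    set M := (j + s - 1) / s with hMdef
    obtain ⟨hM1, hM2⟩ := ceil_bounds s j hs
    rw [← hMdef] at hM1 hM2
    have hmge : M ≤ m' := by
      have a1 : j + s - 1 < j + s := by omega
      have a2 : j + s ≤ s * m' + s := Nat.add_le_add_right hjle s
      have a3 : j + s - 1 < (m' + 1) * s := by
        have : (m' + 1) * s = s * m' + s := by ring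
        rw [this]; exact lt_of_lt_of_le a1 a2
      exact Nat.lt_succ_iff.mp ((Nat.div_lt_iff_lt_mul (by omega)).mpr a3)
    have hmle : m' ≤ M := by
      by_contra h
      push_neg at h
      apply hnot
      apply hZrep.mpr
      refine ⟨m' - 1, j, le_trans hM1 (Nat.mul_le_mul (le_refl s) (show M ≤ m' - 1 by omega)), ?_⟩
      have hc : (n:ℤ) = a * m' + d * j := by exact_mod_cast hrepr
      have h1 : ((m' - 1 : ℕ) : ℤ) = (m':ℤ) - 1 := by
        rw [Nat.cast_sub (Nat.lt_of_le_of_lt (Nat.zero_le M) h)]; simp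
      rw [h1]
      linear_combination hc
    have hmM : m' = M := le_antisymm hmle hmge
    refine ⟨j, hj1, by omega, ?_⟩
    rw [ceil_eq s j hs]
    have hfin : n = a * M + d * j := by rw [← hmM]; exact hrepr
    exact_mod_cast hfin
  · rintro ⟨j, hj1, hj2, heq⟩
    rw [ceil_eq s j hs] at heq
    set M := (j + s - 1) / s with hMdef
    obtain ⟨hM1, hM2⟩ := ceil_bounds s j hs
    rw [← hMdef] at hM1 hM2
    have hMpos : 1 ≤ M := by
      rcases Nat.eq_zero_or_pos M with h0 | h0
      · rw [h0, Nat.mul_zero] at hM1; omega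
      · exact h0
    have hn : n = a * M + d * j := by exact_mod_cast heq
    refine ⟨?_, ?_, ?_⟩
    · have h1 : a ≤ a * M := Nat.le_mul_of_pos_right a hMpos
      have h2 : a * M ≤ n := hn ▸ Nat.le_add_right _ _
      omega
    · exact (rep_iff a d s n hs).mpr ⟨M, j, hM1, hn⟩
    · intro hx
      obtain ⟨m, j', hj', hEq⟩ := hZrep.mp hx
      have hc : (n:ℤ) = a * M + d * j := by exact_mod_cast hn
      exact not_rep_sub a d s ha had j M hj1 (by omega) hM1 hM2 m j' hj'
        (by linear_combination hEq - hc)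
end

section
/- For the arithmetic progression a, a+d, …, a+sd with gcd(a,d) = 1, a ≥ 2, d ≥ 1 and 1 ≤ s < a, and every integer m ≥ 1, the Sylvester sum satisfies m·S_{m−1} = a^{m−1}·∑_{n=0}^{a−1} B_m(⌈n/s⌉ + nd/a) − B_m, where B_m(x) is the m-th Bernoulli polynomial, B_m = B_m(0), and ⌈·⌉ is the ceiling function. -/
/-!
Put `W n = a ⌈n / s⌉ + n d`. The representable numbers are the `a X + d Y` with `Y ≤ s X`
(`X` summands whose indices add up to `Y`), and `W n` is the least of them congruent to `n d`
modulo `a`; since `gcd(a, d) = 1`, the `W n` with `n < a` meet every residue class once. Hence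
the non-representable numbers are the `W n - a k` with `1 ≤ k ≤ ⌊W n / a⌋`. Over each such
progression `m ∑ t ^ (m - 1)` telescopes to `a ^ (m - 1) (B_m (W n / a) - B_m (r / a))`, where
`r = W n mod a`, and by Raabe's multiplication theorem `a ^ (m - 1) ∑_{r < a} B_m (r / a) = B_m`.
-/

open Finset

namespace Polynomial

theorem derivative_eq_zero_of_eval_add_one {R : Type*} [CommRing R] [IsDomain R] [CharZero R]
    {p : R[X]} (hp : ∀ x, p.eval (x + 1) = p.eval x) : derivative p = 0 := by
  have hnat (n : ℕ) : p.eval (n : R) = p.eval 0 := by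
    induction n with
    | zero => simp
    | succ n ih => rw [Nat.cast_succ, hp, ih]
  have hC : p = C (p.eval 0) := by
    refine eq_of_infinite_eval_eq _ _ ((Set.infinite_range_of_injective Nat.cast_injective).mono ?_)
    rintro _ ⟨n, rfl⟩
    simpa using hnat n
  rw [hC, derivative_C]

theorem bernoulli_eval_add_natCast (m : ℕ) (x : ℚ) (q : ℕ) :
    (bernoulli m).eval (x + q) = (bernoulli m).eval x + m * ∑ j ∈ range q, (x + j) ^ (m - 1) := by
  induction q with
  | zero => simp
  | succ q ih =>
    rw [Nat.cast_succ, ← add_assoc, add_comm _ (1 : ℚ), bernoulli_eval_one_add, ih, sum_range_succ]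
    ring

theorem sum_bernoulli_eval_add_one_div {a : ℕ} (ha : 0 < a) (m : ℕ) (x : ℚ) :
    ∑ r ∈ range a, (bernoulli m).eval ((x + 1 + r) / a) =
      ∑ r ∈ range a, (bernoulli m).eval ((x + r) / a) + m * (x / a) ^ (m - 1) := by
  have htel := sum_range_sub (fun r : ℕ => (bernoulli m).eval ((x + r) / a)) a
  have hlast : (x + a) / a = 1 + x / a := by field_simp; ring
  simp only [Nat.cast_succ, ← add_assoc, add_right_comm x _ (1 : ℚ), CharP.cast_eq_zero,
    add_zero, hlast, bernoulli_eval_one_add, sum_sub_distrib] at htel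
  linarith

/- Raabe's multiplication theorem. The difference `D m` of the two sides, as a polynomial in `x`,
satisfies `D (m + 1)' = (m + 1) D m`; and `D (m + 1)` is `1`-periodic, so constant. -/
theorem pow_mul_sum_bernoulli_eval_add_div {a : ℕ} (ha : 0 < a) (m : ℕ) (x : ℚ) :
    (a : ℚ) ^ m * ∑ r ∈ range a, (bernoulli m).eval ((x + r) / a) = a * (bernoulli m).eval x := by
  set D : ℕ → ℚ[X] := fun m => C ((a : ℚ) ^ m) *
    ∑ r ∈ range a, (bernoulli m).comp (C (a : ℚ)⁻¹ * (X + C (r : ℚ))) - C (a : ℚ) * bernoulli m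
    with hD
  have hD_eval (m : ℕ) (x : ℚ) : (D m).eval x =
      (a : ℚ) ^ m * ∑ r ∈ range a, (bernoulli m).eval ((x + r) / a) - a * (bernoulli m).eval x := by
    simp [hD, eval_finsetSum, div_eq_inv_mul]
  have hD_periodic (m : ℕ) (x : ℚ) : (D m).eval (x + 1) = (D m).eval x := by
    rw [hD_eval, hD_eval, sum_bernoulli_eval_add_one_div ha, add_comm x 1, bernoulli_eval_one_add]
    have hpow : (m : ℚ) * ((a : ℚ) ^ m * (x / a) ^ (m - 1)) = m * (a * x ^ (m - 1)) := by
      rcases m with _ | m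
      · simp
      · rw [Nat.add_sub_cancel, div_pow, pow_succ]; field_simp
    linear_combination hpow
  have hD_derivative (m : ℕ) : derivative (D (m + 1)) = (m + 1 : ℚ[X]) * D m := by
    simp only [hD, derivative_sub, derivative_mul, derivative_C, zero_mul, zero_add,
      derivative_sum, derivative_comp, derivative_bernoulli_add_one, derivative_add,
      derivative_X, add_zero, mul_one, mul_comp, add_comp, natCast_comp, one_comp]
    have hC : C (a : ℚ) * C (a : ℚ)⁻¹ = 1 := by
      rw [← C_mul, mul_inv_cancel₀ (by positivity), C_1]
    rw [← mul_sum, ← mul_sum, pow_succ, C_mul]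
    linear_combination (C ((a : ℚ) ^ m) *
      ((m + 1) * ∑ r ∈ range a, (bernoulli m).comp (C (a : ℚ)⁻¹ * (X + C (r : ℚ))))) * hC
  have hD_zero : D m = 0 := by
    have h := hD_derivative m
    rw [derivative_eq_zero_of_eval_add_one (hD_periodic (m + 1)), eq_comm] at h
    exact (mul_eq_zero.mp h).resolve_left (Nat.cast_add_one_ne_zero m)
  have h := hD_eval m x
  rw [hD_zero, eval_zero] at h
  linarith

end Polynomial

theorem Nat.lt_iff_div_lt_div_of_modEq {a t w : ℕ} (ha : 0 < a) (h : t ≡ w [MOD a]) :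
    t < w ↔ t / a < w / a := by
  have ht := Nat.mod_add_div t a
  have hw := Nat.mod_add_div w a
  rw [show t % a = w % a from h] at ht
  constructor
  · intro hlt
    by_contra! hle
    have := Nat.mul_le_mul_left a hle
    omega
  · intro hlt
    have := Nat.mul_lt_mul_of_pos_left hlt ha
    omega

section Apery

variable {a : ℕ} (ha : 0 < a) {W : ℕ → ℕ} (hW : Set.InjOn (fun n => W n % a) (range a))
include ha hW

theorem surjOn_range_of_injOn_mod : Set.SurjOn (fun n => W n % a) (range a) (range a) :=
  surjOn_of_injOn_of_card_le _ (fun _ _ => mem_coe.2 (mem_range.2 (Nat.mod_lt _ ha))) hW le_rfl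

variable {NR : Finset ℕ} (hNR : ∀ t, t ∈ NR ↔ ¬ ∃ n < a, W n ≤ t ∧ W n ≡ t [MOD a])
include hNR

theorem sum_eq_sum_sum_of_apery {M : Type*} [AddCommMonoid M] (f : ℕ → M) :
    ∑ t ∈ NR, f t = ∑ n ∈ range a, ∑ j ∈ range (W n / a), f (W n % a + a * j) := by
  have hmod (n j : ℕ) : (W n % a + a * j) % a = W n % a := by simp
  have hdiv (n j : ℕ) : (W n % a + a * j) / a = j := by
    rw [Nat.add_mul_div_left _ _ ha, Nat.div_eq_of_lt (Nat.mod_lt _ ha), zero_add]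
  rw [sum_sigma']
  symm
  refine sum_bij (fun p _ => W p.1 % a + a * p.2) ?_ ?_ ?_ (fun _ _ => rfl)
  · rintro ⟨n, j⟩ hp
    simp only [mem_sigma, mem_range] at hp
    rw [hNR]
    rintro ⟨n', hn', hle, hn't⟩
    dsimp only at hle hn't
    obtain rfl : n' = n := hW (mem_range.2 hn') (mem_range.2 hp.1) (hn't.trans (hmod n j))
    have hlt := (Nat.lt_iff_div_lt_div_of_modEq ha (hmod n' j)).2 (by rw [hdiv]; exact hp.2)
    omega
  · rintro ⟨n, j⟩ hp ⟨n', j'⟩ hp' h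
    simp only [mem_sigma, mem_range] at hp hp'
    obtain rfl : n = n' :=
      hW (mem_range.2 hp.1) (mem_range.2 hp'.1) (by simpa [hmod] using congrArg (· % a) h)
    obtain rfl : j = j' := by simpa [hdiv] using congrArg (· / a) h
    rfl
  · intro t ht
    obtain ⟨n, hn, hnt⟩ := surjOn_range_of_injOn_mod ha hW (mem_range.2 (Nat.mod_lt t ha))
    rw [mem_coe, mem_range] at hn
    refine ⟨⟨n, t / a⟩, ?_, ?_⟩
    · simp only [mem_sigma, mem_range]
      refine ⟨hn, (Nat.lt_iff_div_lt_div_of_modEq ha hnt.symm).1 ?_⟩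
      by_contra! hle
      exact (hNR t).1 ht ⟨n, hn, hle, hnt⟩
    · simp only at hnt ⊢
      rw [hnt, Nat.mod_add_div]

theorem mul_sum_pow_eq_sum_bernoulli_of_apery {m : ℕ} (hm : 1 ≤ m) :
    (m : ℚ) * ∑ t ∈ NR, (t : ℚ) ^ (m - 1) =
      (a : ℚ) ^ (m - 1) * ∑ n ∈ range a, (Polynomial.bernoulli m).eval ((W n : ℚ) / a)
        - bernoulli m := by
  have haQ : (a : ℚ) ≠ 0 := by positivity
  have hclass (n : ℕ) : (m : ℚ) * ∑ j ∈ range (W n / a), ((W n % a + a * j : ℕ) : ℚ) ^ (m - 1) =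
      (a : ℚ) ^ (m - 1) * ((Polynomial.bernoulli m).eval ((W n : ℚ) / a)
        - (Polynomial.bernoulli m).eval ((W n % a : ℕ) / a : ℚ)) := by
    have hsplit : (W n : ℚ) / a = (W n % a : ℕ) / a + (W n / a : ℕ) := by
      conv_lhs => rw [← Nat.mod_add_div (W n) a]
      push_cast
      field_simp
    have hterm (j : ℕ) : ((W n % a + a * j : ℕ) : ℚ) ^ (m - 1) =
        (a : ℚ) ^ (m - 1) * ((W n % a : ℕ) / a + j : ℚ) ^ (m - 1) := by
      rw [← mul_pow]
      push_cast
      field_simp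
    rw [hsplit, Polynomial.bernoulli_eval_add_natCast, sum_congr rfl fun j _ => hterm j, ← mul_sum]
    ring
  have hresidues : ∑ n ∈ range a, (Polynomial.bernoulli m).eval ((W n % a : ℕ) / a : ℚ) =
      ∑ r ∈ range a, (Polynomial.bernoulli m).eval ((r : ℕ) / a : ℚ) :=
    sum_nbij (fun n => W n % a) (fun n _ => mem_range.2 (Nat.mod_lt _ ha)) hW
      (surjOn_range_of_injOn_mod ha hW) fun _ _ => rfl
  have hraabe : (a : ℚ) ^ (m - 1) * ∑ r ∈ range a, (Polynomial.bernoulli m).eval ((r : ℕ) / a : ℚ)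
      = bernoulli m := by
    have h := Polynomial.pow_mul_sum_bernoulli_eval_add_div ha m 0
    simp only [zero_add, Polynomial.bernoulli_eval_zero] at h
    rw [← Nat.sub_add_cancel hm, pow_succ', Nat.sub_add_cancel hm, mul_assoc] at h
    exact mul_left_cancel₀ haQ h
  rw [sum_eq_sum_sum_of_apery ha hW hNR, mul_sum, sum_congr rfl fun n _ => hclass n, ← mul_sum,
    sum_sub_distrib, mul_sub, hresidues, hraabe]

end Apery

theorem exists_fin_sum_eq_iff (a d s t : ℕ) :
    (∃ x : Fin (s + 1) → ℕ, t = ∑ i : Fin (s + 1), (a + (i : ℕ) * d) * x i) ↔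
      ∃ X Y, Y ≤ s * X ∧ t = a * X + d * Y := by
  constructor
  · rintro ⟨x, rfl⟩
    refine ⟨∑ i, x i, ∑ i : Fin (s + 1), (i : ℕ) * x i, ?_, ?_⟩
    · rw [mul_sum]
      exact sum_le_sum fun i _ => Nat.mul_le_mul_right _ (Nat.lt_succ_iff.mp i.2)
    · simp only [mul_sum, ← sum_add_distrib]
      exact sum_congr rfl fun i _ => by ring
  · rintro ⟨X, Y, hY, rfl⟩
    induction X generalizing Y with
    | zero => exact ⟨0, by simp_all⟩
    | succ X ih =>
      set i : Fin (s + 1) := ⟨min Y s, Nat.lt_succ_of_le (min_le_right _ _)⟩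
      obtain ⟨x, hx⟩ := ih (Y - min Y s) (by rw [mul_add_one] at hY; omega)
      refine ⟨x + Pi.single i 1, ?_⟩
      have hsingle : ∑ j : Fin (s + 1), (a + (j : ℕ) * d) * Pi.single (M := fun _ => ℕ) i 1 j =
          a + min Y s * d := by
        rw [Fintype.sum_eq_single i fun j hj => by simp [hj]]
        simp [i]
      simp only [Pi.add_apply, mul_add, sum_add_distrib, hsingle, ← hx]
      have : min Y s ≤ Y := min_le_left _ _
      zify [this]
      ring

def aperyAP (a d s n : ℕ) : ℕ := a * ⌈(n : ℚ) / s⌉₊ + n * d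

theorem exists_le_mul_iff_exists_aperyAP {a s : ℕ} (ha : 0 < a) (hs : 0 < s) (d t : ℕ) :
    (∃ X Y, Y ≤ s * X ∧ t = a * X + d * Y) ↔
      ∃ n < a, aperyAP a d s n ≤ t ∧ aperyAP a d s n ≡ t [MOD a] := by
  have hceil (n X : ℕ) : ⌈(n : ℚ) / s⌉₊ ≤ X ↔ n ≤ s * X := by
    rw [Nat.ceil_le, div_le_iff₀ (by exact_mod_cast hs), ← Nat.cast_mul, mul_comm, Nat.cast_le]
  constructor
  · rintro ⟨X, Y, hY, rfl⟩
    have hY' := Nat.mod_add_div Y a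
    obtain ⟨k, hk⟩ := Nat.exists_eq_add_of_le ((hceil (Y % a) X).2 ((Nat.mod_le Y a).trans hY))
    have ht : a * X + d * Y = a * (k + d * (Y / a)) + aperyAP a d s (Y % a) := by
      rw [aperyAP, hk]
      nth_rw 2 [← hY']
      ring
    refine ⟨Y % a, Nat.mod_lt Y ha, ht ▸ Nat.le_add_left _ _, ?_⟩
    rw [ht]
    exact (Nat.ModEq.modulus_mul_add ..).symm
  · rintro ⟨n, -, hle, hmod⟩
    obtain ⟨k, hk⟩ := (Nat.modEq_iff_dvd' hle).1 hmod
    refine ⟨⌈(n : ℚ) / s⌉₊ + k, n, ?_, ?_⟩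
    · exact ((hceil n _).1 le_rfl).trans (Nat.mul_le_mul_left _ (Nat.le_add_right _ _))
    · rw [aperyAP] at hle hk
      rw [mul_add, mul_comm d]
      omega

theorem aperyAP_mod (a d s n : ℕ) : aperyAP a d s n % a = n * d % a :=
  Nat.mul_add_mod _ _ _

theorem injOn_aperyAP_mod {a d : ℕ} (had : a.Coprime d) (s : ℕ) :
    Set.InjOn (fun n => aperyAP a d s n % a) (range a) := by
  intro n hn n' hn' h
  simp only [aperyAP_mod, coe_range, Set.mem_Iio] at h hn hn'
  have := Nat.ModEq.cancel_right_of_coprime had h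
  rwa [Nat.ModEq, Nat.mod_eq_of_lt hn, Nat.mod_eq_of_lt hn'] at this

theorem sylvester_sum_arithmetic_progression_general
    (a d s : ℕ) (ha : 2 ≤ a) (hs : 1 ≤ s)
    (had : Nat.Coprime a d)
    (NR : Finset ℕ)
    (hNR : ∀ n : ℕ, n ∈ NR ↔ 0 < n ∧
      ¬ ∃ x : Fin (s + 1) → ℕ, n = ∑ i : Fin (s + 1), (a + (i : ℕ) * d) * x i)
    (m : ℕ) (hm : 1 ≤ m) :
    (m : ℚ) * ∑ n ∈ NR, (n : ℚ) ^ (m - 1) =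
      (a : ℚ) ^ (m - 1) *
        ∑ n ∈ Finset.range a,
          (Polynomial.bernoulli m).eval
            ((⌈(n : ℚ) / (s : ℚ)⌉ : ℚ) + (n : ℚ) * (d : ℚ) / (a : ℚ))
      - bernoulli m := by
  have ha0 : 0 < a := by omega
  have hNR' (t : ℕ) :
      t ∈ NR ↔ ¬ ∃ n < a, aperyAP a d s n ≤ t ∧ aperyAP a d s n ≡ t [MOD a] := by
    rw [hNR, exists_fin_sum_eq_iff, exists_le_mul_iff_exists_aperyAP ha0 hs]
    refine ⟨And.right, fun h => ⟨Nat.pos_of_ne_zero ?_, h⟩⟩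
    rintro rfl
    have h0 : aperyAP a d s 0 = 0 := by simp [aperyAP]
    exact h ⟨0, ha0, h0.le, by rw [h0]⟩
  rw [mul_sum_pow_eq_sum_bernoulli_of_apery ha0 (injOn_aperyAP_mod had s) hNR' hm]
  congr 3 with n
  rw [aperyAP, ← natCast_ceil_eq_intCast_ceil (by positivity)]
  push_cast
  field_simp

/-- Equation (5.1.x.2): for the arithmetic progression `a, a+d, …, a+sd` with
`gcd(a,d) = 1`, `a ≥ 2`, `d ≥ 1`, `1 ≤ s < a`, and `m ≥ 1`,
`m·S_{m−1} = a^{m−1}·∑_{n=0}^{a−1} B_m(⌈n/s⌉ + nd/a) − B_m`. -/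
theorem sylvester_sum_arithmetic_progression
    (a d s : ℕ) (ha : 2 ≤ a) (hd : 1 ≤ d) (hs : 1 ≤ s) (hsa : s < a)
    (had : Nat.Coprime a d)
    (NR : Finset ℕ)
    (hNR : ∀ n : ℕ, n ∈ NR ↔ 0 < n ∧
      ¬ ∃ x : Fin (s + 1) → ℕ, n = ∑ i : Fin (s + 1), (a + (i : ℕ) * d) * x i)
    (m : ℕ) (hm : 1 ≤ m) :
    (m : ℚ) * ∑ n ∈ NR, (n : ℚ) ^ (m - 1) =
      (a : ℚ) ^ (m - 1) *
        ∑ n ∈ Finset.range a,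
          (Polynomial.bernoulli m).eval
            ((⌈(n : ℚ) / (s : ℚ)⌉ : ℚ) + (n : ℚ) * (d : ℚ) / (a : ℚ))
      - bernoulli m :=
  sylvester_sum_arithmetic_progression_general a d s ha hs had NR hNR m hm
end

section
/- For the arithmetic progression a, a+d, …, a+sd with gcd(a,d) = 1, a ≥ 2, d ≥ 1, 1 ≤ s < a, setting b = a + sd, for every nonzero real number z one has ∑_{n ∈ NR} e^{nz} = (e^{⌈(b−1)/s⌉·az} − 1)/((e^{dz} − 1)(e^{az} − 1)) + (e^{⌈(a−1)/s⌉·bz} − 1)/((e^{−dz} − 1)(e^{bz} − 1)) − 1/(e^{z} − 1). -/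
/-!
A sum of the generators `a + i * d` is exactly a number `M * a + J * d` with `J ≤ s * M`.
As `gcd(a, d) = 1`, every residue class mod `a` is that of `j * d` for a unique `j < a`, and
the least representable number in it is `⌈j / s⌉ * a + j * d`; the non-representable numbers of
the class are the smaller ones, a finite geometric progression in `x = e^z` of ratio `x^a`. Hence
`(x^a - 1) ∑_{n ∈ NR} x^n = ∑_{j < a} x^(⌈j / s⌉ a + j d) - ∑_{r < a} x^r`. Multiplied by
`x^d - 1`, the sum over `j` telescopes, up to the jumps of `⌈j / s⌉` at multiples of `s`, which
form a geometric series in `x^b`.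
-/

open Finset

lemma Nat.succ_ceilDiv (m : ℕ) {s : ℕ} (hs : 0 < s) :
    (m + 1) ⌈/⌉ s = m ⌈/⌉ s + if s ∣ m then 1 else 0 := by
  rw [Nat.ceilDiv_eq_add_pred_div, Nat.ceilDiv_eq_add_pred_div,
    show m + 1 + s - 1 = m + s - 1 + 1 by omega, Nat.succ_div,
    show m + s - 1 + 1 = m + s by omega]
  simp only [Nat.dvd_add_self_right]

lemma Nat.add_mul_ceilDiv (n k : ℕ) {s : ℕ} (hs : 0 < s) :
    (n + s * k) ⌈/⌉ s = n ⌈/⌉ s + k := by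
  rw [Nat.ceilDiv_eq_add_pred_div, Nat.ceilDiv_eq_add_pred_div,
    show n + s * k + s - 1 = n + s - 1 + s * k by omega, Nat.add_mul_div_left _ _ hs]

lemma Nat.ceil_natCast_div_natCast {K : Type*} [Field K] [LinearOrder K] [IsStrictOrderedRing K]
    [FloorSemiring K] (n : ℕ) {s : ℕ} (hs : 0 < s) : ⌈(n : K) / s⌉₊ = n ⌈/⌉ s :=
  eq_of_forall_ge_iff fun m => by
    rw [Nat.ceil_le, div_le_iff₀ (by positivity), ceilDiv_le_iff_le_mul hs, mul_comm]
    exact_mod_cast Iff.rfl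

lemma Nat.Coprime.bijOn_mul_mod {a d : ℕ} (had : Nat.Coprime a d) :
    Set.BijOn (fun j => j * d % a) (range a) (range a) := by
  have hmaps : Set.MapsTo (fun j => j * d % a) (range a) (range a) := fun j hj =>
    mem_range.2 (Nat.mod_lt _ (Nat.zero_lt_of_lt (mem_range.1 hj)))
  have hinj : Set.InjOn (fun j => j * d % a) (range a) := fun i hi j hj hij =>
    (Nat.ModEq.cancel_right_of_coprime had hij).eq_of_lt_of_lt (mem_range.1 hi) (mem_range.1 hj)
  exact ⟨hmaps, hinj, surjOn_of_injOn_of_card_le _ hmaps hinj le_rfl⟩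

lemma exists_eq_sum_progression_iff (a d s n : ℕ) :
    (∃ x : Fin (s + 1) → ℕ, n = ∑ i : Fin (s + 1), (a + (i : ℕ) * d) * x i) ↔
      ∃ M J, J ≤ s * M ∧ n = M * a + J * d := by
  constructor
  · rintro ⟨x, rfl⟩
    refine ⟨∑ i, x i, ∑ i : Fin (s + 1), (i : ℕ) * x i, ?_, ?_⟩
    · rw [mul_sum]
      exact sum_le_sum fun i _ => Nat.mul_le_mul_right _ i.is_le
    · simp only [sum_mul, ← sum_add_distrib]
      exact sum_congr rfl fun i _ => by ring
  · rintro ⟨M, J, hJ, rfl⟩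
    induction M generalizing J with
    | zero => exact ⟨0, by simp_all⟩
    | succ M ih =>
      obtain ⟨x, hx⟩ := ih (J - min J s) (by rw [mul_add_one] at hJ; omega)
      refine ⟨x + Pi.single ⟨min J s, by omega⟩ 1, ?_⟩
      have hJ : J = J - min J s + min J s := by omega
      simp only [Pi.add_apply, mul_add, sum_add_distrib, ← hx, Pi.single_apply, mul_ite,
        mul_one, mul_zero, sum_ite_eq', mem_univ, if_true]
      conv_lhs => rw [hJ]
      ring

lemma exists_eq_mul_add_mul_iff_le {a d s : ℕ} (hs : 0 < s) (had : Nat.Coprime a d) {j n : ℕ}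
    (hj : j < a) (hn : n ≡ j * d [MOD a]) :
    (∃ M J, J ≤ s * M ∧ n = M * a + J * d) ↔ j ⌈/⌉ s * a + j * d ≤ n := by
  constructor
  · rintro ⟨M, J, hJ, rfl⟩
    have hJj : J ≡ j [MOD a] := by
      refine Nat.ModEq.cancel_right_of_coprime had (Nat.ModEq.trans ?_ hn)
      simp [Nat.ModEq]
    have hjJ : j ≤ J := by
      have := Nat.mod_le J a
      rwa [hJj, Nat.mod_eq_of_lt hj] at this
    have hjM : j ⌈/⌉ s ≤ M := (ceilDiv_le_iff_le_mul hs).2 (hjJ.trans hJ)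
    gcongr
  · intro hle
    obtain ⟨k, hk⟩ := (Nat.modEq_iff_dvd' hle).1 <| by
      refine Nat.ModEq.trans ?_ hn.symm
      simp [Nat.ModEq]
    refine ⟨j ⌈/⌉ s + k, j, ?_, ?_⟩
    · have := (ceilDiv_le_iff_le_mul hs).1 (le_refl (j ⌈/⌉ s))
      rw [mul_add]
      omega
    · rw [add_mul, mul_comm k]
      omega

lemma sum_nonrepresentable_eq_sum_sum {β : Type*} [AddCommMonoid β] {a d s : ℕ} (ha : 0 < a)
    (hs : 0 < s) (had : Nat.Coprime a d) {NR : Finset ℕ}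
    (hNR : ∀ n, n ∈ NR ↔ ¬ ∃ M J, J ≤ s * M ∧ n = M * a + J * d) (f : ℕ → β) :
    ∑ n ∈ NR, f n =
      ∑ j ∈ range a, ∑ u ∈ range (j ⌈/⌉ s + j * d / a), f (j * d % a + u * a) := by
  have hmem : ∀ j < a, ∀ u, j * d % a + u * a ∈ NR ↔ u < j ⌈/⌉ s + j * d / a := by
    intro j hj u
    have hmod : j * d % a + u * a ≡ j * d [MOD a] := by simp [Nat.ModEq]
    have hdiv := Nat.mod_add_div (j * d) a
    rw [hNR, exists_eq_mul_add_mul_iff_le hs had hj hmod, not_le]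
    constructor <;> intro h <;> nlinarith
  rw [sum_sigma']
  symm
  refine sum_bij (fun p _ => p.1 * d % a + p.2 * a) ?_ ?_ ?_ (fun _ _ => rfl)
  · rintro ⟨j, u⟩ hp
    rw [mem_sigma, mem_range, mem_range] at hp
    exact (hmem j hp.1 u).2 hp.2
  · rintro ⟨j₁, u₁⟩ hp₁ ⟨j₂, u₂⟩ hp₂ h
    rw [mem_sigma] at hp₁ hp₂
    have hj : j₁ = j₂ := had.bijOn_mul_mod.injOn hp₁.1 hp₂.1 <| by
      simpa [Nat.add_mul_mod_self_right] using congrArg (· % a) h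
    subst hj
    rw [Nat.eq_of_mul_eq_mul_right ha (by simpa using h : u₁ * a = u₂ * a)]
  · intro n hn
    obtain ⟨j, hj, hjn⟩ := had.bijOn_mul_mod.surjOn (mem_range.2 (Nat.mod_lt n ha))
    have hn' : j * d % a + n / a * a = n := by
      simp only at hjn
      rw [hjn, Nat.mod_add_div']
    refine ⟨⟨j, n / a⟩, mem_sigma.2 ⟨hj, ?_⟩, hn'⟩
    exact mem_range.2 ((hmem j (mem_range.1 hj) _).1 (by rwa [hn']))

lemma mul_sum_range_pow_add_mul {R : Type*} [CommRing R] (x : R) (r a K : ℕ) :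
    (x ^ a - 1) * ∑ u ∈ range K, x ^ (r + u * a) = x ^ (r + K * a) - x ^ r := by
  simp_rw [pow_add, pow_mul', ← mul_sum, mul_left_comm, mul_geom_sum]
  ring

lemma mul_sum_pow_nonrepresentable {R : Type*} [CommRing R] {a d s : ℕ} (ha : 0 < a)
    (hs : 0 < s) (had : Nat.Coprime a d) {NR : Finset ℕ}
    (hNR : ∀ n, n ∈ NR ↔ ¬ ∃ M J, J ≤ s * M ∧ n = M * a + J * d) (x : R) :
    (x ^ a - 1) * ∑ n ∈ NR, x ^ n =
      ∑ j ∈ range a, x ^ (j ⌈/⌉ s * a + j * d) - ∑ r ∈ range a, x ^ r := by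
  have hres : ∑ j ∈ range a, x ^ (j * d % a) = ∑ r ∈ range a, x ^ r :=
    sum_nbij _ had.bijOn_mul_mod.mapsTo had.bijOn_mul_mod.injOn had.bijOn_mul_mod.surjOn
      fun _ _ => rfl
  rw [sum_nonrepresentable_eq_sum_sum ha hs had hNR, mul_sum, ← hres, ← sum_sub_distrib]
  refine sum_congr rfl fun j _ => ?_
  rw [mul_sum_range_pow_add_mul]
  congr 2
  linarith [Nat.mod_add_div (j * d) a]

lemma mul_sum_range_succ_pow_ceilDiv {R : Type*} [CommRing R] (x : R) (a d : ℕ) {s : ℕ}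
    (hs : 0 < s) (m : ℕ) :
    (x ^ d - 1) * ∑ j ∈ range (m + 1), x ^ (j ⌈/⌉ s * a + j * d) =
      x ^ (m ⌈/⌉ s * a + (m + 1) * d) - 1 -
        x ^ d * (x ^ a - 1) * ∑ q ∈ range (m ⌈/⌉ s), (x ^ (a + s * d)) ^ q := by
  induction m with
  | zero => simp
  | succ m ih =>
    rw [sum_range_succ, mul_add, ih, Nat.succ_ceilDiv m hs]
    split_ifs with hm
    · obtain ⟨k, rfl⟩ := hm
      rw [show s * k ⌈/⌉ s = k from smul_ceilDiv hs k, sum_range_succ]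
      ring
    · simp only [add_zero]
      ring

lemma sum_pow_nonrepresentable_eq {K : Type*} [Field K] {a d s : ℕ} (ha : 0 < a) (hd : 0 < d)
    (hs : 0 < s) (had : Nat.Coprime a d) {NR : Finset ℕ}
    (hNR : ∀ n, n ∈ NR ↔ ¬ ∃ M J, J ≤ s * M ∧ n = M * a + J * d) {x : K}
    (hx0 : x ≠ 0) (hx : ∀ n, 0 < n → x ^ n ≠ 1) :
    ∑ n ∈ NR, x ^ n =
      (x ^ (((a - 1) ⌈/⌉ s + d) * a) - 1) / ((x ^ d - 1) * (x ^ a - 1)) +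
        (x ^ ((a - 1) ⌈/⌉ s * (a + s * d)) - 1) / (((x ^ d)⁻¹ - 1) * (x ^ (a + s * d) - 1)) -
        1 / (x - 1) := by
  have hne (n : ℕ) (hn : 0 < n) : x ^ n - 1 ≠ 0 := sub_ne_zero.2 (hx n hn)
  have hx1 : x - 1 ≠ 0 := by simpa using hne 1 one_pos
  have hxd := hne d hd
  have hxa := hne a ha
  have hxb := hne (a + s * d) (by omega)
  have hxd' : 1 - x ^ d ≠ 0 := by rwa [← neg_sub, neg_ne_zero]
  have hS := mul_sum_pow_nonrepresentable ha hs had hNR x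
  have hT := mul_sum_range_succ_pow_ceilDiv x a d hs (a - 1)
  have hR := mul_geom_sum x a
  rw [Nat.sub_add_cancel ha] at hT
  set D := (a - 1) ⌈/⌉ s
  set T := ∑ j ∈ range a, x ^ (j ⌈/⌉ s * a + j * d)
  set G := ∑ q ∈ range D, (x ^ (a + s * d)) ^ q
  set R := ∑ r ∈ range a, x ^ r
  set S := ∑ n ∈ NR, x ^ n
  have hW : x ^ ((D + d) * a) - 1 = (x ^ d - 1) * T + x ^ d * (x ^ a - 1) * G := by
    rw [show (D + d) * a = D * a + a * d by ring]
    linear_combination -hT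
  rw [hW, pow_mul', ← mul_geom_sum (x ^ (a + s * d)) D,
    show S = (T - R) / (x ^ a - 1) from eq_div_of_mul_eq hxa (by rw [mul_comm, hS]),
    show R = (x ^ a - 1) / (x - 1) from eq_div_of_mul_eq hx1 (by rw [mul_comm, hR])]
  field_simp
  ring

theorem egf_NR_arithmetic_progression_general
    (a d s : ℕ) (ha : 2 ≤ a) (hd : 1 ≤ d) (hs : 1 ≤ s)
    (had : Nat.Coprime a d)
    (b : ℕ) (hb : b = a + s * d)
    (NR : Finset ℕ)
    (hNR : ∀ n : ℕ, n ∈ NR ↔ 0 < n ∧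
      ¬ ∃ x : Fin (s + 1) → ℕ, n = ∑ i : Fin (s + 1), (a + (i : ℕ) * d) * x i)
    (z : ℝ) (hz : z ≠ 0) :
    ∑ n ∈ NR, Real.exp (n * z) =
      (Real.exp ((⌈((b : ℝ) - 1) / (s : ℝ)⌉ : ℝ) * (a : ℝ) * z) - 1) /
        ((Real.exp (d * z) - 1) * (Real.exp (a * z) - 1))
      + (Real.exp ((⌈((a : ℝ) - 1) / (s : ℝ)⌉ : ℝ) * (b : ℝ) * z) - 1) /
        ((Real.exp (-(d * z)) - 1) * (Real.exp (b * z) - 1))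
      - 1 / (Real.exp z - 1) := by
  subst hb
  have hNR' (n : ℕ) : n ∈ NR ↔ ¬ ∃ M J, J ≤ s * M ∧ n = M * a + J * d := by
    rw [hNR, exists_eq_sum_progression_iff, and_iff_right_iff_imp]
    exact fun h => Nat.pos_of_ne_zero fun hn => h ⟨0, 0, le_rfl, by simp [hn]⟩
  have hceil (n : ℕ) (hn : 1 ≤ n) : (⌈((n : ℝ) - 1) / s⌉ : ℝ) = ((n - 1) ⌈/⌉ s : ℕ) := by
    rw [← Nat.cast_one, ← Nat.cast_sub hn, ← Int.natCast_ceil_eq_ceil (by positivity),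
      Nat.ceil_natCast_div_natCast _ hs, Int.cast_natCast]
  have hpow (n : ℕ) : Real.exp (n * z) = Real.exp z ^ n := Real.exp_nat_mul z n
  rw [hceil _ (by omega), hceil _ (by omega), show a + s * d - 1 = a - 1 + s * d by omega,
    Nat.add_mul_ceilDiv _ _ hs, Real.exp_neg]
  simp only [← Nat.cast_mul, hpow]
  refine sum_pow_nonrepresentable_eq (by omega) hd hs had hNR' (Real.exp_pos z).ne'
    fun n hn => ?_
  rw [← hpow, Ne, Real.exp_eq_one_iff]
  exact mul_ne_zero (by positivity) hz

/-- Equation (5.4): exponential generating function for the arithmetic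
progression `a, a+d, …, a+sd` with `b = a + sd`: for nonzero real `z`,
`∑_{n ∈ NR} e^{nz} = (e^{⌈(b−1)/s⌉az} − 1)/((e^{dz} − 1)(e^{az} − 1))
  + (e^{⌈(a−1)/s⌉bz} − 1)/((e^{−dz} − 1)(e^{bz} − 1)) − 1/(e^z − 1)`. -/
theorem egf_NR_arithmetic_progression
    (a d s : ℕ) (ha : 2 ≤ a) (hd : 1 ≤ d) (hs : 1 ≤ s) (hsa : s < a)
    (had : Nat.Coprime a d)
    (b : ℕ) (hb : b = a + s * d)
    (NR : Finset ℕ)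
    (hNR : ∀ n : ℕ, n ∈ NR ↔ 0 < n ∧
      ¬ ∃ x : Fin (s + 1) → ℕ, n = ∑ i : Fin (s + 1), (a + (i : ℕ) * d) * x i)
    (z : ℝ) (hz : z ≠ 0) :
    ∑ n ∈ NR, Real.exp (n * z) =
      (Real.exp ((⌈((b : ℝ) - 1) / (s : ℝ)⌉ : ℝ) * (a : ℝ) * z) - 1) /
        ((Real.exp (d * z) - 1) * (Real.exp (a * z) - 1))
      + (Real.exp ((⌈((a : ℝ) - 1) / (s : ℝ)⌉ : ℝ) * (b : ℝ) * z) - 1) /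
        ((Real.exp (-(d * z)) - 1) * (Real.exp (b * z) - 1))
      - 1 / (Real.exp z - 1) :=
  egf_NR_arithmetic_progression_general a d s ha hd hs had b hb NR hNR z hz
end

section
/- For the arithmetic progression a, a+d, …, a+sd with gcd(a,d) = 1, a ≥ 2, d ≥ 1 and 1 ≤ s < a, writing q = ⌈(a−1)/s⌉, the first Sylvester sum satisfies 12·S₁ = −2s(2a + ds)·q³ + (6a² + 3(2a + ds)(s−1))·q² + (6(d−1)a(a−1) + (3d − 2a − ds)s)·q + (a−1)(d−1)(2ad − a − d − 1). -/
/-! Auxiliary: ceiling division and its properties. -/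

def ccS (s y : ℕ) : ℕ := (y + s - 1) / s

lemma ccS_zero (s : ℕ) : ccS s 0 = 0 := by
  unfold ccS
  rcases Nat.eq_zero_or_pos s with h | h
  · simp [h]
  · exact Nat.div_eq_of_lt (by omega)

lemma ccS_succ (s : ℕ) (hs : 1 ≤ s) (n : ℕ) : ccS s (n+1) = n / s + 1 := by
  unfold ccS
  have h : n + 1 + s - 1 = n + s := by omega
  rw [h, Nat.add_div_right _ hs]

lemma ccS_of_dvd (s : ℕ) (hs : 1 ≤ s) (n : ℕ) (h : s ∣ n) : ccS s n = n / s := by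
  obtain ⟨k, rfl⟩ := h
  unfold ccS
  have h1 : s * k + s - 1 = s * k + (s - 1) := by omega
  rw [h1, Nat.mul_add_div hs, Nat.mul_div_cancel_left _ hs]
  have : (s-1)/s = 0 := Nat.div_eq_of_lt (by omega)
  omega

lemma ccS_of_not_dvd (s : ℕ) (hs : 1 ≤ s) (n : ℕ) (h : ¬ s ∣ n) : ccS s n = n / s + 1 := by
  have h0 : n % s ≠ 0 := fun hc => h (Nat.dvd_of_mod_eq_zero hc)
  have h1 : n % s < s := Nat.mod_lt _ (by omega)
  have h2 := Nat.div_add_mod n s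
  have h4 : s * (n / s + 1) = s * (n / s) + s := by ring
  have h3 : n + s - 1 = s * (n / s + 1) + (n % s - 1) := by omega
  unfold ccS
  rw [h3, Nat.mul_add_div hs]
  have : (n % s - 1)/s = 0 := Nat.div_eq_of_lt (by omega)
  omega

lemma ccS_le_iff (s : ℕ) (hs : 1 ≤ s) (y x : ℕ) : ccS s y ≤ x ↔ y ≤ s * x := by
  unfold ccS
  constructor
  · intro h
    have h1 : s * ((y + s - 1) / s) ≤ s * x := Nat.mul_le_mul_left _ h
    have h2 := Nat.div_add_mod (y + s - 1) s
    have h3 : (y + s - 1) % s < s := Nat.mod_lt _ (by omega)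
    omega
  · intro h
    have h1 : y + s - 1 ≤ s * x + (s - 1) := by omega
    calc (y + s - 1) / s ≤ (s * x + (s - 1)) / s := Nat.div_le_div_right h1
      _ = x + (s-1)/s := by rw [Nat.mul_add_div hs]
      _ = x := by rw [Nat.div_eq_of_lt (by omega), Nat.add_zero]

/-! Gauss-type sums. -/

lemma sum_range_id_q (N : ℕ) :
    ∑ y ∈ Finset.range N, (y:ℚ) = (N:ℚ)*((N:ℚ)-1)/2 := by
  induction N with
  | zero => simp
  | succ n ih => rw [Finset.sum_range_succ, ih]; push_cast; ring

lemma sumR (a : ℚ) (N : ℕ) :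
    ∑ y ∈ Finset.range N, ((y:ℚ)^2 - a*(y:ℚ))
      = (N:ℚ)*((N:ℚ)-1)*(2*(N:ℚ)-1)/6 - a*(N:ℚ)*((N:ℚ)-1)/2 := by
  induction N with
  | zero => simp
  | succ n ih => rw [Finset.sum_range_succ, ih]; push_cast; ring

lemma sumW (a d s : ℕ) (hs : 1 ≤ s) (n : ℕ) :
    ∑ y ∈ Finset.range (n+1),
        (((d:ℚ)*(y:ℚ) + (a:ℚ)*((ccS s y : ℕ):ℚ))^2
          - (a:ℚ)*((d:ℚ)*(y:ℚ) + (a:ℚ)*((ccS s y : ℕ):ℚ)))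
      = (d:ℚ)^2*((n:ℚ)*((n:ℚ)+1)*(2*(n:ℚ)+1)/6)
        + 2*(a:ℚ)*(d:ℚ)*((s:ℚ)*((ccS s n : ℕ):ℚ)*(((ccS s n : ℕ):ℚ)-1)*(4*(s:ℚ)*((ccS s n : ℕ):ℚ)-5*(s:ℚ)+3)/12
            + ((ccS s n : ℕ):ℚ)*(((n:ℚ)-(s:ℚ)*((ccS s n : ℕ):ℚ)+(s:ℚ))*(s:ℚ)*(((ccS s n : ℕ):ℚ)-1)
              + ((n:ℚ)-(s:ℚ)*((ccS s n : ℕ):ℚ)+(s:ℚ))*(((n:ℚ)-(s:ℚ)*((ccS s n : ℕ):ℚ)+(s:ℚ))+1)/2))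
        + (a:ℚ)^2*((s:ℚ)*((ccS s n : ℕ):ℚ)*(((ccS s n : ℕ):ℚ)-1)*(2*((ccS s n : ℕ):ℚ)-1)/6
            + ((n:ℚ)-(s:ℚ)*((ccS s n : ℕ):ℚ)+(s:ℚ))*((ccS s n : ℕ):ℚ)^2)
        - (a:ℚ)*(d:ℚ)*((n:ℚ)*((n:ℚ)+1)/2)
        - (a:ℚ)^2*((s:ℚ)*((ccS s n : ℕ):ℚ)*(((ccS s n : ℕ):ℚ)-1)/2
            + ((n:ℚ)-(s:ℚ)*((ccS s n : ℕ):ℚ)+(s:ℚ))*((ccS s n : ℕ):ℚ)) := by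
  induction n with
  | zero =>
    rw [ccS_zero]
    simp [ccS_zero]
  | succ n ih =>
    rw [Finset.sum_range_succ, ih, ccS_succ s hs n]
    by_cases hdv : s ∣ n
    · rw [ccS_of_dvd s hs n hdv]
      have hcast : ((s:ℚ)) * ((n / s : ℕ) : ℚ) = (n:ℚ) := by exact_mod_cast Nat.mul_div_cancel' hdv
      push_cast
      rw [← hcast]
      ring
    · rw [ccS_of_not_dvd s hs n hdv]
      push_cast
      ring

/-! Representability. -/

lemma fin_sum_single (a d s : ℕ) (i0 : Fin (s+1)) (v : ℕ) :
    ∑ i : Fin (s+1), (a + (i:ℕ)*d) * (if i = i0 then v else 0) = (a + (i0:ℕ)*d)*v := by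
  simp

lemma rep1 (a d s : ℕ) (hs : 1 ≤ s) (n : ℕ) :
    (∃ x : Fin (s+1) → ℕ, n = ∑ i : Fin (s+1), (a + (i:ℕ)*d) * x i)
      ↔ ∃ x y : ℕ, y ≤ s*x ∧ n = a*x + d*y := by
  constructor
  · rintro ⟨f, rfl⟩
    refine ⟨∑ i, f i, ∑ i : Fin (s+1), (i:ℕ)*f i, ?_, ?_⟩
    · rw [Finset.mul_sum]
      exact Finset.sum_le_sum (fun i _ => Nat.mul_le_mul_right _ (Fin.is_le i))
    · rw [Finset.mul_sum, Finset.mul_sum, ← Finset.sum_add_distrib]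
      exact Finset.sum_congr rfl (fun i _ => by ring)
  · rintro ⟨x, y, hxy, rfl⟩
    have hy : y = s*(y/s) + y % s := (Nat.div_add_mod y s).symm
    have hrs : y % s < s := Nat.mod_lt _ (by omega)
    set k := y / s with hk
    set rr := y % s with hrr
    by_cases h0 : rr = 0
    · have hsk : s*k ≤ s*x := by rw [h0, Nat.add_zero] at hy; rw [← hy]; exact hxy
      have hkx : k ≤ x := Nat.le_of_mul_le_mul_left hsk (by omega)
      obtain ⟨x', hx'⟩ := Nat.le.dest hkx
      refine ⟨fun i => (if i = (0 : Fin (s+1)) then x' else 0)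
        + (if i = (⟨s, by omega⟩ : Fin (s+1)) then k else 0), ?_⟩
      simp only [Nat.mul_add, Finset.sum_add_distrib, fin_sum_single]
      simp only [Fin.val_zero, Fin.val_mk]
      rw [hy, h0, ← hx']
      ring
    · have hsk : s*k < s*x := by
        have h1 : s*k < y := by omega
        exact lt_of_lt_of_le h1 hxy
      have hkx : k + 1 ≤ x := Nat.lt_of_mul_lt_mul_left hsk
      obtain ⟨x', hx'⟩ := Nat.le.dest hkx
      refine ⟨fun i => (if i = (0 : Fin (s+1)) then x' else 0)
        + (if i = (⟨rr, by omega⟩ : Fin (s+1)) then 1 else 0)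
        + (if i = (⟨s, by omega⟩ : Fin (s+1)) then k else 0), ?_⟩
      simp only [Nat.mul_add, Finset.sum_add_distrib, fin_sum_single]
      simp only [Fin.val_zero, Fin.val_mk]
      rw [hy, ← hx']
      ring

lemma rep2 (a d s : ℕ) (ha : 2 ≤ a) (hs : 1 ≤ s) (n : ℕ) :
    (∃ x y : ℕ, y ≤ s*x ∧ n = a*x + d*y) ↔
      ∃ y, y < a ∧ d*y + a*(ccS s y) ≤ n ∧ n % a = (d*y) % a := by
  constructor
  · rintro ⟨x, y, hxy, rfl⟩
    refine ⟨y % a, Nat.mod_lt _ (by omega), ?_, ?_⟩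
    · have heq : a*x + d*y = a*(x + d*(y/a)) + d*(y % a) := by
        conv_lhs => rw [← Nat.div_add_mod y a]
        ring
      rw [heq]
      have h1 : y % a ≤ s*(x + d*(y/a)) := by
        calc y % a ≤ y := Nat.mod_le _ _
          _ ≤ s*x := hxy
          _ ≤ s*(x + d*(y/a)) := Nat.mul_le_mul_left _ (Nat.le_add_right _ _)
      have h2 : ccS s (y % a) ≤ x + d*(y/a) := (ccS_le_iff s hs _ _).mpr h1
      have h3 : a*(ccS s (y % a)) ≤ a*(x + d*(y/a)) := Nat.mul_le_mul_left _ h2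
      calc d*(y % a) + a*(ccS s (y % a)) ≤ d*(y % a) + a*(x + d*(y/a)) :=
            Nat.add_le_add_left h3 _
        _ = a*(x + d*(y/a)) + d*(y % a) := Nat.add_comm _ _
    · have heq : a*x + d*y = a*(x + d*(y/a)) + d*(y % a) := by
        conv_lhs => rw [← Nat.div_add_mod y a]
        ring
      rw [heq, Nat.mul_add_mod]
  · rintro ⟨y, hya, hwn, hmod⟩
    have hdy : d*y ≤ n := le_trans (Nat.le_add_right _ _) hwn
    have hmodeq : (d*y) ≡ n [MOD a] := (Nat.ModEq.symm hmod)
    have hdvd : a ∣ n - d*y := (Nat.modEq_iff_dvd' hdy).mp hmodeq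
    obtain ⟨x, hx⟩ := hdvd
    have hn : n = a*x + d*y := by rw [← hx]; omega
    have h1 : d*y + a*(ccS s y) ≤ a*x + d*y := hn ▸ hwn
    rw [Nat.add_comm (a*x)] at h1
    have h2 : a*(ccS s y) ≤ a*x := Nat.le_of_add_le_add_left h1
    have h3 : ccS s y ≤ x := Nat.le_of_mul_le_mul_left h2 (by omega)
    exact ⟨x, y, (ccS_le_iff s hs y x).mp h3, hn⟩

/-! The Apéry machinery. -/

def wF (a d s y : ℕ) : ℕ := d*y + a*(ccS s y)
def rF (a d y : ℕ) : ℕ := (d*y) % a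
def mF (a d s y : ℕ) : ℕ := ccS s y + (d*y)/a

lemma wF_eq (a d s y : ℕ) : wF a d s y = a * mF a d s y + rF a d y := by
  unfold wF mF rF
  rw [Nat.mul_add, Nat.add_assoc, Nat.div_add_mod, Nat.add_comm]

lemma rF_lt (a d y : ℕ) (ha : 0 < a) : rF a d y < a := Nat.mod_lt _ ha

lemma rF_pos (a d y : ℕ) (had : Nat.Coprime a d) (hy1 : 1 ≤ y) (hya : y < a) :
    0 < rF a d y := by
  rcases Nat.eq_zero_or_pos (rF a d y) with h | h
  · exfalso
    have hdvd : a ∣ d*y := Nat.dvd_of_mod_eq_zero h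
    rw [Nat.mul_comm] at hdvd
    have : a ∣ y := (Nat.Coprime.dvd_mul_right had).mp hdvd
    have := Nat.le_of_dvd (by omega) this
    omega
  · exact h

lemma rF_inj (a d : ℕ) (had : Nat.Coprime a d) (y y' : ℕ) (hy : y < a) (hy' : y' < a)
    (h : rF a d y = rF a d y') : y = y' := by
  have h1 : d*y ≡ d*y' [MOD a] := h
  have h2 : y ≡ y' [MOD a] := Nat.ModEq.cancel_left_of_coprime had h1
  have h3 : y % a = y' % a := h2
  rwa [Nat.mod_eq_of_lt hy, Nat.mod_eq_of_lt hy'] at h3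

lemma rF_img (a d : ℕ) (ha : 0 < a) (had : Nat.Coprime a d) :
    (Finset.range a).image (rF a d) = Finset.range a := by
  have hinj : Set.InjOn (rF a d) ↑(Finset.range a) := by
    intro y hy y' hy' h
    simp only [Finset.coe_range, Set.mem_Iio] at hy hy'
    exact rF_inj a d had y y' hy hy' h
  have hsub : (Finset.range a).image (rF a d) ⊆ Finset.range a := by
    intro z hz
    obtain ⟨y, _, rfl⟩ := Finset.mem_image.mp hz
    exact Finset.mem_range.mpr (rF_lt a d y ha)
  have hcard : (Finset.range a).card ≤ ((Finset.range a).image (rF a d)).card := by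
    rw [Finset.card_image_of_injOn hinj]
  exact Finset.eq_of_subset_of_card_le hsub hcard

lemma rF_surj (a d : ℕ) (ha : 0 < a) (had : Nat.Coprime a d) (z : ℕ) (hz : z < a) :
    ∃ y, y < a ∧ rF a d y = z := by
  have hzz : z ∈ (Finset.range a).image (rF a d) := by
    rw [rF_img a d ha had]; exact Finset.mem_range.mpr hz
  obtain ⟨y, hy, hyz⟩ := Finset.mem_image.mp hzz
  exact ⟨y, Finset.mem_range.mp hy, hyz⟩


/-- For the arithmetic progression `a, a+d, …, a+sd` with `gcd(a,d)=1`,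
`a ≥ 2`, `d ≥ 1`, `1 ≤ s < a`, and `q = ⌈(a−1)/s⌉`, the first Sylvester sum
satisfies `12·S₁ = −2s(2a+ds)q³ + (6a² + 3(2a+ds)(s−1))q²
  + (6(d−1)a(a−1) + (3d−2a−ds)s)q + (a−1)(d−1)(2ad−a−d−1)`. -/
theorem sylvester_S1_arithmetic_progression
    (a d s : ℕ) (ha : 2 ≤ a) (hd : 1 ≤ d) (hs : 1 ≤ s) (hsa : s < a)
    (had : Nat.Coprime a d)
    (NR : Finset ℕ)
    (hNR : ∀ n : ℕ, n ∈ NR ↔ 0 < n ∧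
      ¬ ∃ x : Fin (s + 1) → ℕ, n = ∑ i : Fin (s + 1), (a + (i : ℕ) * d) * x i)
    (q : ℚ) (hq : q = (⌈((a : ℚ) - 1) / (s : ℚ)⌉ : ℚ)) :
    12 * ∑ n ∈ NR, (n : ℚ) =
      -2 * (s : ℚ) * (2 * (a : ℚ) + (d : ℚ) * (s : ℚ)) * q ^ 3
      + (6 * (a : ℚ) ^ 2 + 3 * (2 * (a : ℚ) + (d : ℚ) * (s : ℚ)) * ((s : ℚ) - 1)) * q ^ 2
      + (6 * ((d : ℚ) - 1) * (a : ℚ) * ((a : ℚ) - 1)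
          + (3 * (d : ℚ) - 2 * (a : ℚ) - (d : ℚ) * (s : ℚ)) * (s : ℚ)) * q
      + ((a : ℚ) - 1) * ((d : ℚ) - 1)
          * (2 * (a : ℚ) * (d : ℚ) - (a : ℚ) - (d : ℚ) - 1) := by
  have ha0 : 0 < a := by omega
  have haq : (0:ℚ) < (a:ℚ) := by exact_mod_cast ha0
  have hsq : (0:ℚ) < (s:ℚ) := by exact_mod_cast hs
  -- Step 1: membership characterization
  have hNR2 : ∀ n, n ∈ NR ↔ (0 < n ∧ ¬ ∃ y, y < a ∧ wF a d s y ≤ n ∧ n % a = rF a d y) := by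
    intro n
    rw [hNR n, rep1 a d s hs n, rep2 a d s ha hs n]
    unfold wF rF
    rfl
  -- Step 2: NR as explicit biUnion
  have hmod0 : ∀ y j, (rF a d y + a*j) % a = rF a d y := by
    intro y j
    rw [Nat.add_mul_mod_self_left]
    exact Nat.mod_mod_of_dvd _ dvd_rfl
  have hmF0 : mF a d s 0 = 0 := by
    unfold mF
    rw [ccS_zero]
    simp
  have hNReq : NR = (Finset.range a).biUnion
      (fun y => (Finset.range (mF a d s y)).image (fun j => rF a d y + a * j)) := by
    ext n
    rw [hNR2 n, Finset.mem_biUnion]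
    constructor
    · rintro ⟨hn0, hnr⟩
      obtain ⟨y, hya, hry⟩ := rF_surj a d ha0 had (n % a) (Nat.mod_lt _ ha0)
      have hnw : n < wF a d s y := by
        by_contra h
        exact hnr ⟨y, hya, Nat.le_of_not_lt h, hry.symm⟩
      refine ⟨y, Finset.mem_range.mpr hya, Finset.mem_image.mpr ⟨n / a, Finset.mem_range.mpr ?_, ?_⟩⟩
      · have h1 : rF a d y + a * (n / a) = n := by rw [hry]; exact Nat.mod_add_div n a
        have h2 : rF a d y + a * (n/a) < a * mF a d s y + rF a d y := by
          rw [h1, ← wF_eq]; exact hnw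
        rw [Nat.add_comm (a * mF a d s y) (rF a d y)] at h2
        have h3 : a * (n/a) < a * mF a d s y := lt_of_add_lt_add_left h2
        exact Nat.lt_of_mul_lt_mul_left h3
      · rw [hry]; exact Nat.mod_add_div n a
    · rintro ⟨y, hy, hn⟩
      rw [Finset.mem_range] at hy
      obtain ⟨j, hjr, rfl⟩ := Finset.mem_image.mp hn
      rw [Finset.mem_range] at hjr
      have hy1 : 1 ≤ y := by
        rcases Nat.eq_zero_or_pos y with h | h
        · exfalso; rw [h, hmF0] at hjr; omega
        · exact h
      have hr0 : 0 < rF a d y := rF_pos a d y had hy1 hy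
      refine ⟨Nat.lt_of_lt_of_le hr0 (Nat.le_add_right _ _), ?_⟩
      rintro ⟨y', hy'a, hw', hmod'⟩
      have hyy : y' = y := rF_inj a d had y' y hy'a hy (by rw [← hmod', hmod0])
      subst hyy
      have hja : a*j < a*(mF a d s y') := mul_lt_mul_of_pos_left hjr ha0
      have hcontr : a * mF a d s y' + rF a d y' ≤ rF a d y' + a*j := by
        rw [← wF_eq]; exact hw'
      rw [Nat.add_comm (rF a d y') (a*j)] at hcontr
      exact absurd (le_of_add_le_add_right hcontr) (Nat.not_le.mpr hja)
  -- Step 3: disjointness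
  have hdisj : Set.PairwiseDisjoint ↑(Finset.range a)
      (fun y => (Finset.range (mF a d s y)).image (fun j => rF a d y + a * j)) := by
    intro y hy y' hy' hne
    simp only [Finset.coe_range, Set.mem_Iio] at hy hy'
    refine Finset.disjoint_left.mpr ?_
    rintro n hn hn'
    obtain ⟨j, _, rfl⟩ := Finset.mem_image.mp hn
    obtain ⟨j', _, heq⟩ := Finset.mem_image.mp hn'
    apply hne
    apply rF_inj a d had y y' hy hy'
    calc rF a d y = (rF a d y + a*j) % a := (hmod0 y j).symm
      _ = (rF a d y' + a*j') % a := by rw [heq]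
      _ = rF a d y' := hmod0 y' j'
  -- Step 4: summing each fiber
  have hsum_img : ∀ y ∈ Finset.range a,
      ∑ n ∈ (Finset.range (mF a d s y)).image (fun j => rF a d y + a * j), (n:ℚ)
        = ((mF a d s y : ℕ):ℚ) * ((rF a d y : ℕ):ℚ)
          + (a:ℚ) * (((mF a d s y : ℕ):ℚ) * (((mF a d s y : ℕ):ℚ) - 1)/2) := by
    intro y _
    rw [Finset.sum_image (fun x _ x' _ h =>
      Nat.eq_of_mul_eq_mul_left ha0 (Nat.add_left_cancel h))]
    push_cast
    rw [Finset.sum_add_distrib, Finset.sum_const, Finset.card_range, nsmul_eq_mul,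
      ← Finset.mul_sum, sum_range_id_q]
  -- Step 5: per-term rewrite
  have hterm : ∀ y ∈ Finset.range a,
      ((mF a d s y : ℕ):ℚ) * ((rF a d y : ℕ):ℚ)
          + (a:ℚ) * (((mF a d s y : ℕ):ℚ) * (((mF a d s y : ℕ):ℚ) - 1)/2)
        = (((wF a d s y : ℕ):ℚ)^2 - (a:ℚ)*((wF a d s y : ℕ):ℚ))/(2*(a:ℚ))
          - (((rF a d y : ℕ):ℚ)^2 - (a:ℚ)*((rF a d y : ℕ):ℚ))/(2*(a:ℚ)) := by
    intro y _
    have hwq : ((wF a d s y : ℕ):ℚ) = (a:ℚ)*((mF a d s y : ℕ):ℚ) + ((rF a d y : ℕ):ℚ) := by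
      exact_mod_cast congrArg (Nat.cast : ℕ → ℚ) (wF_eq a d s y)
    rw [hwq]
    field_simp
    ring
  -- Step 6: reindex the r-part
  have hrinjOn : ∀ x ∈ Finset.range a, ∀ y ∈ Finset.range a, rF a d x = rF a d y → x = y := by
    intro x hx y hy h
    exact rF_inj a d had x y (Finset.mem_range.mp hx) (Finset.mem_range.mp hy) h
  have hG : ∑ y ∈ Finset.range a,
        (((rF a d y : ℕ):ℚ)^2 - (a:ℚ)*((rF a d y : ℕ):ℚ))/(2*(a:ℚ))
      = ∑ z ∈ Finset.range a, (((z : ℕ):ℚ)^2 - (a:ℚ)*((z : ℕ):ℚ))/(2*(a:ℚ)) := by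
    conv_rhs => rw [← rF_img a d ha0 had]
    rw [Finset.sum_image hrinjOn]
  -- Step 7: w-part per-term cast
  have hWterm : ∀ y ∈ Finset.range a,
      (((wF a d s y : ℕ):ℚ)^2 - (a:ℚ)*((wF a d s y : ℕ):ℚ))/(2*(a:ℚ))
        = (((d:ℚ)*(y:ℚ) + (a:ℚ)*((ccS s y : ℕ):ℚ))^2
            - (a:ℚ)*((d:ℚ)*(y:ℚ) + (a:ℚ)*((ccS s y : ℕ):ℚ)))/(2*(a:ℚ)) := by
    intro y _
    have : ((wF a d s y : ℕ):ℚ) = (d:ℚ)*(y:ℚ) + (a:ℚ)*((ccS s y : ℕ):ℚ) := by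
      unfold wF; push_cast; ring
    rw [this]
  -- Step 8: assemble the sum
  have hA1 : a - 1 + 1 = a := by omega
  have hsw := sumW a d s hs (a-1)
  rw [hA1] at hsw
  have hS : ∑ n ∈ NR, (n : ℚ)
      = ((∑ y ∈ Finset.range a, (((d:ℚ)*(y:ℚ) + (a:ℚ)*((ccS s y : ℕ):ℚ))^2
            - (a:ℚ)*((d:ℚ)*(y:ℚ) + (a:ℚ)*((ccS s y : ℕ):ℚ))))
          - (∑ y ∈ Finset.range a, (((y : ℕ):ℚ)^2 - (a:ℚ)*((y : ℕ):ℚ))))/(2*(a:ℚ)) := by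
    rw [hNReq, Finset.sum_biUnion hdisj, Finset.sum_congr rfl hsum_img,
      Finset.sum_congr rfl hterm, Finset.sum_sub_distrib, hG,
      Finset.sum_congr rfl hWterm, ← Finset.sum_div, ← Finset.sum_div, div_sub_div_same]
  rw [hS, hsw, sumR (a:ℚ) a, hq]
  -- Step 9: the ceiling value
  have hq1 : s * ccS s (a-1) ≤ (a-1) + s - 1 := by
    rw [Nat.mul_comm]
    exact Nat.div_mul_le_self _ _
  have hq2 : (a-1) + s - 1 < s * ccS s (a-1) + s := by
    calc (a-1) + s - 1 = s * (((a-1) + s - 1)/s) + ((a-1) + s - 1) % s :=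
          (Nat.div_add_mod _ _).symm
      _ < s * (((a-1) + s - 1)/s) + s := Nat.add_lt_add_left (Nat.mod_lt _ (by omega)) _
      _ = s * ccS s (a-1) + s := rfl
  have hq3 : a - 1 ≤ s * ccS s (a-1) := by
    obtain ⟨P, hP⟩ : ∃ P, P = s * ccS s (a-1) := ⟨_, rfl⟩
    rw [← hP] at hq1 hq2 ⊢
    clear hP
    omega
  have hcastX : (((a-1) + s - 1 : ℕ):ℚ) = (a:ℚ) + (s:ℚ) - 2 := by
    have h1 : (a-1) + s - 1 = a + s - 2 := by omega
    rw [h1, Nat.cast_sub (by omega)]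
    push_cast
    ring
  have hb1 : (s:ℚ) * ((ccS s (a-1) : ℕ):ℚ) ≤ (a:ℚ) + (s:ℚ) - 2 := by
    have h := (Nat.cast_le (α:=ℚ)).mpr hq1
    rw [hcastX] at h
    push_cast at h
    exact h
  have hb3 : (a:ℚ) - 1 ≤ (s:ℚ) * ((ccS s (a-1) : ℕ):ℚ) := by
    have h := (Nat.cast_le (α:=ℚ)).mpr hq3
    rw [Nat.cast_sub (by omega : 1 ≤ a)] at h
    push_cast at h
    exact h
  have hceil : (⌈((a:ℚ) - 1) / (s:ℚ)⌉ : ℤ) = ((ccS s (a-1) : ℕ) : ℤ) := by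
    rw [Int.ceil_eq_iff]
    constructor
    · push_cast
      rw [lt_div_iff₀ hsq]
      linarith
    · push_cast
      rw [div_le_iff₀ hsq]
      linarith
  rw [hceil]
  have hcast_a1 : ((a-1 : ℕ):ℚ) = (a:ℚ) - 1 := by
    rw [Nat.cast_sub (by omega : 1 ≤ a)]
    norm_num
  push_cast
  rw [hcast_a1]
  field_simp
  ring
end
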